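/- arXiv:2010.08429 — 6 statements merged into one kernel-verified Lean document; each statement's English description precedes it below -/
import Mathlib

section
/- For all integers ℓ ≥ 2 and q ≥ 1, the number of roots α ∈ Δ(B_ℓ) whose height ht(α) is divisible by q is equal to the number of roots β ∈ Δ(C_ℓ) whose height ht(β) is divisible by q. -/
noncomputable section

/-- `stdVec ℓ i` is the `i`-th standard basis vector `e_i` of `ℚ^ℓ`. -/
def stdVec (ℓ : ℕ) (i : Fin ℓ) : Fin ℓ → ℚ := Pi.single i 1

/-- The simple roots of the root system of type `Bₗ`:
`αᵢ = eᵢ − eᵢ₊₁` for `1 ≤ i ≤ ℓ−1` and `α_ℓ = e_ℓ`. -/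
def simpleB (ℓ : ℕ) (i : Fin ℓ) : Fin ℓ → ℚ :=
  if h : (i : ℕ) + 1 < ℓ then stdVec ℓ i - stdVec ℓ ⟨(i : ℕ) + 1, h⟩ else stdVec ℓ i

/-- The simple roots of the root system of type `Cₗ`:
`βᵢ = eᵢ − eᵢ₊₁` for `1 ≤ i ≤ ℓ−1` and `β_ℓ = 2e_ℓ`. -/
def simpleC (ℓ : ℕ) (i : Fin ℓ) : Fin ℓ → ℚ :=
  if h : (i : ℕ) + 1 < ℓ then stdVec ℓ i - stdVec ℓ ⟨(i : ℕ) + 1, h⟩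
  else (2 : ℚ) • stdVec ℓ i

/-- The root system of type `Bₗ`: `{±eᵢ ± eⱼ : i < j} ∪ {±eᵢ}` in `ℚ^ℓ`. -/
def rootsB (ℓ : ℕ) : Set (Fin ℓ → ℚ) :=
  {v | (∃ i j : Fin ℓ, i < j ∧ (v = stdVec ℓ i + stdVec ℓ j ∨ v = stdVec ℓ i - stdVec ℓ j ∨
          v = -stdVec ℓ i + stdVec ℓ j ∨ v = -stdVec ℓ i - stdVec ℓ j)) ∨
        (∃ i : Fin ℓ, v = stdVec ℓ i ∨ v = -stdVec ℓ i)}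

/-- The root system of type `Cₗ`: `{±eᵢ ± eⱼ : i < j} ∪ {±2eᵢ}` in `ℚ^ℓ`. -/
def rootsC (ℓ : ℕ) : Set (Fin ℓ → ℚ) :=
  {v | (∃ i j : Fin ℓ, i < j ∧ (v = stdVec ℓ i + stdVec ℓ j ∨ v = stdVec ℓ i - stdVec ℓ j ∨
          v = -stdVec ℓ i + stdVec ℓ j ∨ v = -stdVec ℓ i - stdVec ℓ j)) ∨
        (∃ i : Fin ℓ, v = (2 : ℚ) • stdVec ℓ i ∨ v = -((2 : ℚ) • stdVec ℓ i))}

/-! ### Auxiliary lemmas -/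

lemma eval2 {ℓ : ℕ} (a b : ℚ) (i j k : Fin ℓ) :
    (a • stdVec ℓ i + b • stdVec ℓ j) k = (if k = i then a else 0) + (if k = j then b else 0) := by
  simp [stdVec, Pi.single_apply]

lemma eval1 {ℓ : ℕ} (a : ℚ) (i k : Fin ℓ) :
    (a • stdVec ℓ i) k = (if k = i then a else 0) := by
  simp [stdVec, Pi.single_apply]

lemma pair_inj {ℓ : ℕ} {i j i' j' : Fin ℓ} (hij : i < j) (hij' : i' < j')
    {a b a' b' : ℚ} (ha' : a' ≠ 0) (hb' : b' ≠ 0)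
    (h : a • stdVec ℓ i + b • stdVec ℓ j = a' • stdVec ℓ i' + b' • stdVec ℓ j') :
    i = i' ∧ j = j' ∧ a = a' ∧ b = b' := by
  have h1 := congrFun h i'
  have h2 := congrFun h j'
  rw [eval2, eval2] at h1 h2
  have hii' : i = i' := by
    rcases eq_or_ne i' i with h' | h'
    · exact h'.symm
    rcases eq_or_ne i' j with h'' | h''
    · exfalso
      rcases eq_or_ne j' i with h3 | h3
      · rw [h''] at hij'; rw [h3] at hij'; exact absurd hij (asymm hij')
      rcases eq_or_ne j' j with h4 | h4
      · rw [h'', ← h4] at hij'; exact absurd hij' (lt_irrefl _)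
      · simp [h3, h4, hij'.ne'] at h2
        exact hb' h2.symm
    · exfalso
      simp [h', h'', if_neg (hij'.ne)] at h1
      exact ha' h1.symm
  subst hii'
  have hjj' : j = j' := by
    rcases eq_or_ne j' j with h' | h'
    · exact h'.symm
    rcases eq_or_ne j' i with h'' | h''
    · rw [h''] at hij'; exact absurd hij' (lt_irrefl _)
    · exfalso
      simp [h', h'', hij'.ne'] at h2
      exact hb' h2.symm
  subst hjj'
  have e1 := congrFun h i
  have e2 := congrFun h j
  rw [eval2, eval2] at e1 e2
  simp [hij.ne, hij.ne'] at e1 e2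
  exact ⟨rfl, rfl, e1, e2⟩

lemma single_ne_pair {ℓ : ℕ} {i j k : Fin ℓ} (hij : i < j)
    {a b c : ℚ} (ha : a ≠ 0) (hb : b ≠ 0) :
    c • stdVec ℓ k ≠ a • stdVec ℓ i + b • stdVec ℓ j := by
  intro h
  have h1 := congrFun h i
  have h2 := congrFun h j
  rw [eval1, eval2] at h1 h2
  simp [hij.ne, hij.ne'] at h1 h2
  rcases eq_or_ne i k with h' | h'
  · rcases eq_or_ne j k with h'' | h''
    · exact absurd (h' ▸ h'' ▸ hij) (lt_irrefl _)
    · simp [h''] at h2; exact hb h2.symm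
  · simp [h'] at h1; exact ha h1.symm

lemma single_inj {ℓ : ℕ} {i k : Fin ℓ} {a c : ℚ} (ha : a ≠ 0)
    (h : a • stdVec ℓ i = c • stdVec ℓ k) : i = k ∧ a = c := by
  have h1 := congrFun h i
  rw [eval1, eval1] at h1
  simp at h1
  rcases eq_or_ne i k with h' | h'
  · subst h'; simp at h1; exact ⟨rfl, h1⟩
  · simp [h'] at h1; exact absurd h1 ha

lemma htB_std {ℓ : ℕ} (hℓ : 1 ≤ ℓ) (htB : (Fin ℓ → ℚ) →ₗ[ℚ] ℚ)
    (hhtB : ∀ i : Fin ℓ, htB (simpleB ℓ i) = 1) :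
    ∀ (k : ℕ) (hk : k < ℓ), htB (stdVec ℓ ⟨k, hk⟩) = (ℓ : ℚ) - k := by
  have key : ∀ m : ℕ, ∀ k (hk : k < ℓ), k = ℓ - 1 - m → htB (stdVec ℓ ⟨k, hk⟩) = (ℓ : ℚ) - k := by
    intro m
    induction m with
    | zero =>
      intro k hk hkm
      have hk' : k = ℓ - 1 := by omega
      have h1 := hhtB ⟨k, hk⟩
      rw [simpleB] at h1
      rw [dif_neg (by simp only [Fin.val_mk]; omega)] at h1
      rw [h1, hk', Nat.cast_sub hℓ]
      push_cast; ring
    | succ m ih =>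
      intro k hk hkm
      by_cases hm : m + 1 ≤ ℓ - 1
      · have hk1lt : k + 1 < ℓ := by omega
        have h1 := hhtB ⟨k, hk⟩
        rw [simpleB, dif_pos (by simp only [Fin.val_mk]; omega : (↑(⟨k, hk⟩ : Fin ℓ) + 1) < ℓ)] at h1
        rw [map_sub] at h1
        simp only [Fin.val_mk] at h1
        have ih' := ih (k + 1) hk1lt (by omega)
        have h2 : htB (stdVec ℓ ⟨k, hk⟩) = 1 + htB (stdVec ℓ ⟨k + 1, hk1lt⟩) := by
          have : htB (stdVec ℓ ⟨k + 1, hk1lt⟩) = htB (stdVec ℓ ⟨k + 1, by omega⟩) := rfl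
          linarith [h1, this]
        rw [h2, ih']
        push_cast; ring
      · exact ih k hk (by omega)
  intro k hk
  exact key (ℓ - 1 - k) k hk (by omega)

lemma htC_std {ℓ : ℕ} (hℓ : 1 ≤ ℓ) (htC : (Fin ℓ → ℚ) →ₗ[ℚ] ℚ)
    (hhtC : ∀ i : Fin ℓ, htC (simpleC ℓ i) = 1) :
    ∀ (k : ℕ) (hk : k < ℓ), htC (stdVec ℓ ⟨k, hk⟩) = (ℓ : ℚ) - k - 1/2 := by
  have key : ∀ m : ℕ, ∀ k (hk : k < ℓ), k = ℓ - 1 - m →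
      htC (stdVec ℓ ⟨k, hk⟩) = (ℓ : ℚ) - k - 1/2 := by
    intro m
    induction m with
    | zero =>
      intro k hk hkm
      have hk' : k = ℓ - 1 := by omega
      have h1 := hhtC ⟨k, hk⟩
      rw [simpleC] at h1
      rw [dif_neg (by simp only [Fin.val_mk]; omega)] at h1
      rw [map_smul, smul_eq_mul] at h1
      have h2 : htC (stdVec ℓ ⟨k, hk⟩) = 1/2 := by linarith
      rw [h2, hk', Nat.cast_sub hℓ]
      push_cast; ring
    | succ m ih =>
      intro k hk hkm
      by_cases hm : m + 1 ≤ ℓ - 1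
      · have hk1lt : k + 1 < ℓ := by omega
        have h1 := hhtC ⟨k, hk⟩
        rw [simpleC, dif_pos (by simp only [Fin.val_mk]; omega : (↑(⟨k, hk⟩ : Fin ℓ) + 1) < ℓ)] at h1
        rw [map_sub] at h1
        simp only [Fin.val_mk] at h1
        have ih' := ih (k + 1) hk1lt (by omega)
        have h2 : htC (stdVec ℓ ⟨k, hk⟩) = 1 + htC (stdVec ℓ ⟨k + 1, hk1lt⟩) := by
          have : htC (stdVec ℓ ⟨k + 1, hk1lt⟩) = htC (stdVec ℓ ⟨k + 1, by omega⟩) := rfl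
          linarith [h1, this]
        rw [h2, ih']
        push_cast; ring
      · exact ih k hk (by omega)
  intro k hk
  exact key (ℓ - 1 - k) k hk (by omega)

/-! ### Combinatorial model -/

def sgQ (b : Bool) : ℚ := if b then 1 else -1
def sgZ (b : Bool) : ℤ := if b then 1 else -1

lemma sgQ_ne_zero (b : Bool) : sgQ b ≠ 0 := by cases b <;> norm_num [sgQ]
lemma sgQ_inj {b b' : Bool} (h : sgQ b = sgQ b') : b = b' := by
  cases b <;> cases b' <;> simp_all [sgQ] <;> norm_num at h

abbrev IXt : Type := (ℕ × ℕ × Bool × Bool) ⊕ (ℕ × Bool)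

def E' (ℓ i : ℕ) : Fin ℓ → ℚ := if h : i < ℓ then stdVec ℓ ⟨i, h⟩ else 0

lemma E'_coe {ℓ : ℕ} (i : Fin ℓ) : E' ℓ (i : ℕ) = stdVec ℓ i := by
  rw [E', dif_pos i.isLt]

def phiB (ℓ : ℕ) : IXt → (Fin ℓ → ℚ)
  | .inl (i, j, s, t) => sgQ s • E' ℓ i + sgQ t • E' ℓ j
  | .inr (i, s) => sgQ s • E' ℓ i

def phiC (ℓ : ℕ) : IXt → (Fin ℓ → ℚ)
  | .inl (i, j, s, t) => sgQ s • E' ℓ i + sgQ t • E' ℓ j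
  | .inr (i, s) => (sgQ s * 2) • E' ℓ i

def ok (ℓ : ℕ) : IXt → Prop
  | .inl (i, j, _, _) => i < j ∧ j < ℓ
  | .inr (i, _) => i < ℓ

def hB (ℓ : ℕ) : IXt → ℤ
  | .inl (i, j, s, t) => if s = t then sgZ s * (2 * ℓ - i - j) else sgZ s * ((j : ℤ) - i)
  | .inr (i, s) => sgZ s * ((ℓ : ℤ) - i)

def hC (ℓ : ℕ) : IXt → ℤ
  | .inl (i, j, s, t) => if s = t then sgZ s * (2 * ℓ - 1 - i - j) else sgZ s * ((j : ℤ) - i)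
  | .inr (i, s) => sgZ s * (2 * ℓ - 1 - 2 * i)

def sigm (ℓ : ℕ) : IXt → IXt
  | .inl (i, j, s, t) =>
      if s = t then (if j = i + 1 then .inr (i, s) else .inl (i, j - 1, s, t))
      else .inl (i, j, s, t)
  | .inr (i, s) => if i + 1 = ℓ then .inr (i, s) else .inl (i, ℓ - 1, s, s)

def taum (ℓ : ℕ) : IXt → IXt
  | .inl (i, j, s, t) =>
      if s = t then (if j + 1 = ℓ then .inr (i, s) else .inl (i, j + 1, s, t))
      else .inl (i, j, s, t)
  | .inr (i, s) => if i + 1 = ℓ then .inr (i, s) else .inl (i, i + 1, s, s)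

lemma ht_phiB {ℓ : ℕ} (hℓ : 1 ≤ ℓ) (htB : (Fin ℓ → ℚ) →ₗ[ℚ] ℚ)
    (hhtB : ∀ i : Fin ℓ, htB (simpleB ℓ i) = 1) :
    ∀ x : IXt, ok ℓ x → htB (phiB ℓ x) = (hB ℓ x : ℚ) := by
  rintro (⟨i, j, s, t⟩ | ⟨i, s⟩) hok
  · obtain ⟨hij, hjl⟩ := hok
    have hil : i < ℓ := lt_trans hij hjl
    simp only [phiB, E', dif_pos hil, dif_pos hjl, map_add, map_smul, smul_eq_mul,
      htB_std hℓ htB hhtB i hil, htB_std hℓ htB hhtB j hjl, hB]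
    cases s <;> cases t <;> simp [sgQ, sgZ] <;> push_cast <;> ring
  · have hil : i < ℓ := hok
    simp only [phiB, E', dif_pos hil, map_smul, smul_eq_mul,
      htB_std hℓ htB hhtB i hil, hB]
    cases s <;> simp [sgQ, sgZ] <;> push_cast <;> ring

lemma ht_phiC {ℓ : ℕ} (hℓ : 1 ≤ ℓ) (htC : (Fin ℓ → ℚ) →ₗ[ℚ] ℚ)
    (hhtC : ∀ i : Fin ℓ, htC (simpleC ℓ i) = 1) :
    ∀ x : IXt, ok ℓ x → htC (phiC ℓ x) = (hC ℓ x : ℚ) := by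
  rintro (⟨i, j, s, t⟩ | ⟨i, s⟩) hok
  · obtain ⟨hij, hjl⟩ := hok
    have hil : i < ℓ := lt_trans hij hjl
    simp only [phiC, E', dif_pos hil, dif_pos hjl, map_add, map_smul, smul_eq_mul,
      htC_std hℓ htC hhtC i hil, htC_std hℓ htC hhtC j hjl, hC]
    cases s <;> cases t <;> simp [sgQ, sgZ] <;> push_cast <;> ring
  · have hil : i < ℓ := hok
    simp only [phiC, E', dif_pos hil, map_smul, smul_eq_mul,
      htC_std hℓ htC hhtC i hil, hC]
    cases s <;> simp [sgQ, sgZ] <;> push_cast <;> ring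

lemma div_iff (q : ℕ) (n : ℤ) : (∃ k : ℤ, ((n : ℚ) = (q : ℚ) * k)) ↔ (q : ℤ) ∣ n := by
  constructor
  · rintro ⟨k, hk⟩; exact ⟨k, by exact_mod_cast hk⟩
  · rintro ⟨k, hk⟩; exact ⟨k, by rw [hk]; push_cast; ring⟩
lemma sgQ_true : sgQ true = 1 := rfl
lemma sgQ_false : sgQ false = -1 := rfl

lemma SB_eq {ℓ q : ℕ} (hℓ : 1 ≤ ℓ) (htB : (Fin ℓ → ℚ) →ₗ[ℚ] ℚ)
    (hhtB : ∀ i : Fin ℓ, htB (simpleB ℓ i) = 1) :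
    {α | α ∈ rootsB ℓ ∧ ∃ k : ℤ, htB α = (q : ℚ) * k} =
      phiB ℓ '' {x | ok ℓ x ∧ (q : ℤ) ∣ hB ℓ x} := by
  ext α
  constructor
  · rintro ⟨hroot, hdiv⟩
    rcases hroot with ⟨i, j, hij, h4⟩ | ⟨i, h2⟩
    · have hphi : ∀ s t : Bool, phiB ℓ (.inl ((i : ℕ), (j : ℕ), s, t)) =
          sgQ s • stdVec ℓ i + sgQ t • stdVec ℓ j := by
        intro s t; simp [phiB, E'_coe]
      have hok : ∀ s t : Bool, ok ℓ (.inl ((i : ℕ), (j : ℕ), s, t)) := fun s t => ⟨hij, j.isLt⟩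
      have mem : ∀ s t : Bool, α = sgQ s • stdVec ℓ i + sgQ t • stdVec ℓ j →
          α ∈ phiB ℓ '' {x | ok ℓ x ∧ (q : ℤ) ∣ hB ℓ x} := by
        intro s t hα
        refine ⟨.inl ((i : ℕ), (j : ℕ), s, t), ⟨hok s t, ?_⟩, by rw [hphi s t, hα]⟩
        rw [← div_iff]
        obtain ⟨k, hk⟩ := hdiv
        exact ⟨k, by rw [← ht_phiB hℓ htB hhtB _ (hok s t), hphi s t, ← hα, hk]⟩
      rcases h4 with h | h | h | h
      · exact mem true true (by rw [h, sgQ_true]; module)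
      · exact mem true false (by rw [h, sgQ_true, sgQ_false]; module)
      · exact mem false true (by rw [h, sgQ_true, sgQ_false]; module)
      · exact mem false false (by rw [h, sgQ_false]; module)
    · have hphi : ∀ s : Bool, phiB ℓ (.inr ((i : ℕ), s)) = sgQ s • stdVec ℓ i := by
        intro s; simp [phiB, E'_coe]
      have hok : ∀ s : Bool, ok ℓ (.inr ((i : ℕ), s)) := fun s => i.isLt
      have mem : ∀ s : Bool, α = sgQ s • stdVec ℓ i →
          α ∈ phiB ℓ '' {x | ok ℓ x ∧ (q : ℤ) ∣ hB ℓ x} := by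
        intro s hα
        refine ⟨.inr ((i : ℕ), s), ⟨hok s, ?_⟩, by rw [hphi s, hα]⟩
        rw [← div_iff]
        obtain ⟨k, hk⟩ := hdiv
        exact ⟨k, by rw [← ht_phiB hℓ htB hhtB _ (hok s), hphi s, ← hα, hk]⟩
      rcases h2 with h | h
      · exact mem true (by rw [h, sgQ_true]; module)
      · exact mem false (by rw [h, sgQ_false]; module)
  · rintro ⟨x, ⟨hok, hdvd⟩, rfl⟩
    refine ⟨?_, ?_⟩
    · rcases x with ⟨i, j, s, t⟩ | ⟨i, s⟩
      · obtain ⟨hij, hjl⟩ := hok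
        have hil : i < ℓ := lt_trans hij hjl
        left
        refine ⟨⟨i, hil⟩, ⟨j, hjl⟩, hij, ?_⟩
        have e : phiB ℓ (.inl (i, j, s, t)) =
            sgQ s • stdVec ℓ ⟨i, hil⟩ + sgQ t • stdVec ℓ ⟨j, hjl⟩ := by
          simp [phiB, E', dif_pos hil, dif_pos hjl]
        rw [e]
        cases s <;> cases t
        · exact .inr (.inr (.inr (by rw [sgQ_false]; module)))
        · exact .inr (.inr (.inl (by rw [sgQ_true, sgQ_false]; module)))
        · exact .inr (.inl (by rw [sgQ_true, sgQ_false]; module))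
        · exact .inl (by rw [sgQ_true]; module)
      · have hil : i < ℓ := hok
        right
        refine ⟨⟨i, hil⟩, ?_⟩
        have e : phiB ℓ (.inr (i, s)) = sgQ s • stdVec ℓ ⟨i, hil⟩ := by
          simp [phiB, E', dif_pos hil]
        rw [e]
        cases s
        · exact .inr (by rw [sgQ_false]; module)
        · exact .inl (by rw [sgQ_true]; module)
    · rw [ht_phiB hℓ htB hhtB _ hok]
      exact (div_iff q _).mpr hdvd

lemma SC_eq {ℓ q : ℕ} (hℓ : 1 ≤ ℓ) (htC : (Fin ℓ → ℚ) →ₗ[ℚ] ℚ)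
    (hhtC : ∀ i : Fin ℓ, htC (simpleC ℓ i) = 1) :
    {α | α ∈ rootsC ℓ ∧ ∃ k : ℤ, htC α = (q : ℚ) * k} =
      phiC ℓ '' {x | ok ℓ x ∧ (q : ℤ) ∣ hC ℓ x} := by
  ext α
  constructor
  · rintro ⟨hroot, hdiv⟩
    rcases hroot with ⟨i, j, hij, h4⟩ | ⟨i, h2⟩
    · have hphi : ∀ s t : Bool, phiC ℓ (.inl ((i : ℕ), (j : ℕ), s, t)) =
          sgQ s • stdVec ℓ i + sgQ t • stdVec ℓ j := by
        intro s t; simp [phiC, E'_coe]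
      have hok : ∀ s t : Bool, ok ℓ (.inl ((i : ℕ), (j : ℕ), s, t)) := fun s t => ⟨hij, j.isLt⟩
      have mem : ∀ s t : Bool, α = sgQ s • stdVec ℓ i + sgQ t • stdVec ℓ j →
          α ∈ phiC ℓ '' {x | ok ℓ x ∧ (q : ℤ) ∣ hC ℓ x} := by
        intro s t hα
        refine ⟨.inl ((i : ℕ), (j : ℕ), s, t), ⟨hok s t, ?_⟩, by rw [hphi s t, hα]⟩
        rw [← div_iff]
        obtain ⟨k, hk⟩ := hdiv
        exact ⟨k, by rw [← ht_phiC hℓ htC hhtC _ (hok s t), hphi s t, ← hα, hk]⟩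
      rcases h4 with h | h | h | h
      · exact mem true true (by rw [h, sgQ_true]; module)
      · exact mem true false (by rw [h, sgQ_true, sgQ_false]; module)
      · exact mem false true (by rw [h, sgQ_true, sgQ_false]; module)
      · exact mem false false (by rw [h, sgQ_false]; module)
    · have hphi : ∀ s : Bool, phiC ℓ (.inr ((i : ℕ), s)) = (sgQ s * 2) • stdVec ℓ i := by
        intro s; simp [phiC, E'_coe]
      have hok : ∀ s : Bool, ok ℓ (.inr ((i : ℕ), s)) := fun s => i.isLt
      have mem : ∀ s : Bool, α = (sgQ s * 2) • stdVec ℓ i →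
          α ∈ phiC ℓ '' {x | ok ℓ x ∧ (q : ℤ) ∣ hC ℓ x} := by
        intro s hα
        refine ⟨.inr ((i : ℕ), s), ⟨hok s, ?_⟩, by rw [hphi s, hα]⟩
        rw [← div_iff]
        obtain ⟨k, hk⟩ := hdiv
        exact ⟨k, by rw [← ht_phiC hℓ htC hhtC _ (hok s), hphi s, ← hα, hk]⟩
      rcases h2 with h | h
      · exact mem true (by rw [h, sgQ_true]; module)
      · exact mem false (by rw [h, sgQ_false]; module)
  · rintro ⟨x, ⟨hok, hdvd⟩, rfl⟩
    refine ⟨?_, ?_⟩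
    · rcases x with ⟨i, j, s, t⟩ | ⟨i, s⟩
      · obtain ⟨hij, hjl⟩ := hok
        have hil : i < ℓ := lt_trans hij hjl
        left
        refine ⟨⟨i, hil⟩, ⟨j, hjl⟩, hij, ?_⟩
        have e : phiC ℓ (.inl (i, j, s, t)) =
            sgQ s • stdVec ℓ ⟨i, hil⟩ + sgQ t • stdVec ℓ ⟨j, hjl⟩ := by
          simp [phiC, E', dif_pos hil, dif_pos hjl]
        rw [e]
        cases s <;> cases t
        · exact .inr (.inr (.inr (by rw [sgQ_false]; module)))
        · exact .inr (.inr (.inl (by rw [sgQ_true, sgQ_false]; module)))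
        · exact .inr (.inl (by rw [sgQ_true, sgQ_false]; module))
        · exact .inl (by rw [sgQ_true]; module)
      · have hil : i < ℓ := hok
        right
        refine ⟨⟨i, hil⟩, ?_⟩
        have e : phiC ℓ (.inr (i, s)) = (sgQ s * 2) • stdVec ℓ ⟨i, hil⟩ := by
          simp [phiC, E', dif_pos hil]
        rw [e]
        cases s
        · exact .inr (by rw [sgQ_false]; module)
        · exact .inl (by rw [sgQ_true]; module)
    · rw [ht_phiC hℓ htC hhtC _ hok]
      exact (div_iff q _).mpr hdvd
lemma phiB_injOn {ℓ : ℕ} : Set.InjOn (phiB ℓ) {x | ok ℓ x} := by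
  rintro (⟨i, j, s, t⟩ | ⟨i, s⟩) hx (⟨i', j', s', t'⟩ | ⟨i', s'⟩) hy h
  · obtain ⟨hij, hjl⟩ := hx
    obtain ⟨hij', hjl'⟩ := hy
    have hil : i < ℓ := lt_trans hij hjl
    have hil' : i' < ℓ := lt_trans hij' hjl'
    rw [show phiB ℓ (.inl (i, j, s, t)) =
          sgQ s • stdVec ℓ ⟨i, hil⟩ + sgQ t • stdVec ℓ ⟨j, hjl⟩ from by
            simp [phiB, E', dif_pos hil, dif_pos hjl],
        show phiB ℓ (.inl (i', j', s', t')) =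
          sgQ s' • stdVec ℓ ⟨i', hil'⟩ + sgQ t' • stdVec ℓ ⟨j', hjl'⟩ from by
            simp [phiB, E', dif_pos hil', dif_pos hjl']] at h
    obtain ⟨e1, e2, e3, e4⟩ := pair_inj (show (⟨i, hil⟩ : Fin ℓ) < ⟨j, hjl⟩ from hij)
      (show (⟨i', hil'⟩ : Fin ℓ) < ⟨j', hjl'⟩ from hij') (sgQ_ne_zero s') (sgQ_ne_zero t') h
    simp only [Fin.mk.injEq] at e1 e2
    rw [e1, e2, sgQ_inj e3, sgQ_inj e4]
  · exfalso
    obtain ⟨hij, hjl⟩ := hx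
    have hil : i < ℓ := lt_trans hij hjl
    have hil' : i' < ℓ := hy
    rw [show phiB ℓ (.inl (i, j, s, t)) =
          sgQ s • stdVec ℓ ⟨i, hil⟩ + sgQ t • stdVec ℓ ⟨j, hjl⟩ from by
            simp [phiB, E', dif_pos hil, dif_pos hjl],
        show phiB ℓ (.inr (i', s')) = sgQ s' • stdVec ℓ ⟨i', hil'⟩ from by
            simp [phiB, E', dif_pos hil']] at h
    exact single_ne_pair (show (⟨i, hil⟩ : Fin ℓ) < ⟨j, hjl⟩ from hij)
      (sgQ_ne_zero s) (sgQ_ne_zero t) h.symm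
  · exfalso
    obtain ⟨hij', hjl'⟩ := hy
    have hil' : i' < ℓ := lt_trans hij' hjl'
    have hil : i < ℓ := hx
    rw [show phiB ℓ (.inl (i', j', s', t')) =
          sgQ s' • stdVec ℓ ⟨i', hil'⟩ + sgQ t' • stdVec ℓ ⟨j', hjl'⟩ from by
            simp [phiB, E', dif_pos hil', dif_pos hjl'],
        show phiB ℓ (.inr (i, s)) = sgQ s • stdVec ℓ ⟨i, hil⟩ from by
            simp [phiB, E', dif_pos hil]] at h
    exact single_ne_pair (show (⟨i', hil'⟩ : Fin ℓ) < ⟨j', hjl'⟩ from hij')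
      (sgQ_ne_zero s') (sgQ_ne_zero t') h
  · have hil : i < ℓ := hx
    have hil' : i' < ℓ := hy
    rw [show phiB ℓ (.inr (i, s)) = sgQ s • stdVec ℓ ⟨i, hil⟩ from by
          simp [phiB, E', dif_pos hil],
        show phiB ℓ (.inr (i', s')) = sgQ s' • stdVec ℓ ⟨i', hil'⟩ from by
          simp [phiB, E', dif_pos hil']] at h
    obtain ⟨e1, e2⟩ := single_inj (sgQ_ne_zero s) h
    simp only [Fin.mk.injEq] at e1
    rw [e1, sgQ_inj e2]

lemma phiC_injOn {ℓ : ℕ} : Set.InjOn (phiC ℓ) {x | ok ℓ x} := by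
  have h2 : ∀ s : Bool, sgQ s * 2 ≠ 0 := fun s => mul_ne_zero (sgQ_ne_zero s) two_ne_zero
  rintro (⟨i, j, s, t⟩ | ⟨i, s⟩) hx (⟨i', j', s', t'⟩ | ⟨i', s'⟩) hy h
  · obtain ⟨hij, hjl⟩ := hx
    obtain ⟨hij', hjl'⟩ := hy
    have hil : i < ℓ := lt_trans hij hjl
    have hil' : i' < ℓ := lt_trans hij' hjl'
    rw [show phiC ℓ (.inl (i, j, s, t)) =
          sgQ s • stdVec ℓ ⟨i, hil⟩ + sgQ t • stdVec ℓ ⟨j, hjl⟩ from by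
            simp [phiC, E', dif_pos hil, dif_pos hjl],
        show phiC ℓ (.inl (i', j', s', t')) =
          sgQ s' • stdVec ℓ ⟨i', hil'⟩ + sgQ t' • stdVec ℓ ⟨j', hjl'⟩ from by
            simp [phiC, E', dif_pos hil', dif_pos hjl']] at h
    obtain ⟨e1, e2, e3, e4⟩ := pair_inj (show (⟨i, hil⟩ : Fin ℓ) < ⟨j, hjl⟩ from hij)
      (show (⟨i', hil'⟩ : Fin ℓ) < ⟨j', hjl'⟩ from hij') (sgQ_ne_zero s') (sgQ_ne_zero t') h
    simp only [Fin.mk.injEq] at e1 e2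
    rw [e1, e2, sgQ_inj e3, sgQ_inj e4]
  · exfalso
    obtain ⟨hij, hjl⟩ := hx
    have hil : i < ℓ := lt_trans hij hjl
    have hil' : i' < ℓ := hy
    rw [show phiC ℓ (.inl (i, j, s, t)) =
          sgQ s • stdVec ℓ ⟨i, hil⟩ + sgQ t • stdVec ℓ ⟨j, hjl⟩ from by
            simp [phiC, E', dif_pos hil, dif_pos hjl],
        show phiC ℓ (.inr (i', s')) = (sgQ s' * 2) • stdVec ℓ ⟨i', hil'⟩ from by
            simp [phiC, E', dif_pos hil']] at h
    exact single_ne_pair (show (⟨i, hil⟩ : Fin ℓ) < ⟨j, hjl⟩ from hij)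
      (sgQ_ne_zero s) (sgQ_ne_zero t) h.symm
  · exfalso
    obtain ⟨hij', hjl'⟩ := hy
    have hil' : i' < ℓ := lt_trans hij' hjl'
    have hil : i < ℓ := hx
    rw [show phiC ℓ (.inl (i', j', s', t')) =
          sgQ s' • stdVec ℓ ⟨i', hil'⟩ + sgQ t' • stdVec ℓ ⟨j', hjl'⟩ from by
            simp [phiC, E', dif_pos hil', dif_pos hjl'],
        show phiC ℓ (.inr (i, s)) = (sgQ s * 2) • stdVec ℓ ⟨i, hil⟩ from by
            simp [phiC, E', dif_pos hil]] at h
    exact single_ne_pair (show (⟨i', hil'⟩ : Fin ℓ) < ⟨j', hjl'⟩ from hij')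
      (sgQ_ne_zero s') (sgQ_ne_zero t') h
  · have hil : i < ℓ := hx
    have hil' : i' < ℓ := hy
    rw [show phiC ℓ (.inr (i, s)) = (sgQ s * 2) • stdVec ℓ ⟨i, hil⟩ from by
          simp [phiC, E', dif_pos hil],
        show phiC ℓ (.inr (i', s')) = (sgQ s' * 2) • stdVec ℓ ⟨i', hil'⟩ from by
          simp [phiC, E', dif_pos hil']] at h
    obtain ⟨e1, e2⟩ := single_inj (h2 s) h
    simp only [Fin.mk.injEq] at e1
    rw [e1, sgQ_inj (mul_right_cancel₀ two_ne_zero e2)]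

lemma sig_spec {ℓ : ℕ} (hℓ : 1 ≤ ℓ) {x : IXt} (hx : ok ℓ x) :
    ok ℓ (sigm ℓ x) ∧ hC ℓ (sigm ℓ x) = hB ℓ x ∧ taum ℓ (sigm ℓ x) = x := by
  rcases x with ⟨i, j, s, t⟩ | ⟨i, s⟩
  · obtain ⟨hij, hjl⟩ := hx
    by_cases hst : s = t
    · subst hst
      by_cases hji : j = i + 1
      · have hs : sigm ℓ (.inl (i, j, s, s)) = .inr (i, s) := by simp [sigm, hji]
        rw [hs]
        refine ⟨lt_trans hij hjl, ?_, ?_⟩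
        · subst hji; cases s <;> simp [hB, hC, sgZ] <;> omega
        · simp [taum, show ¬ i + 1 = ℓ by omega, hji]
      · have hs : sigm ℓ (.inl (i, j, s, s)) = .inl (i, j - 1, s, s) := by simp [sigm, hji]
        rw [hs]
        refine ⟨⟨by omega, by omega⟩, ?_, ?_⟩
        · cases s <;> simp [hB, hC, sgZ] <;> omega
        · simp [taum, show ¬ (j - 1) + 1 = ℓ by omega]
          try omega
    · have hs : sigm ℓ (.inl (i, j, s, t)) = .inl (i, j, s, t) := by simp [sigm, hst]
      rw [hs]
      refine ⟨⟨hij, hjl⟩, ?_, ?_⟩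
      · cases s <;> cases t <;> simp_all [hB, hC, sgZ]
      · simp [taum, hst]
  · have hil : i < ℓ := hx
    by_cases hi : i + 1 = ℓ
    · have hs : sigm ℓ (.inr (i, s)) = .inr (i, s) := by simp [sigm, hi]
      rw [hs]
      refine ⟨hil, ?_, by simp [taum, hi]⟩
      cases s <;> simp [hB, hC, sgZ] <;> omega
    · have hs : sigm ℓ (.inr (i, s)) = .inl (i, ℓ - 1, s, s) := by simp [sigm, hi]
      rw [hs]
      refine ⟨⟨by omega, by omega⟩, ?_, ?_⟩
      · cases s <;> simp [hB, hC, sgZ] <;> omega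
      · simp [taum, show (ℓ - 1) + 1 = ℓ by omega]

lemma tau_spec {ℓ : ℕ} (hℓ : 1 ≤ ℓ) {y : IXt} (hy : ok ℓ y) :
    ok ℓ (taum ℓ y) ∧ hB ℓ (taum ℓ y) = hC ℓ y ∧ sigm ℓ (taum ℓ y) = y := by
  rcases y with ⟨i, j, s, t⟩ | ⟨i, s⟩
  · obtain ⟨hij, hjl⟩ := hy
    by_cases hst : s = t
    · subst hst
      by_cases hjl1 : j + 1 = ℓ
      · have hs : taum ℓ (.inl (i, j, s, s)) = .inr (i, s) := by simp [taum, hjl1]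
        rw [hs]
        refine ⟨lt_trans hij hjl, ?_, ?_⟩
        · cases s <;> simp [hB, hC, sgZ] <;> omega
        · simp [sigm, show ¬ i + 1 = ℓ by omega]
          try omega
      · have hs : taum ℓ (.inl (i, j, s, s)) = .inl (i, j + 1, s, s) := by simp [taum, hjl1]
        rw [hs]
        refine ⟨⟨by omega, by omega⟩, ?_, ?_⟩
        · cases s <;> simp [hB, hC, sgZ] <;> omega
        · simp [sigm, show ¬ j + 1 = i + 1 by omega, show ¬ j = i by omega]
    · have hs : taum ℓ (.inl (i, j, s, t)) = .inl (i, j, s, t) := by simp [taum, hst]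
      rw [hs]
      refine ⟨⟨hij, hjl⟩, ?_, ?_⟩
      · cases s <;> cases t <;> simp_all [hB, hC, sgZ]
      · simp [sigm, hst]
  · have hil : i < ℓ := hy
    by_cases hi : i + 1 = ℓ
    · have hs : taum ℓ (.inr (i, s)) = .inr (i, s) := by simp [taum, hi]
      rw [hs]
      refine ⟨hil, ?_, by simp [sigm, hi]⟩
      cases s <;> simp [hB, hC, sgZ] <;> omega
    · have hs : taum ℓ (.inr (i, s)) = .inl (i, i + 1, s, s) := by simp [taum, hi]
      rw [hs]
      refine ⟨⟨by omega, by omega⟩, ?_, ?_⟩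
      · cases s <;> simp [hB, hC, sgZ] <;> omega
      · simp [sigm]


/-- For all integers `ℓ ≥ 2` and `q ≥ 1`, the number of roots `α ∈ Δ(Bₗ)` whose
height `ht(α)` is divisible by `q` is equal to the number of roots `β ∈ Δ(Cₗ)` whose height
`ht(β)` is divisible by `q`.  Here the height is the sum of the coordinates in the simple-root
basis, i.e. the unique linear functional taking the value `1` on each simple root. -/
theorem statement0 (ℓ q : ℕ) (hℓ : 2 ≤ ℓ) (hq : 1 ≤ q)
    (htB htC : (Fin ℓ → ℚ) →ₗ[ℚ] ℚ)
    (hhtB : ∀ i : Fin ℓ, htB (simpleB ℓ i) = 1)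
    (hhtC : ∀ i : Fin ℓ, htC (simpleC ℓ i) = 1) :
    {α | α ∈ rootsB ℓ ∧ ∃ k : ℤ, htB α = (q : ℚ) * k}.ncard =
      {β | β ∈ rootsC ℓ ∧ ∃ k : ℤ, htC β = (q : ℚ) * k}.ncard := by
  have hℓ1 : 1 ≤ ℓ := by omega
  rw [SB_eq hℓ1 htB hhtB, SC_eq hℓ1 htC hhtC,
    Set.ncard_image_of_injOn (phiB_injOn.mono (fun x hx => hx.1)),
    Set.ncard_image_of_injOn (phiC_injOn.mono (fun x hx => hx.1))]
  have himg : sigm ℓ '' {x | ok ℓ x ∧ (q : ℤ) ∣ hB ℓ x} = {x | ok ℓ x ∧ (q : ℤ) ∣ hC ℓ x} := by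
    apply Set.Subset.antisymm
    · rintro _ ⟨x, hx, rfl⟩
      obtain ⟨hok', hh, -⟩ := sig_spec hℓ1 hx.1
      exact ⟨hok', by rw [hh]; exact hx.2⟩
    · intro y hy
      obtain ⟨hok', hh, hsig⟩ := tau_spec hℓ1 hy.1
      exact ⟨taum ℓ y, ⟨hok', by rw [hh]; exact hy.2⟩, hsig⟩
  have hinj : Set.InjOn (sigm ℓ) {x | ok ℓ x ∧ (q : ℤ) ∣ hB ℓ x} := by
    intro x hx y hy h
    rw [← (sig_spec hℓ1 hx.1).2.2, ← (sig_spec hℓ1 hy.1).2.2, h]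
  rw [← himg, Set.ncard_image_of_injOn hinj]
end
end

section
/- Let ℓ ≥ 2 and q ≥ 1 be integers, and write 2ℓ = q·m₀ + s₀ with m₀, s₀ integers, 0 ≤ s₀ ≤ q−1. Set K = m₀²(q−s₀) + (m₀+1)²·s₀ and set c = m₀ if q is odd and m₀ is even, c = m₀+1 if q and m₀ are both odd, and c = 0 if q is even. Then the number of roots α ∈ Δ(C_ℓ) with q dividing ht(α) equals (K + c)/2 − ℓ. -/
noncomputable section

open Finset
namespace St2


-- count of t < q*m+s with t % q = r₀
lemma count_mod (q r₀ m s : ℕ) (hq : 0 < q) (hr : r₀ < q) (hs : s < q) :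
    ((Finset.range (q*m+s)).filter (fun t => t % q = r₀)).card
      = m + if r₀ < s then 1 else 0 := by
  have himg : (Finset.range (q*m+s)).filter (fun t => t % q = r₀)
      = (Finset.range (m + if r₀ < s then 1 else 0)).image (fun i => r₀ + q*i) := by
    ext t
    simp only [mem_filter, mem_range, mem_image]
    constructor
    · rintro ⟨hlt, hmod⟩
      have hdm : t = q*(t/q) + r₀ := by rw [← hmod]; exact (Nat.div_add_mod t q).symm
      refine ⟨t / q, ?_, by omega⟩
      by_cases hcase : r₀ < s
      · rw [if_pos hcase]
        by_contra hge
        push_neg at hge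
        have : q*(m+1) ≤ q*(t/q) := Nat.mul_le_mul_left q hge
        nlinarith
      · rw [if_neg hcase]
        push_neg at hcase
        by_contra hge
        push_neg at hge
        have : q*m ≤ q*(t/q) := Nat.mul_le_mul_left q hge
        omega
    · rintro ⟨i, hi, rfl⟩
      refine ⟨?_, by rw [Nat.add_mul_mod_self_left, Nat.mod_eq_of_lt hr]⟩
      by_cases hcase : r₀ < s
      · rw [if_pos hcase] at hi
        have : q*i ≤ q*m := Nat.mul_le_mul_left q (by omega)
        omega
      · rw [if_neg hcase] at hi
        have : q*(i+1) ≤ q*m := Nat.mul_le_mul_left q (by omega)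
        push_neg at hcase
        nlinarith
  rw [himg, Finset.card_image_of_injective _ (fun a b hab =>
      Nat.eq_of_mul_eq_mul_left hq (by omega)), Finset.card_range]

-- count of t < q*m+s with t % q < s
lemma count_lt (q m s : ℕ) (hq : 0 < q) (hs : s < q) :
    ((Finset.range (q*m+s)).filter (fun t => t % q < s)).card = m*s + s := by
  have hsplit : (Finset.range (q*m+s)).filter (fun t => t % q < s)
      = (Finset.range s).biUnion (fun r₀ => (Finset.range (q*m+s)).filter (fun t => t % q = r₀)) := by
    ext t
    simp only [mem_filter, mem_biUnion, mem_range]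
    constructor
    · rintro ⟨h1, h2⟩; exact ⟨t % q, h2, h1, rfl⟩
    · rintro ⟨r₀, hr₀, h1, h2⟩; omega
  rw [hsplit, Finset.card_biUnion]
  · have heach : ∀ r₀ ∈ Finset.range s, ((Finset.range (q*m+s)).filter (fun t => t % q = r₀)).card = m + 1 := by
      intro r₀ hr₀
      rw [Finset.mem_range] at hr₀
      rw [count_mod q r₀ m s hq (by omega) hs, if_pos hr₀]
    rw [Finset.sum_congr rfl heach, Finset.sum_const, Finset.card_range, smul_eq_mul]
    ring
  · intro a ha b hb hab
    simp only [Finset.disjoint_left, mem_filter]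
    rintro t ⟨_, h1⟩ ⟨_, h2⟩
    exact hab (h1 ▸ h2 ▸ rfl)


def Ug (ℓ q : ℕ) : Finset (ℕ × ℕ) :=
  (Finset.range (2*ℓ) ×ˢ Finset.range (2*ℓ)).filter
    (fun p => (p.1 + p.2 + 1) % q = (2*ℓ) % q)

def Wg (ℓ q : ℕ) : Finset (ℕ × ℕ) := (Ug ℓ q).filter (fun p => p.1 < p.2)

def Dg (ℓ q : ℕ) : Finset ℕ :=
  (Finset.range (2*ℓ)).filter (fun t => (2*t + 1) % q = (2*ℓ) % q)

def Vg (ℓ q : ℕ) : Finset (ℕ × ℕ) :=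
  (Ug ℓ q).filter (fun p => p.1 ≤ p.2 ∧ p.1 + p.2 + 1 ≠ 2*ℓ)

-- U = 2W + D
lemma U_split (ℓ q : ℕ) : (Ug ℓ q).card = 2 * (Wg ℓ q).card + (Dg ℓ q).card := by
  classical
  have h1 : (Ug ℓ q).card
      = ((Ug ℓ q).filter (fun p => p.1 < p.2)).card
        + ((Ug ℓ q).filter (fun p => ¬ p.1 < p.2)).card :=
    (Finset.card_filter_add_card_filter_not _).symm
  have h2 : ((Ug ℓ q).filter (fun p => ¬ p.1 < p.2)).card
      = (((Ug ℓ q).filter (fun p => ¬ p.1 < p.2)).filter (fun p => p.2 < p.1)).card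
        + (((Ug ℓ q).filter (fun p => ¬ p.1 < p.2)).filter (fun p => ¬ p.2 < p.1)).card :=
    (Finset.card_filter_add_card_filter_not _).symm
  have h3 : ((Ug ℓ q).filter (fun p => ¬ p.1 < p.2)).filter (fun p => p.2 < p.1)
      = (Ug ℓ q).filter (fun p => p.2 < p.1) := by
    rw [Finset.filter_filter]
    exact Finset.filter_congr (fun p _ => by constructor <;> (intro h; omega))
  have h4 : ((Ug ℓ q).filter (fun p => ¬ p.1 < p.2)).filter (fun p => ¬ p.2 < p.1)
      = (Ug ℓ q).filter (fun p => p.1 = p.2) := by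
    rw [Finset.filter_filter]
    exact Finset.filter_congr (fun p _ => by constructor <;> (intro h; omega))
  have h5 : ((Ug ℓ q).filter (fun p => p.2 < p.1)).card = (Wg ℓ q).card := by
    apply Finset.card_nbij' (fun p => p.swap) (fun p => p.swap)
    · intro p hp
      simp only [Finset.mem_coe, Ug, Wg, Finset.mem_filter, Finset.mem_product, Finset.mem_range] at hp ⊢
      refine ⟨⟨⟨hp.1.1.2, hp.1.1.1⟩, ?_⟩, hp.2⟩
      simp only [Prod.fst_swap, Prod.snd_swap]
      rw [show p.2 + p.1 = p.1 + p.2 by ring]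
      exact hp.1.2
    · intro p hp
      simp only [Finset.mem_coe, Ug, Wg, Finset.mem_filter, Finset.mem_product, Finset.mem_range] at hp ⊢
      refine ⟨⟨⟨hp.1.1.2, hp.1.1.1⟩, ?_⟩, hp.2⟩
      simp only [Prod.fst_swap, Prod.snd_swap]
      rw [show p.2 + p.1 = p.1 + p.2 by ring]
      exact hp.1.2
    · intro p _; simp
    · intro p _; simp
  have h6 : ((Ug ℓ q).filter (fun p => p.1 = p.2)).card = (Dg ℓ q).card := by
    apply Finset.card_nbij' (fun p => p.1) (fun t => (t, t))
    · intro p hp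
      simp only [Finset.mem_coe, Ug, Dg, Finset.mem_filter, Finset.mem_product, Finset.mem_range] at hp ⊢
      obtain ⟨⟨⟨hp1, hp2⟩, hmod⟩, heq⟩ := hp
      refine ⟨hp1, ?_⟩
      rw [show 2 * p.1 + 1 = p.1 + p.2 + 1 by omega]
      exact hmod
    · intro t htmem
      simp only [Finset.mem_coe, Ug, Dg, Finset.mem_filter, Finset.mem_product, Finset.mem_range] at htmem ⊢
      refine ⟨⟨⟨htmem.1, htmem.1⟩, ?_⟩, by trivial⟩
      rw [show t + t + 1 = 2 * t + 1 by ring]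
      exact htmem.2
    · intro p hp
      simp only [Finset.mem_coe, Ug, Finset.mem_filter] at hp
      exact (Prod.ext rfl hp.2)
    · intro t _; rfl
  rw [h1, h2, h3, h4, h5, h6, Wg]
  ring

-- antidiagonal inside W has card ℓ
lemma anti_card (ℓ q : ℕ) :
    ((Wg ℓ q).filter (fun p => p.1 + p.2 + 1 = 2*ℓ)).card = ℓ := by
  classical
  have himg : (Wg ℓ q).filter (fun p => p.1 + p.2 + 1 = 2*ℓ)
      = (Finset.range ℓ).image (fun t => (t, 2*ℓ - 1 - t)) := by
    ext p
    simp only [Wg, Ug, Finset.mem_filter, Finset.mem_product, Finset.mem_range,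
      Finset.mem_image]
    constructor
    · rintro ⟨⟨⟨⟨h1, h2⟩, hmod⟩, hlt⟩, hsum⟩
      exact ⟨p.1, by omega, Prod.ext rfl (by omega)⟩
    · rintro ⟨t, htl, rfl⟩
      refine ⟨⟨⟨⟨by omega, by omega⟩, ?_⟩, by omega⟩, by omega⟩
      rw [show t + (2*ℓ - 1 - t) + 1 = 2*ℓ by omega]
  rw [himg, Finset.card_image_of_injective _ (fun a b hab => (Prod.ext_iff.mp hab).1),
    Finset.card_range]

-- V + ℓ = W + D
lemma V_split (ℓ q : ℕ) : (Vg ℓ q).card + ℓ = (Wg ℓ q).card + (Dg ℓ q).card := by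
  classical
  have h1 : (Vg ℓ q).card
      = ((Vg ℓ q).filter (fun p => p.1 < p.2)).card
        + ((Vg ℓ q).filter (fun p => ¬ p.1 < p.2)).card :=
    (Finset.card_filter_add_card_filter_not _).symm
  have h2 : (Vg ℓ q).filter (fun p => p.1 < p.2)
      = (Wg ℓ q).filter (fun p => ¬ p.1 + p.2 + 1 = 2*ℓ) := by
    unfold Vg Wg
    rw [Finset.filter_filter, Finset.filter_filter]
    exact Finset.filter_congr (fun p _ => by constructor <;> (intro h; omega))
  have h3 : ((Vg ℓ q).filter (fun p => ¬ p.1 < p.2)).card = (Dg ℓ q).card := by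
    have he : (Vg ℓ q).filter (fun p => ¬ p.1 < p.2)
        = (Ug ℓ q).filter (fun p => p.1 = p.2) := by
      unfold Vg
      rw [Finset.filter_filter]
      refine Finset.filter_congr (fun p hp => ?_)
      simp only [Ug, Finset.mem_filter, Finset.mem_product, Finset.mem_range] at hp
      constructor
      · intro h; omega
      · intro h; refine ⟨⟨by omega, ?_⟩, by omega⟩
        omega
    rw [he]
    apply Finset.card_nbij' (fun p => p.1) (fun t => (t, t))
    · intro p hp
      simp only [Finset.mem_coe, Ug, Dg, Finset.mem_filter, Finset.mem_product, Finset.mem_range] at hp ⊢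
      obtain ⟨⟨⟨hp1, hp2⟩, hmod⟩, heq⟩ := hp
      refine ⟨hp1, ?_⟩
      rw [show 2 * p.1 + 1 = p.1 + p.2 + 1 by omega]
      exact hmod
    · intro t htmem
      simp only [Finset.mem_coe, Ug, Dg, Finset.mem_filter, Finset.mem_product, Finset.mem_range] at htmem ⊢
      refine ⟨⟨⟨htmem.1, htmem.1⟩, ?_⟩, by trivial⟩
      rw [show t + t + 1 = 2 * t + 1 by ring]
      exact htmem.2
    · intro p hp
      simp only [Finset.mem_coe, Ug, Finset.mem_filter] at hp
      exact (Prod.ext rfl hp.2)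
    · intro t _; rfl
  have h4 : (Wg ℓ q).card
      = ((Wg ℓ q).filter (fun p => p.1 + p.2 + 1 = 2*ℓ)).card
        + ((Wg ℓ q).filter (fun p => ¬ p.1 + p.2 + 1 = 2*ℓ)).card :=
    (Finset.card_filter_add_card_filter_not _).symm
  rw [h1, h2, h3, h4, anti_card]
  ring

lemma mod_shift (q ℓ t u : ℕ) (htl : t < 2*ℓ) :
    (t + u + 1) % q = (2*ℓ) % q ↔ u % q = (2*ℓ - 1 - t) % q := by
  constructor
  · intro h
    have h' : Nat.ModEq q (u + (t+1)) ((2*ℓ - 1 - t) + (t+1)) := by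
      show (u + (t+1)) % q = _ % q
      rw [show u + (t+1) = t + u + 1 by ring, show (2*ℓ - 1 - t) + (t+1) = 2*ℓ by omega]
      exact h
    exact h'.add_right_cancel' (t+1)
  · intro h
    have h' : Nat.ModEq q u (2*ℓ - 1 - t) := h
    have h2 := h'.add_right (t+1)
    show Nat.ModEq q (t + u + 1) (2*ℓ)
    rw [show t + u + 1 = u + (t+1) by ring, show 2*ℓ = (2*ℓ - 1 - t) + (t+1) by omega]
    exact h2

lemma U_card (ℓ q m s : ℕ) (hq : 0 < q) (hs : s < q) (hdec : 2*ℓ = q*m + s) :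
    (Ug ℓ q).card = 2*ℓ*m + m*s + s := by
  classical
  have hfib : (Ug ℓ q).card
      = ∑ t ∈ Finset.range (2*ℓ), ((Ug ℓ q).filter (fun p => p.1 = t)).card := by
    apply Finset.card_eq_sum_card_fiberwise
    intro p hp
    simp only [Finset.mem_coe, Ug, Finset.mem_filter, Finset.mem_product, Finset.mem_range] at hp
    simpa using hp.1.1
  have hfib2 : ∀ t ∈ Finset.range (2*ℓ),
      ((Ug ℓ q).filter (fun p => p.1 = t)).card
        = m + if (2*ℓ - 1 - t) % q < s then 1 else 0 := by
    intro t htr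
    rw [Finset.mem_range] at htr
    have hbij : ((Ug ℓ q).filter (fun p => p.1 = t)).card
        = ((Finset.range (2*ℓ)).filter (fun u => u % q = (2*ℓ - 1 - t) % q)).card := by
      apply Finset.card_nbij' (fun p => p.2) (fun u => (t, u))
      · intro p hp
        simp only [Finset.mem_coe, Ug, Finset.mem_filter, Finset.mem_product, Finset.mem_range] at hp ⊢
        obtain ⟨⟨⟨hp1, hp2⟩, hmod⟩, hpt⟩ := hp
        subst hpt
        exact ⟨hp2, (mod_shift q ℓ p.1 p.2 htr).mp hmod⟩
      · intro u hu
        simp only [Finset.mem_coe, Ug, Finset.mem_filter, Finset.mem_product, Finset.mem_range] at hu ⊢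
        exact ⟨⟨⟨htr, hu.1⟩, (mod_shift q ℓ t u htr).mpr hu.2⟩, by trivial⟩
      · intro p hp
        simp only [Finset.mem_coe, Finset.mem_filter] at hp
        exact Prod.ext hp.2.symm rfl
      · intro u _; rfl
    rw [hbij, hdec]
    exact count_mod q _ m s hq (Nat.mod_lt _ hq) hs
  rw [hfib, Finset.sum_congr rfl hfib2, Finset.sum_add_distrib, Finset.sum_const,
    Finset.card_range, ← Finset.card_filter]
  have hrefl : ((Finset.range (2*ℓ)).filter (fun x => (2*ℓ - 1 - x) % q < s)).card
      = ((Finset.range (2*ℓ)).filter (fun v => v % q < s)).card := by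
    apply Finset.card_nbij' (fun x => 2*ℓ - 1 - x) (fun v => 2*ℓ - 1 - v)
    · rintro x hx
      simp only [Finset.mem_coe, Finset.mem_filter, Finset.mem_range] at hx ⊢
      obtain ⟨hx1, hx2⟩ := hx
      exact ⟨by omega, hx2⟩
    · rintro v hv
      simp only [Finset.mem_coe, Finset.mem_filter, Finset.mem_range] at hv ⊢
      obtain ⟨hv1, hv2⟩ := hv
      refine ⟨by omega, ?_⟩
      rw [show 2*ℓ - 1 - (2*ℓ - 1 - v) = v by omega]
      exact hv2
    · rintro x hx
      simp only [Finset.mem_coe, Finset.mem_filter, Finset.mem_range] at hx ⊢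
      omega
    · rintro v hv
      simp only [Finset.mem_coe, Finset.mem_filter, Finset.mem_range] at hv ⊢
      omega
  rw [hrefl]
  have : ((Finset.range (2*ℓ)).filter (fun v => v % q < s)).card = m*s + s := by
    rw [hdec]
    exact count_lt q m s hq hs
  rw [this, smul_eq_mul]
  ring

lemma Dg_card_even (ℓ q : ℕ) (hq2 : q % 2 = 0) : (Dg ℓ q).card = 0 := by
  rw [Finset.card_eq_zero]
  rw [Finset.eq_empty_iff_forall_notMem]
  intro t htmem
  simp only [Dg, Finset.mem_filter, Finset.mem_range] at htmem
  obtain ⟨htl, hmod⟩ := htmem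
  have h1 : Nat.ModEq q (2*t+1) (2*ℓ) := hmod
  rcases le_or_gt (2*t+1) (2*ℓ) with hle | hle
  · have hdvd := (Nat.modEq_iff_dvd' hle).mp h1
    obtain ⟨k, hk⟩ := hdvd
    obtain ⟨j, hj⟩ := Nat.even_iff.mpr hq2
    have : 2*ℓ - (2*t+1) = 2*(j*k) := by rw [hk, hj]; ring
    omega
  · have hdvd := (Nat.modEq_iff_dvd' (by omega : 2*ℓ ≤ 2*t+1)).mp h1.symm
    obtain ⟨k, hk⟩ := hdvd
    obtain ⟨j, hj⟩ := Nat.even_iff.mpr hq2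
    have : 2*t+1 - 2*ℓ = 2*(j*k) := by rw [hk, hj]; ring
    omega

lemma Dg_card_odd (ℓ q m s : ℕ) (hq : 0 < q) (hq2 : q % 2 = 1) (hs : s < q)
    (hdec : 2*ℓ = q*m + s) : (Dg ℓ q).card = 2 * ((m+1)/2) := by
  classical
  set b := (q-1)/2 with hb
  have hqb : q = 2*b + 1 := by omega
  -- split into t < ℓ and t ≥ ℓ
  have hsplit : (Dg ℓ q).card
      = ((Dg ℓ q).filter (fun t => t < ℓ)).card
        + ((Dg ℓ q).filter (fun t => ¬ t < ℓ)).card :=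
    (Finset.card_filter_add_card_filter_not _).symm
  have hrefl : ((Dg ℓ q).filter (fun t => t < ℓ)).card
      = ((Dg ℓ q).filter (fun t => ¬ t < ℓ)).card := by
    apply Finset.card_nbij' (fun t => 2*ℓ - 1 - t) (fun t => 2*ℓ - 1 - t)
    · rintro t htmem
      simp only [Finset.mem_coe, Dg, Finset.mem_filter, Finset.mem_range] at htmem ⊢
      obtain ⟨⟨htl, hmod⟩, htlt⟩ := htmem
      refine ⟨⟨by omega, ?_⟩, by omega⟩
      have h1 : Nat.ModEq q (2*t+1) (2*ℓ) := hmod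
      have h2 : Nat.ModEq q ((2*(2*ℓ-1-t)+1) + (2*t+1)) (2*ℓ + (2*t+1)) := by
        rw [show (2*(2*ℓ-1-t)+1) + (2*t+1) = 2*ℓ + 2*ℓ by omega]
        exact Nat.ModEq.add_left (2*ℓ) h1.symm
      exact h2.add_right_cancel' (2*t+1)
    · rintro t htmem
      simp only [Finset.mem_coe, Dg, Finset.mem_filter, Finset.mem_range] at htmem ⊢
      obtain ⟨⟨htl, hmod⟩, htlt⟩ := htmem
      refine ⟨⟨by omega, ?_⟩, by omega⟩
      have h1 : Nat.ModEq q (2*t+1) (2*ℓ) := hmod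
      have h2 : Nat.ModEq q ((2*(2*ℓ-1-t)+1) + (2*t+1)) (2*ℓ + (2*t+1)) := by
        rw [show (2*(2*ℓ-1-t)+1) + (2*t+1) = 2*ℓ + 2*ℓ by omega]
        exact Nat.ModEq.add_left (2*ℓ) h1.symm
      exact h2.add_right_cancel' (2*t+1)
    · rintro t htmem
      simp only [Finset.mem_coe, Dg, Finset.mem_filter, Finset.mem_range] at htmem ⊢
      omega
    · rintro t htmem
      simp only [Finset.mem_coe, Dg, Finset.mem_filter, Finset.mem_range] at htmem ⊢
      omega
  have hpos : ((Dg ℓ q).filter (fun t => ¬ t < ℓ)).card = (m+1)/2 := by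
    have himg : (Dg ℓ q).filter (fun t => ¬ t < ℓ)
        = (Finset.range ((m+1)/2)).image (fun j => ℓ + q*j + b) := by
      ext t
      simp only [Dg, Finset.mem_filter, Finset.mem_range, Finset.mem_image]
      constructor
      · rintro ⟨⟨htl, hmod⟩, htge⟩
        have h1 : Nat.ModEq q (2*ℓ) (2*t+1) := (hmod : Nat.ModEq q _ _).symm
        have hdvd := (Nat.modEq_iff_dvd' (by omega : 2*ℓ ≤ 2*t+1)).mp h1
        obtain ⟨k, hk⟩ := hdvd
        have hkodd : k % 2 = 1 := by
          rcases Nat.even_or_odd k with he | ho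
          · obtain ⟨j, hj⟩ := he
            have : q*k = 2*(q*j) := by rw [hj]; ring
            omega
          · exact Nat.odd_iff.mp ho
        obtain ⟨j, hj⟩ : ∃ j, k = 2*j + 1 := ⟨k/2, by omega⟩
        have hqk : q*k = 2*(q*j) + q := by rw [hj]; ring
        have hlt : q*(2*j+1) < q*(m+1) := by
          have : q*k ≤ 2*ℓ - 1 := by omega
          have h2 : q*m + q > q*k := by omega
          calc q*(2*j+1) = q*k := by rw [hj]
            _ < q*(m+1) := by rw [Nat.mul_add]; omega
        have hjm : 2*j+1 < m+1 := Nat.lt_of_mul_lt_mul_left hlt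
        exact ⟨j, by omega, by omega⟩
      · rintro ⟨j, hjE, rfl⟩
        have hjm : 2*j+1 ≤ m := by omega
        have hmul : q*(2*j+1) ≤ q*m := Nat.mul_le_mul_left q hjm
        have hq2j : q*(2*j+1) = 2*(q*j) + q := by ring
        refine ⟨⟨by omega, ?_⟩, by omega⟩
        show Nat.ModEq q (2*(ℓ + q*j + b)+1) (2*ℓ)
        have : Nat.ModEq q (2*ℓ + q*(2*j+1)) (2*ℓ) :=
          ((Nat.modEq_iff_dvd' (Nat.le_add_right _ _)).mpr ⟨2*j+1, by omega⟩).symm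
        rw [show 2*(ℓ + q*j + b)+1 = 2*ℓ + q*(2*j+1) by omega]
        exact this
    rw [himg, Finset.card_image_of_injective _ (fun a c hac =>
      Nat.eq_of_mul_eq_mul_left hq (by omega : q*a = q*c)), Finset.card_range]
  omega

-- ===== geometry layer =====

def wvec (ℓ t : ℕ) : Fin ℓ → ℚ :=
  if h : t < ℓ then -stdVec ℓ ⟨t, h⟩
  else if h2 : t < 2*ℓ then stdVec ℓ ⟨2*ℓ - 1 - t, by omega⟩
  else 0

def vval (ℓ s : ℕ) (v : Fin ℓ → ℚ) : ℚ :=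
  if h : s < ℓ then -(v ⟨s, h⟩)
  else if h2 : s < 2*ℓ then v ⟨2*ℓ - 1 - s, by omega⟩
  else 0

lemma vval_add (ℓ s : ℕ) (v v' : Fin ℓ → ℚ) :
    vval ℓ s (v + v') = vval ℓ s v + vval ℓ s v' := by
  unfold vval
  split_ifs <;> simp [Pi.add_apply] <;> ring

lemma stdVec_apply (ℓ : ℕ) (i j : Fin ℓ) :
    stdVec ℓ i j = if j = i then 1 else 0 := by
  rw [stdVec, Pi.single_apply]

lemma wvec_neg_std (ℓ : ℕ) (i : Fin ℓ) : wvec ℓ (i : ℕ) = -stdVec ℓ i := by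
  rw [wvec, dif_pos i.isLt]

lemma wvec_pos_std (ℓ : ℕ) (i : Fin ℓ) : wvec ℓ (2*ℓ - 1 - (i : ℕ)) = stdVec ℓ i := by
  have hi := i.isLt
  rw [wvec, dif_neg (by omega), dif_pos (by omega)]
  refine congrArg (stdVec ℓ) (Fin.ext ?_)
  show 2*ℓ - 1 - (2*ℓ - 1 - (i:ℕ)) = (i:ℕ)
  omega

lemma vval_wvec (ℓ s t : ℕ) (hs : s < 2*ℓ) (htl : t < 2*ℓ) :
    vval ℓ s (wvec ℓ t) = if t = s then 1 else if t = 2*ℓ - 1 - s then -1 else 0 := by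
  unfold vval wvec
  rcases lt_or_ge s ℓ with hsl | hsl <;> rcases lt_or_ge t ℓ with htl2 | htl2
  · rw [dif_pos hsl, dif_pos htl2]
    simp only [Pi.neg_apply, stdVec_apply, neg_neg]
    by_cases h : t = s
    · subst h; rw [if_pos (Fin.ext rfl), if_pos rfl]
    · rw [if_neg (by intro hh; exact h (by have := congrArg Fin.val hh; simp at this; omega)),
        if_neg h, if_neg (by omega)]
  · rw [dif_pos hsl, dif_neg (by omega), dif_pos htl]
    simp only [Pi.neg_apply, stdVec_apply]
    by_cases h : t = 2*ℓ - 1 - s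
    · rw [if_pos (Fin.ext (by simp; omega)), if_neg (by omega), if_pos h]
    · rw [if_neg (by intro hh; exact h (by have := congrArg Fin.val hh; simp at this; omega)),
        if_neg (by omega), if_neg h]
      simp
  · rw [dif_neg (by omega), dif_pos hs, dif_pos htl2]
    simp only [Pi.neg_apply, stdVec_apply]
    by_cases h : t = 2*ℓ - 1 - s
    · rw [if_pos (Fin.ext (by simp; omega)), if_neg (by omega), if_pos h]
    · rw [if_neg (by intro hh; exact h (by have := congrArg Fin.val hh; simp at this; omega)),
        if_neg (by omega), if_neg h]
      simp
  · rw [dif_neg (by omega), dif_pos hs, dif_neg (by omega), dif_pos htl]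
    simp only [stdVec_apply]
    by_cases h : t = s
    · subst h; rw [if_pos (Fin.ext (by omega)), if_pos rfl]
    · rw [if_neg (by intro hh; exact h (by have := congrArg Fin.val hh; simp at this; omega)),
        if_neg h, if_neg (by omega)]

lemma ht_std {ℓ : ℕ} (ht : (Fin ℓ → ℚ) →ₗ[ℚ] ℚ) (hht : ∀ i : Fin ℓ, ht (simpleC ℓ i) = 1)
    (i : Fin ℓ) : ht (stdVec ℓ i) = (ℓ : ℚ) - (i : ℕ) - 1/2 := by
  suffices h : ∀ k : ℕ, ∀ i : Fin ℓ, (i : ℕ) + k + 1 = ℓ → ht (stdVec ℓ i) = (k : ℚ) + 1/2 by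
    have hilt := i.isLt
    have hi := h (ℓ - 1 - (i : ℕ)) i (by omega)
    have hcast : ((ℓ - 1 - (i : ℕ) : ℕ) : ℚ) + (i : ℕ) + 1 = (ℓ : ℚ) := by
      have h1 : (ℓ - 1 - (i : ℕ)) + ((i : ℕ) + 1) = ℓ := by omega
      have h2 := congrArg (fun n : ℕ => (n : ℚ)) h1
      push_cast at h2
      linarith
    rw [hi]; linarith
  intro k
  induction k with
  | zero =>
    intro i hi
    have hs := hht i
    rw [simpleC, dif_neg (by omega), map_smul, smul_eq_mul] at hs
    push_cast
    linarith
  | succ k ih =>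
    intro i hi
    have h1 : (i : ℕ) + 1 < ℓ := by omega
    have hs := hht i
    rw [simpleC, dif_pos h1, map_sub] at hs
    have h2 := ih ⟨(i : ℕ) + 1, h1⟩ (by simp; omega)
    rw [h2] at hs
    push_cast at hs ⊢
    linarith

lemma ht_wvec {ℓ : ℕ} (ht : (Fin ℓ → ℚ) →ₗ[ℚ] ℚ) (hht : ∀ i : Fin ℓ, ht (simpleC ℓ i) = 1)
    (t : ℕ) (htl : t < 2*ℓ) : ht (wvec ℓ t) = (t : ℚ) + 1/2 - ℓ := by
  rcases lt_or_ge t ℓ with h | h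
  · rw [wvec, dif_pos h, map_neg, ht_std ht hht]
    simp only [Fin.val_mk]
    ring
  · rw [wvec, dif_neg (by omega), dif_pos htl, ht_std ht hht]
    simp only [Fin.val_mk]
    have hc : ((2*ℓ - 1 - t : ℕ) : ℚ) = 2*(ℓ:ℚ) - 1 - t := by
      have h1 : (2*ℓ - 1 - t) + (t + 1) = 2*ℓ := by omega
      have h2 := congrArg (fun n : ℕ => (n : ℚ)) h1
      push_cast at h2
      linarith
    rw [hc]
    ring



lemma wvec_lt {ℓ t : ℕ} (h : t < ℓ) : wvec ℓ t = -stdVec ℓ ⟨t, h⟩ := by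
  rw [wvec, dif_pos h]

lemma wvec_ge {ℓ t : ℕ} (h1 : ℓ ≤ t) (h2 : t < 2*ℓ) :
    wvec ℓ t = stdVec ℓ ⟨2*ℓ - 1 - t, by omega⟩ := by
  rw [wvec, dif_neg (by omega), dif_pos h2]

lemma hdiv_iff {ℓ q : ℕ} (t u : ℕ) :
    (∃ k : ℤ, ((t:ℚ) + u + 1 - 2*ℓ) = (q:ℚ) * k) ↔ (t + u + 1) % q = (2*ℓ) % q := by
  constructor
  · rintro ⟨k, hk⟩
    have hk' : (t:ℤ) + u + 1 - 2*ℓ = q * k := by exact_mod_cast hk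
    have hdvd : (q:ℤ) ∣ ((2*ℓ : ℕ) : ℤ) - ((t + u + 1 : ℕ) : ℤ) := ⟨-k, by push_cast; linarith⟩
    exact Nat.modEq_iff_dvd.mpr hdvd
  · intro h
    obtain ⟨k, hk⟩ := Nat.modEq_iff_dvd.mp h
    refine ⟨-k, ?_⟩
    have hk2 : 2*(ℓ:ℚ) - ((t:ℚ) + (u:ℚ) + 1) = (q:ℚ) * (k:ℚ) := by exact_mod_cast hk
    push_cast
    linarith

lemma ht_G {ℓ : ℕ} (ht : (Fin ℓ → ℚ) →ₗ[ℚ] ℚ) (hht : ∀ i : Fin ℓ, ht (simpleC ℓ i) = 1)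
    (t u : ℕ) (ht2 : t < 2*ℓ) (hu2 : u < 2*ℓ) :
    ht (wvec ℓ t + wvec ℓ u) = (t:ℚ) + u + 1 - 2*ℓ := by
  rw [map_add, ht_wvec ht hht t ht2, ht_wvec ht hht u hu2]
  ring

lemma mem_Vg_iff {ℓ q : ℕ} (t u : ℕ) :
    (t, u) ∈ Vg ℓ q ↔
      t < 2*ℓ ∧ u < 2*ℓ ∧ (t + u + 1) % q = (2*ℓ) % q ∧ t ≤ u ∧ t + u + 1 ≠ 2*ℓ := by
  simp only [Vg, Ug, Finset.mem_filter, Finset.mem_product, Finset.mem_range]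
  tauto

lemma set_eq {ℓ q : ℕ} (hℓ : 2 ≤ ℓ) (hq : 1 ≤ q)
    (ht : (Fin ℓ → ℚ) →ₗ[ℚ] ℚ) (hht : ∀ i : Fin ℓ, ht (simpleC ℓ i) = 1) :
    {α | α ∈ rootsC ℓ ∧ ∃ k : ℤ, ht α = (q : ℚ) * k}
      = (fun p : ℕ × ℕ => wvec ℓ p.1 + wvec ℓ p.2) '' ↑(Vg ℓ q) := by
  ext α
  simp only [Set.mem_setOf_eq, Set.mem_image, Finset.mem_coe, Prod.exists]
  constructor
  · rintro ⟨hroot, k, hk⟩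
    rcases hroot with ⟨i, j, hij, hforms⟩ | ⟨i, hforms⟩
    · have hij' : (i:ℕ) < (j:ℕ) := hij
      have hilt := i.isLt
      have hjlt := j.isLt
      rcases hforms with h | h | h | h
      · have hGeq : wvec ℓ (2*ℓ-1-(j:ℕ)) + wvec ℓ (2*ℓ-1-(i:ℕ)) = α := by
          rw [wvec_pos_std ℓ j, wvec_pos_std ℓ i, h]; abel
        exact ⟨_, _, (mem_Vg_iff _ _).mpr ⟨by omega, by omega, (hdiv_iff _ _).mp
          ⟨k, by rw [← ht_G ht hht _ _ (by omega) (by omega), hGeq, hk]⟩, by omega, by omega⟩, hGeq⟩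
      · have hGeq : wvec ℓ ((j:ℕ)) + wvec ℓ (2*ℓ-1-(i:ℕ)) = α := by
          rw [wvec_neg_std ℓ j, wvec_pos_std ℓ i, h]; abel
        exact ⟨_, _, (mem_Vg_iff _ _).mpr ⟨by omega, by omega, (hdiv_iff _ _).mp
          ⟨k, by rw [← ht_G ht hht _ _ (by omega) (by omega), hGeq, hk]⟩, by omega, by omega⟩, hGeq⟩
      · have hGeq : wvec ℓ ((i:ℕ)) + wvec ℓ (2*ℓ-1-(j:ℕ)) = α := by
          rw [wvec_neg_std ℓ i, wvec_pos_std ℓ j, h]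
        exact ⟨_, _, (mem_Vg_iff _ _).mpr ⟨by omega, by omega, (hdiv_iff _ _).mp
          ⟨k, by rw [← ht_G ht hht _ _ (by omega) (by omega), hGeq, hk]⟩, by omega, by omega⟩, hGeq⟩
      · have hGeq : wvec ℓ ((i:ℕ)) + wvec ℓ ((j:ℕ)) = α := by
          rw [wvec_neg_std ℓ i, wvec_neg_std ℓ j, h]; abel
        exact ⟨_, _, (mem_Vg_iff _ _).mpr ⟨by omega, by omega, (hdiv_iff _ _).mp
          ⟨k, by rw [← ht_G ht hht _ _ (by omega) (by omega), hGeq, hk]⟩, by omega, by omega⟩, hGeq⟩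
    · have hilt := i.isLt
      rcases hforms with h | h
      · have hGeq : wvec ℓ (2*ℓ-1-(i:ℕ)) + wvec ℓ (2*ℓ-1-(i:ℕ)) = α := by
          rw [wvec_pos_std ℓ i, h, two_smul]
        exact ⟨_, _, (mem_Vg_iff _ _).mpr ⟨by omega, by omega, (hdiv_iff _ _).mp
          ⟨k, by rw [← ht_G ht hht _ _ (by omega) (by omega), hGeq, hk]⟩, by omega, by omega⟩, hGeq⟩
      · have hGeq : wvec ℓ ((i:ℕ)) + wvec ℓ ((i:ℕ)) = α := by
          rw [wvec_neg_std ℓ i, h, two_smul]; abel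
        exact ⟨_, _, (mem_Vg_iff _ _).mpr ⟨by omega, by omega, (hdiv_iff _ _).mp
          ⟨k, by rw [← ht_G ht hht _ _ (by omega) (by omega), hGeq, hk]⟩, by omega, by omega⟩, hGeq⟩
  · rintro ⟨t, u, hmem, rfl⟩
    obtain ⟨ht2, hu2, hmod, htu, hne⟩ := (mem_Vg_iff t u).mp hmem
    constructor
    · rcases eq_or_lt_of_le htu with heq | hlt
      · subst heq
        rcases lt_or_ge t ℓ with h | h
        · exact Or.inr ⟨⟨t, h⟩, Or.inr (by rw [wvec_lt h, two_smul]; abel)⟩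
        · exact Or.inr ⟨⟨2*ℓ-1-t, by omega⟩, Or.inl (by rw [wvec_ge h ht2, two_smul])⟩
      · rcases lt_or_ge t ℓ with hta | hta <;> rcases lt_or_ge u ℓ with hua | hua
        · exact Or.inl ⟨⟨t, hta⟩, ⟨u, hua⟩, Fin.mk_lt_mk.mpr hlt,
            Or.inr (Or.inr (Or.inr (by rw [wvec_lt hta, wvec_lt hua]; abel)))⟩
        · rcases lt_or_gt_of_ne (show t ≠ 2*ℓ-1-u by omega) with hcmp | hcmp
          · exact Or.inl ⟨⟨t, hta⟩, ⟨2*ℓ-1-u, by omega⟩, Fin.mk_lt_mk.mpr hcmp,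
              Or.inr (Or.inr (Or.inl (by rw [wvec_lt hta, wvec_ge hua hu2])))⟩
          · exact Or.inl ⟨⟨2*ℓ-1-u, by omega⟩, ⟨t, hta⟩, Fin.mk_lt_mk.mpr hcmp,
              Or.inr (Or.inl (by rw [wvec_lt hta, wvec_ge hua hu2]; abel))⟩
        · omega
        · exact Or.inl ⟨⟨2*ℓ-1-u, by omega⟩, ⟨2*ℓ-1-t, by omega⟩, Fin.mk_lt_mk.mpr (by omega),
            Or.inl (by rw [wvec_ge hta ht2, wvec_ge hua hu2]; abel)⟩
    · obtain ⟨k, hk⟩ := (hdiv_iff t u).mpr hmod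
      exact ⟨k, by rw [ht_G ht hht t u ht2 hu2]; exact hk⟩

lemma idset_eq {ℓ q : ℕ} {p : ℕ × ℕ} (hp : p ∈ Vg ℓ q) :
    (Finset.range (2*ℓ)).filter (fun s => 0 < vval ℓ s (wvec ℓ p.1 + wvec ℓ p.2))
      = {p.1, p.2} := by
  obtain ⟨t, u⟩ := p
  obtain ⟨ht2, hu2, hmod, htu, hne⟩ := (mem_Vg_iff t u).mp hp
  ext s
  simp only [Finset.mem_filter, Finset.mem_range, Finset.mem_insert, Finset.mem_singleton]
  constructor
  · rintro ⟨hs, hpos⟩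
    by_contra hcon
    push_neg at hcon
    obtain ⟨hst, hsu⟩ := hcon
    rw [vval_add, vval_wvec ℓ s t hs ht2, vval_wvec ℓ s u hs hu2,
      if_neg (show t ≠ s by omega), if_neg (show u ≠ s by omega)] at hpos
    split_ifs at hpos <;> linarith
  · intro hsu
    rcases hsu with rfl | rfl
    · refine ⟨by omega, ?_⟩
      rw [vval_add, vval_wvec ℓ s s (by omega) ht2, vval_wvec ℓ s u (by omega) hu2,
        if_pos rfl]
      by_cases h : u = s
      · rw [if_pos h]; norm_num
      · rw [if_neg h, if_neg (by omega)]; norm_num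
    · refine ⟨by omega, ?_⟩
      rw [vval_add, vval_wvec ℓ s t (by omega) ht2, vval_wvec ℓ s s (by omega) hu2]
      by_cases h : t = s
      · rw [if_pos h, if_pos rfl]; norm_num
      · rw [if_neg h, if_neg (by omega), if_pos rfl]; norm_num

lemma G_injOn {ℓ q : ℕ} :
    Set.InjOn (fun p : ℕ × ℕ => wvec ℓ p.1 + wvec ℓ p.2) ↑(Vg ℓ q) := by
  intro p hp p' hp' hGeq
  rw [Finset.mem_coe] at hp hp'
  have h1 := idset_eq hp
  have h2 := idset_eq hp'
  simp only at hGeq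
  rw [hGeq] at h1
  have hset : ({p.1, p.2} : Finset ℕ) = {p'.1, p'.2} := h1.symm.trans h2
  have e1 : p.1 = p'.1 ∨ p.1 = p'.2 := by
    have := Finset.ext_iff.mp hset p.1
    simpa using this.mp (by simp)
  have e2 : p.2 = p'.1 ∨ p.2 = p'.2 := by
    have := Finset.ext_iff.mp hset p.2
    simpa using this.mp (by simp)
  have e3 : p'.1 = p.1 ∨ p'.1 = p.2 := by
    have := Finset.ext_iff.mp hset p'.1
    simpa using this.mpr (by simp)
  have e4 : p'.2 = p.1 ∨ p'.2 = p.2 := by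
    have := Finset.ext_iff.mp hset p'.2
    simpa using this.mpr (by simp)
  have htu := ((mem_Vg_iff p.1 p.2).mp hp).2.2.2.1
  have htu' := ((mem_Vg_iff p'.1 p'.2).mp hp').2.2.2.1
  exact Prod.ext (by omega) (by omega)

end St2

/-- Let `ℓ ≥ 2` and `q ≥ 1` be integers, and write `2ℓ = q·m₀ + s₀` with `m₀, s₀`
integers, `0 ≤ s₀ ≤ q−1`.  Set `K = m₀²(q−s₀) + (m₀+1)²·s₀` and set `c = m₀` if `q` is odd and
`m₀` is even, `c = m₀+1` if `q` and `m₀` are both odd, and `c = 0` if `q` is even.  Then the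
number of roots `α ∈ Δ(Cₗ)` with `q` dividing `ht(α)` equals `(K + c)/2 − ℓ`.  The height is
computed against any linear functional taking the value `1` on each simple root of `Cₗ`. -/
theorem statement2 (ℓ q : ℕ) (hℓ : 2 ≤ ℓ) (hq : 1 ≤ q)
    (m₀ s₀ K c : ℤ)
    (hdecomp : (2 * ℓ : ℤ) = (q : ℤ) * m₀ + s₀) (hs0 : 0 ≤ s₀) (hs1 : s₀ ≤ (q : ℤ) - 1)
    (hK : K = m₀ ^ 2 * ((q : ℤ) - s₀) + (m₀ + 1) ^ 2 * s₀)
    (hc : (Odd q ∧ Even m₀ ∧ c = m₀) ∨ (Odd q ∧ Odd m₀ ∧ c = m₀ + 1) ∨ (Even q ∧ c = 0))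
    (ht : (Fin ℓ → ℚ) →ₗ[ℚ] ℚ) (hht : ∀ i : Fin ℓ, ht (simpleC ℓ i) = 1) :
    ({α | α ∈ rootsC ℓ ∧ ∃ k : ℤ, ht α = (q : ℚ) * k}.ncard : ℚ) =
      ((K : ℚ) + (c : ℚ)) / 2 - (ℓ : ℚ) := by
  classical
  have hqz : (1:ℤ) ≤ (q:ℤ) := by exact_mod_cast hq
  have hlz : (2:ℤ) ≤ (ℓ:ℤ) := by exact_mod_cast hℓ
  have hm0 : 0 ≤ m₀ := by
    by_contra hneg
    push_neg at hneg
    have h1 : (q:ℤ) * m₀ ≤ (q:ℤ) * (-1) :=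
      mul_le_mul_of_nonneg_left (by omega) (by positivity)
    linarith
  set mn := m₀.toNat with hmn
  set sn := s₀.toNat with hsn
  have hmz : (mn:ℤ) = m₀ := Int.toNat_of_nonneg hm0
  have hsz : (sn:ℤ) = s₀ := Int.toNat_of_nonneg hs0
  have hdecn : 2*ℓ = q*mn + sn := by
    have h : (2*ℓ : ℤ) = ((q*mn + sn : ℕ) : ℤ) := by push_cast [hmz, hsz]; linarith [hdecomp]
    exact_mod_cast h
  have hsn_lt : sn < q := by omega
  have hq0 : 0 < q := hq
  have hU : ((St2.Ug ℓ q).card : ℤ) = K := by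
    have h1 := St2.U_card ℓ q mn sn hq0 hsn_lt hdecn
    have h2 : ((St2.Ug ℓ q).card : ℤ) = ((2*ℓ*mn + mn*sn + sn : ℕ) : ℤ) := by exact_mod_cast h1
    push_cast [hmz, hsz] at h2
    linear_combination h2 + m₀ * hdecomp - hK
  have hD : ((St2.Dg ℓ q).card : ℤ) = c := by
    rcases hc with ⟨hqo, hme, hcv⟩ | ⟨hqo, hmo, hcv⟩ | ⟨hqe, hcv⟩
    · have h1 := St2.Dg_card_odd ℓ q mn sn hq0 (Nat.odd_iff.mp hqo) hsn_lt hdecn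
      obtain ⟨r, hr⟩ := hme
      have h2 : 2*((mn+1)/2) = mn := by omega
      rw [h1, h2]
      rw [hcv]
      exact hmz
    · have h1 := St2.Dg_card_odd ℓ q mn sn hq0 (Nat.odd_iff.mp hqo) hsn_lt hdecn
      obtain ⟨r, hr⟩ := hmo
      have h2 : 2*((mn+1)/2) = mn + 1 := by omega
      rw [h1, h2, hcv]
      push_cast [hmz]
      ring
    · rw [St2.Dg_card_even ℓ q (Nat.even_iff.mp hqe), hcv]
      rfl
  have hKc : K + c = 2*(((St2.Vg ℓ q).card + ℓ : ℕ) : ℤ) := by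
    have h1 := St2.U_split ℓ q
    have h2 := St2.V_split ℓ q
    omega
  have hseteq := St2.set_eq hℓ hq ht hht
  rw [hseteq, Set.ncard_image_of_injOn St2.G_injOn, Set.ncard_coe_finset]
  have h3 : ((K:ℚ) + c) = 2*(((St2.Vg ℓ q).card : ℚ) + ℓ) := by
    have h4 : ((K + c : ℤ) : ℚ) = ((2*(((St2.Vg ℓ q).card + ℓ : ℕ) : ℤ) : ℤ) : ℚ) := by
      exact_mod_cast congrArg (fun z : ℤ => (z : ℚ)) hKc
    push_cast at h4
    linarith
  linarith
end
end

section
/- Let ℓ ≥ 2 and q ≥ 1 be integers, set n = 2ℓ+1, and write n = q·m₀ + s₀ with m₀, s₀ integers, 0 ≤ s₀ ≤ q−1. Set K = m₀²(q−s₀) + (m₀+1)²·s₀ and set c = m₀ if q and m₀ are both odd, c = m₀+1 if q is odd and m₀ is even, and c = 2m₀+1 if q is even. Then the number of roots α ∈ Δ(B_ℓ) with q dividing ht(α) equals (K − c)/2 − ℓ. -/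
/-!
Index the weights of the vector representation of `so(2ℓ+1)` by their heights `u ∈ [-ℓ, ℓ]`:
the weight of height `ℓ - i` is `eᵢ`, that of height `-u` is minus that of height `u`, and that
of height `0` is `0`. The roots of `Bₗ` are then exactly the sums `ε_a + ε_b` with `b < a` and
`a + b ≠ 0`, each obtained once, and `ht (ε_a + ε_b) = a + b`.

Now count the pairs `(a, b) ∈ [-ℓ, ℓ]²` with `q ∣ a + b`. Reflecting `b`, they are the pairs of a
box of side `2ℓ + 1 = q m₀ + s₀` that are congruent mod `q`; `s₀` residues occur `m₀ + 1` times and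
the others `m₀` times, so there are `K` of them. The swap `(a, b) ↦ (b, a)` matches those with
`a < b` and with `b < a`; the diagonal contributes the `c` integers `u` with `q ∣ 2u`; and exactly
`ℓ` pairs with `b < a` have `a + b = 0`. Hence `K = 2 · #roots + 2ℓ + c`.
-/

noncomputable section

open Finset

theorem ht_stdVec {ℓ : ℕ} (ht : (Fin ℓ → ℚ) →ₗ[ℚ] ℚ) (hht : ∀ i : Fin ℓ, ht (simpleB ℓ i) = 1)
    (i : Fin ℓ) : ht (stdVec ℓ i) = ℓ - (i : ℕ) := by
  obtain ⟨k, hk⟩ : ∃ k, ℓ = i + 1 + k := ⟨ℓ - (i + 1), by omega⟩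
  induction k generalizing i with
  | zero =>
    have h := hht i
    rw [simpleB, dif_neg (by omega)] at h
    have hℓ : (ℓ : ℚ) = (i : ℕ) + 1 := by exact_mod_cast hk
    rw [h, hℓ]
    ring
  | succ k ih =>
    have hi : (i : ℕ) + 1 < ℓ := by omega
    have h := hht i
    rw [simpleB, dif_pos hi, map_sub, ih ⟨i + 1, hi⟩ (by simp only; omega)] at h
    push_cast at h
    linarith

/-- The weight of height `u` of the vector representation of `so(2ℓ+1)`, for `|u| ≤ ℓ`. -/
def weight (ℓ : ℕ) (u : ℤ) (i : Fin ℓ) : ℚ :=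
  if u = ℓ - (i : ℕ) then 1 else if u = (i : ℕ) - ℓ then -1 else 0

section Weights

variable {ℓ : ℕ}

theorem weight_zero : weight ℓ 0 = 0 := by
  funext i
  have := i.isLt
  simp only [weight, Pi.zero_apply]
  split_ifs <;> first | rfl | omega

theorem weight_neg (u : ℤ) : weight ℓ (-u) = -weight ℓ u := by
  funext i
  have := i.isLt
  simp only [weight, Pi.neg_apply]
  split_ifs <;> first | omega | norm_num

theorem weight_eq_stdVec (i : Fin ℓ) : weight ℓ (ℓ - (i : ℕ)) = stdVec ℓ i := by
  funext j
  simp only [weight, stdVec, Pi.single_apply, Fin.ext_iff]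
  split_ifs <;> first | rfl | omega

theorem exists_weight_eq_stdVec {u : ℤ} (hu : 0 < u) (huℓ : u ≤ ℓ) :
    ∃ i : Fin ℓ, ℓ - (i : ℕ) = u ∧ weight ℓ u = stdVec ℓ i := by
  refine ⟨⟨ℓ - u.toNat, by omega⟩, by simp only; omega, ?_⟩
  rw [← weight_eq_stdVec]
  congr 1
  simp only
  omega

theorem exists_weight_eq_pm_stdVec {u : ℤ} (hu : u ≠ 0) (hℓu : -ℓ ≤ u) (huℓ : u ≤ ℓ) :
    ∃ i : Fin ℓ, (ℓ - (i : ℕ) = u ∧ weight ℓ u = stdVec ℓ i) ∨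
      (ℓ - (i : ℕ) = -u ∧ weight ℓ u = -stdVec ℓ i) := by
  rcases hu.lt_or_gt with hneg | hpos
  · obtain ⟨i, hi, hw⟩ := exists_weight_eq_stdVec (ℓ := ℓ) (neg_pos.2 hneg) (by omega)
    refine ⟨i, Or.inr ⟨hi, ?_⟩⟩
    rw [← hw, ← weight_neg, neg_neg]
  · obtain ⟨i, hi, hw⟩ := exists_weight_eq_stdVec (ℓ := ℓ) hpos huℓ
    exact ⟨i, Or.inl ⟨hi, hw⟩⟩

theorem ht_weight (ht : (Fin ℓ → ℚ) →ₗ[ℚ] ℚ) (hht : ∀ i : Fin ℓ, ht (simpleB ℓ i) = 1)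
    {u : ℤ} (hℓu : -ℓ ≤ u) (huℓ : u ≤ ℓ) : ht (weight ℓ u) = u := by
  rcases eq_or_ne u 0 with rfl | hu
  · simp [weight_zero]
  obtain ⟨i, ⟨hi, hw⟩ | ⟨hi, hw⟩⟩ := exists_weight_eq_pm_stdVec hu hℓu huℓ
  · rw [hw, ht_stdVec ht hht]
    exact_mod_cast hi
  · rw [hw, map_neg, ht_stdVec ht hht, neg_eq_iff_eq_neg]
    exact_mod_cast hi

theorem weight_add_weight_apply_eq_one_iff {a b : ℤ} (hab : a ≠ b) (hab' : a + b ≠ 0)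
    (i : Fin ℓ) : (weight ℓ a + weight ℓ b) i = 1 ↔ ℓ - (i : ℕ) = a ∨ ℓ - (i : ℕ) = b := by
  have := i.isLt
  simp only [Pi.add_apply, weight]
  split_ifs <;> norm_num <;> omega

end Weights

def rootPairs (ℓ : ℕ) : Finset (ℤ × ℤ) :=
  (Icc (-ℓ : ℤ) ℓ ×ˢ Icc (-ℓ : ℤ) ℓ).filter fun p => p.2 < p.1 ∧ p.1 + p.2 ≠ 0

section RootPairs

variable {ℓ : ℕ}

theorem mem_rootPairs {p : ℤ × ℤ} :
    p ∈ rootPairs ℓ ↔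
      (-ℓ ≤ p.1 ∧ p.1 ≤ ℓ) ∧ (-ℓ ≤ p.2 ∧ p.2 ≤ ℓ) ∧ p.2 < p.1 ∧ p.1 + p.2 ≠ 0 := by
  simp only [rootPairs, mem_filter, mem_product, mem_Icc, and_assoc]

theorem pm_stdVec_add_mem_rootsB {i j : Fin ℓ} (hij : i ≠ j) {x y : Fin ℓ → ℚ}
    (hx : x = stdVec ℓ i ∨ x = -stdVec ℓ i) (hy : y = stdVec ℓ j ∨ y = -stdVec ℓ j) :
    x + y ∈ rootsB ℓ := by
  wlog h : i < j generalizing i j x y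
  · rw [add_comm]
    exact this hij.symm hy hx (lt_of_le_of_ne (not_lt.1 h) hij.symm)
  left
  refine ⟨i, j, h, ?_⟩
  rcases hx with rfl | rfl <;> rcases hy with rfl | rfl <;> simp [sub_eq_add_neg]

theorem weight_add_weight_mem_rootsB {p : ℤ × ℤ} (hp : p ∈ rootPairs ℓ) :
    weight ℓ p.1 + weight ℓ p.2 ∈ rootsB ℓ := by
  obtain ⟨⟨ha₁, ha₂⟩, ⟨hb₁, hb₂⟩, hba, hab⟩ := mem_rootPairs.1 hp
  rcases eq_or_ne p.2 0 with hb | hb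
  · obtain ⟨i, hi⟩ := exists_weight_eq_pm_stdVec (ℓ := ℓ) (u := p.1) (by omega) ha₁ ha₂
    rw [hb, weight_zero, add_zero]
    exact Or.inr ⟨i, hi.imp And.right And.right⟩
  rcases eq_or_ne p.1 0 with ha | ha
  · obtain ⟨i, hi⟩ := exists_weight_eq_pm_stdVec (ℓ := ℓ) hb hb₁ hb₂
    rw [ha, weight_zero, zero_add]
    exact Or.inr ⟨i, hi.imp And.right And.right⟩
  obtain ⟨i, hi⟩ := exists_weight_eq_pm_stdVec (ℓ := ℓ) ha ha₁ ha₂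
  obtain ⟨j, hj⟩ := exists_weight_eq_pm_stdVec (ℓ := ℓ) hb hb₁ hb₂
  refine pm_stdVec_add_mem_rootsB ?_ (hi.imp And.right And.right) (hj.imp And.right And.right)
  rintro rfl
  omega

theorem rootsB_eq_image :
    rootsB ℓ = (fun p : ℤ × ℤ => weight ℓ p.1 + weight ℓ p.2) '' rootPairs ℓ := by
  refine Set.Subset.antisymm ?_ fun _ ⟨p, hp, hpα⟩ => hpα ▸ weight_add_weight_mem_rootsB hp
  have mk (a b : ℤ) (hp : (a, b) ∈ rootPairs ℓ) {α : Fin ℓ → ℚ}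
      (hα : α = weight ℓ a + weight ℓ b) :
      α ∈ (fun p : ℤ × ℤ => weight ℓ p.1 + weight ℓ p.2) '' rootPairs ℓ :=
    ⟨(a, b), hp, hα.symm⟩
  rintro α (⟨i, j, hij, rfl | rfl | rfl | rfl⟩ | ⟨i, rfl | rfl⟩)
  all_goals have := i.isLt
  all_goals try have := j.isLt; rw [Fin.lt_def] at hij
  · exact mk (ℓ - (i : ℕ)) (ℓ - (j : ℕ)) (mem_rootPairs.2 (by omega))
      (by rw [weight_eq_stdVec, weight_eq_stdVec])
  · exact mk (ℓ - (i : ℕ)) (-(ℓ - (j : ℕ))) (mem_rootPairs.2 (by omega))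
      (by rw [weight_neg, weight_eq_stdVec, weight_eq_stdVec, sub_eq_add_neg])
  · exact mk (ℓ - (j : ℕ)) (-(ℓ - (i : ℕ))) (mem_rootPairs.2 (by omega))
      (by rw [weight_neg, weight_eq_stdVec, weight_eq_stdVec, add_comm])
  · exact mk (-(ℓ - (j : ℕ))) (-(ℓ - (i : ℕ))) (mem_rootPairs.2 (by omega))
      (by rw [weight_neg, weight_neg, weight_eq_stdVec, weight_eq_stdVec]; abel)
  · exact mk (ℓ - (i : ℕ)) 0 (mem_rootPairs.2 (by omega))
      (by rw [weight_eq_stdVec, weight_zero, add_zero])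
  · exact mk 0 (-(ℓ - (i : ℕ))) (mem_rootPairs.2 (by omega))
      (by rw [weight_neg, weight_eq_stdVec, weight_zero, zero_add])

theorem mem_pair_iff_of_weight_add_weight_eq {a b a' b' x : ℤ} (hab : a ≠ b) (hab' : a + b ≠ 0)
    (ha'b' : a' ≠ b') (ha'b'' : a' + b' ≠ 0)
    (h : weight ℓ a + weight ℓ b = weight ℓ a' + weight ℓ b') (hx : 0 < x) (hxℓ : x ≤ ℓ) :
    x = a ∨ x = b ↔ x = a' ∨ x = b' := by
  obtain ⟨i, rfl, -⟩ := exists_weight_eq_stdVec (ℓ := ℓ) hx hxℓ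
  rw [← weight_add_weight_apply_eq_one_iff hab hab',
    ← weight_add_weight_apply_eq_one_iff ha'b' ha'b'', h]

theorem injOn_weight_add_weight :
    Set.InjOn (fun p : ℤ × ℤ => weight ℓ p.1 + weight ℓ p.2) (rootPairs ℓ) := by
  rintro ⟨a, b⟩ hp ⟨a', b'⟩ hp' (h : weight ℓ a + weight ℓ b = weight ℓ a' + weight ℓ b')
  obtain ⟨⟨ha₁, ha₂⟩, ⟨hb₁, hb₂⟩, hba, hab⟩ := mem_rootPairs.1 hp
  obtain ⟨⟨ha₁', ha₂'⟩, ⟨hb₁', hb₂'⟩, hba', hab'⟩ := mem_rootPairs.1 hp'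
  have hneg : weight ℓ (-a) + weight ℓ (-b) = weight ℓ (-a') + weight ℓ (-b') := by
    simp only [weight_neg, ← neg_add, h]
  have mem (x : ℤ) (hx : x ≠ 0) (hℓx : -ℓ ≤ x) (hxℓ : x ≤ ℓ) :
      x = a ∨ x = b ↔ x = a' ∨ x = b' := by
    rcases hx.lt_or_gt with hx | hx
    · have := mem_pair_iff_of_weight_add_weight_eq (x := -x) (by omega) (by omega) (by omega)
        (by omega) hneg (by omega) (by omega)
      omega
    · exact mem_pair_iff_of_weight_add_weight_eq (by omega) hab (by omega) hab' h hx hxℓ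
  -- `{a, b} \ {0}` determines `(a, b)` once `b < a`.
  have := mem a
  have := mem b
  have := mem a'
  have := mem b'
  ext <;> omega

theorem setOf_dvd_ht_eq_image (ht : (Fin ℓ → ℚ) →ₗ[ℚ] ℚ)
    (hht : ∀ i : Fin ℓ, ht (simpleB ℓ i) = 1) (q : ℕ) :
    {α | α ∈ rootsB ℓ ∧ ∃ k : ℤ, ht α = q * k} =
      (fun p : ℤ × ℤ => weight ℓ p.1 + weight ℓ p.2) ''
        ↑((rootPairs ℓ).filter fun p => (q : ℤ) ∣ p.1 + p.2) := by
  have ht_root {p : ℤ × ℤ} (hp : p ∈ rootPairs ℓ) :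
      ht (weight ℓ p.1 + weight ℓ p.2) = ((p.1 + p.2 : ℤ) : ℚ) := by
    obtain ⟨⟨ha₁, ha₂⟩, ⟨hb₁, hb₂⟩, -⟩ := mem_rootPairs.1 hp
    rw [map_add, ht_weight ht hht ha₁ ha₂, ht_weight ht hht hb₁ hb₂, Int.cast_add]
  rw [rootsB_eq_image, coe_filter]
  ext α
  simp only [Set.mem_ofPred_eq, Set.mem_image, dvd_def]
  constructor
  · rintro ⟨⟨p, hp, rfl⟩, k, hk⟩
    exact ⟨p, ⟨hp, k, by rw [ht_root hp] at hk; exact_mod_cast hk⟩, rfl⟩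
  · rintro ⟨p, ⟨hp, k, hk⟩, rfl⟩
    exact ⟨⟨p, hp, rfl⟩, k, by rw [ht_root hp, hk]; push_cast; rfl⟩

end RootPairs

theorem card_range_filter_mod_eq (N : ℕ) {q r : ℕ} (hq : 0 < q) (hr : r < q) :
    #{x ∈ range N | x % q = r} = N / q + if r < N % q then 1 else 0 := by
  have h := Nat.count_modEq_card N hq r
  simp only [Nat.count_eq_card_filter_range, Nat.ModEq, Nat.mod_eq_of_lt hr] at h
  exact h

theorem card_range_product_filter_modEq (N : ℕ) {q : ℕ} (hq : 0 < q) :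
    #{p ∈ range N ×ˢ range N | p.1 ≡ p.2 [MOD q]} =
      (N / q) ^ 2 * (q - N % q) + (N / q + 1) ^ 2 * (N % q) := by
  have fiber (r : ℕ) (hr : r ∈ range q) :
      #{p ∈ {p ∈ range N ×ˢ range N | p.1 ≡ p.2 [MOD q]} | p.1 % q = r} =
        (N / q + if r < N % q then 1 else 0) ^ 2 := by
    rw [← card_range_filter_mod_eq N hq (mem_range.1 hr), sq, ← card_product]
    congr 1
    ext ⟨x, y⟩
    simp only [mem_filter, mem_product]
    constructor
    · rintro ⟨⟨⟨hx, hy⟩, hxy⟩, rfl⟩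
      exact ⟨⟨hx, rfl⟩, hy, hxy.symm⟩
    · rintro ⟨⟨hx, rfl⟩, hy, hyx⟩
      exact ⟨⟨⟨hx, hy⟩, hyx.symm⟩, rfl⟩
  have split : ∑ r ∈ range q, (N / q + if r < N % q then 1 else 0) ^ 2 =
      ∑ _r ∈ range (N % q), (N / q + 1) ^ 2 + ∑ _r ∈ Ico (N % q) q, (N / q) ^ 2 := by
    rw [← sum_range_add_sum_Ico _ (Nat.mod_lt N hq).le]
    congr 1 <;> refine sum_congr rfl fun r hr => ?_
    · rw [if_pos (mem_range.1 hr)]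
    · rw [if_neg (not_lt.2 (mem_Ico.1 hr).1), add_zero]
  rw [card_eq_sum_card_fiberwise (f := fun p => p.1 % q) (t := range q)
      fun p _ => mem_range.2 (Nat.mod_lt _ hq), sum_congr rfl fiber, split]
  simp only [sum_const, card_range, Nat.card_Ico, smul_eq_mul]
  ring

theorem card_Icc_product_filter_dvd_add_eq_card_range_product (ℓ q : ℕ) :
    #{p ∈ Icc (-ℓ : ℤ) ℓ ×ˢ Icc (-ℓ : ℤ) ℓ | (q : ℤ) ∣ p.1 + p.2} =
      #{p ∈ range (2 * ℓ + 1) ×ˢ range (2 * ℓ + 1) | p.1 ≡ p.2 [MOD q]} := by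
  refine card_nbij' (fun p => ((p.1 + ℓ).toNat, (ℓ - p.2).toNat))
    (fun p => ((p.1 : ℤ) - ℓ, ℓ - p.2)) ?_ ?_ ?_ ?_ <;> rintro ⟨a, b⟩
  all_goals simp only [coe_filter, mem_product, mem_Icc, mem_range, Set.mem_ofPred_eq,
    Nat.modEq_iff_dvd, Prod.mk.injEq]
  · rintro ⟨⟨⟨ha₁, ha₂⟩, hb₁, hb₂⟩, hab⟩
    refine ⟨⟨by omega, by omega⟩, ?_⟩
    rwa [show ((ℓ - b).toNat : ℤ) - (a + ℓ).toNat = -(a + b) by omega, dvd_neg]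
  · rintro ⟨⟨ha, hb⟩, hab⟩
    refine ⟨⟨⟨by omega, by omega⟩, by omega, by omega⟩, ?_⟩
    rwa [show (a : ℤ) - ℓ + (ℓ - b) = -((b : ℤ) - a) by ring, dvd_neg]
  · intro hab
    omega
  · intro hab
    omega

theorem card_Icc_product_filter_dvd_add {ℓ q : ℕ} {m s : ℤ}
    (hN : (2 * ℓ + 1 : ℤ) = q * m + s) (hs₀ : 0 ≤ s) (hsq : s < q) :
    (#{p ∈ Icc (-ℓ : ℤ) ℓ ×ˢ Icc (-ℓ : ℤ) ℓ | (q : ℤ) ∣ p.1 + p.2} : ℤ) =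
      m ^ 2 * (q - s) + (m + 1) ^ 2 * s := by
  have hq : 0 < q := by omega
  obtain ⟨hm, hs⟩ := (Int.ediv_emod_unique (a := 2 * ℓ + 1) (q := m) (by omega : (0 : ℤ) < q)).2
    ⟨by linarith, hs₀, hsq⟩
  rw [card_Icc_product_filter_dvd_add_eq_card_range_product, card_range_product_filter_modEq _ hq]
  push_cast [Nat.cast_sub (Nat.mod_lt _ hq).le]
  rw [hm, hs]

theorem card_Icc_filter_dvd {n r : ℤ} (hr : 0 < r) (hn : 0 ≤ n) :
    (#{x ∈ Icc (-n) n | r ∣ x} : ℤ) = 2 * (n / r) + 1 := by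
  have hdiv : {x ∈ Icc (-n) n | r ∣ x} =
      (Icc (-(n / r)) (n / r)).map ⟨(· * r), mul_left_injective₀ hr.ne'⟩ := by
    ext x
    simp only [mem_filter, mem_Icc, mem_map, Function.Embedding.coeFn_mk,
      dvd_iff_exists_eq_mul_left, neg_le, Int.le_ediv_iff_mul_le hr]
    constructor
    · rintro ⟨⟨h₁, h₂⟩, t, rfl⟩
      exact ⟨t, ⟨by linarith, h₂⟩, rfl⟩
    · rintro ⟨t, ⟨h₁, h₂⟩, rfl⟩
      exact ⟨⟨by linarith, h₂⟩, t, rfl⟩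
  have := Int.ediv_nonneg hn hr.le
  rw [hdiv, card_map, Int.card_Icc, Int.toNat_of_nonneg (by omega)]
  ring

theorem card_Icc_filter_dvd_two_mul {ℓ q : ℕ} {m s c : ℤ}
    (hN : (2 * ℓ + 1 : ℤ) = q * m + s) (hs₀ : 0 ≤ s) (hsq : s ≤ q - 1)
    (hc : (Odd q ∧ Odd m ∧ c = m) ∨ (Odd q ∧ Even m ∧ c = m + 1) ∨ (Even q ∧ c = 2 * m + 1)) :
    (#{u ∈ Icc (-ℓ : ℤ) ℓ | (q : ℤ) ∣ 2 * u} : ℤ) = c := by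
  have hq : (0 : ℤ) < q := by omega
  rcases hc with ⟨hq₂, ⟨k, rfl⟩, rfl⟩ | ⟨hq₂, ⟨k, rfl⟩, rfl⟩ | ⟨⟨p, rfl⟩, rfl⟩
  · have hcop : IsCoprime (q : ℤ) 2 := by simpa using (Odd.coprime_two_right hq₂).isCoprime
    rw [filter_congr fun u _ => ⟨hcop.dvd_of_dvd_mul_left, (Dvd.dvd.mul_left · 2)⟩,
      card_Icc_filter_dvd hq (by omega),
      (Int.ediv_eq_iff_of_pos hq).2 (by constructor <;> linarith)]
  · have hcop : IsCoprime (q : ℤ) 2 := by simpa using (Odd.coprime_two_right hq₂).isCoprime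
    rw [filter_congr fun u _ => ⟨hcop.dvd_of_dvd_mul_left, (Dvd.dvd.mul_left · 2)⟩,
      card_Icc_filter_dvd hq (by omega),
      (Int.ediv_eq_iff_of_pos hq).2 (by constructor <;> linarith)]
    ring
  · have hp : (0 : ℤ) < p := by omega
    push_cast at hN hq hsq ⊢
    rw [filter_congr fun u _ => by rw [← two_mul, mul_dvd_mul_iff_left two_ne_zero],
      card_Icc_filter_dvd hp (by omega),
      (Int.ediv_eq_iff_of_pos hp).2 (by constructor <;> linarith)]

theorem card_filter_lt_eq_card_filter_gt {α : Type*} [LinearOrder α] {s : Finset (α × α)}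
    (hs : ∀ p ∈ s, p.swap ∈ s) : #{p ∈ s | p.1 < p.2} = #{p ∈ s | p.2 < p.1} := by
  refine card_nbij' Prod.swap Prod.swap ?_ ?_ (fun p _ => p.swap_swap) (fun p _ => p.swap_swap) <;>
  · intro p hp
    simp only [coe_filter, Set.mem_ofPred_eq, Prod.fst_swap, Prod.snd_swap] at hp ⊢
    exact ⟨hs p hp.1, hp.2⟩

theorem card_eq_card_filter_gt_add_card_filter_lt_add_card_filter_eq {α : Type*} [LinearOrder α]
    (s : Finset (α × α)) :
    #s = #{p ∈ s | p.2 < p.1} + #{p ∈ s | p.1 < p.2} + #{p ∈ s | p.1 = p.2} := by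
  simp only [card_eq_sum_ones, sum_filter, ← sum_add_distrib]
  refine sum_congr rfl fun p _ => ?_
  rcases lt_trichotomy p.1 p.2 with h | h | h
  · simp [h, h.ne, h.not_gt]
  · simp [h]
  · simp [h, h.ne', h.not_gt]

theorem card_Icc_product_filter_dvd_add_filter_eq (ℓ q : ℕ) :
    #{p ∈ {p ∈ Icc (-ℓ : ℤ) ℓ ×ˢ Icc (-ℓ : ℤ) ℓ | (q : ℤ) ∣ p.1 + p.2} | p.1 = p.2} =
      #{u ∈ Icc (-ℓ : ℤ) ℓ | (q : ℤ) ∣ 2 * u} := by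
  refine card_nbij' Prod.fst (fun u => (u, u)) ?_ ?_ ?_ ?_
  · rintro ⟨a, b⟩ hp
    simp only [coe_filter, mem_filter, mem_product, Set.mem_ofPred_eq] at hp ⊢
    obtain ⟨⟨⟨ha, -⟩, hab⟩, rfl⟩ := hp
    exact ⟨ha, two_mul a ▸ hab⟩
  · intro u hu
    simp only [coe_filter, mem_filter, mem_product, Set.mem_ofPred_eq] at hu ⊢
    exact ⟨⟨⟨hu.1, hu.1⟩, two_mul u ▸ hu.2⟩, trivial⟩
  · rintro ⟨a, b⟩ hp
    simp only [coe_filter, mem_filter, Set.mem_ofPred_eq] at hp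
    rw [hp.2]
  · exact fun _ _ => rfl

theorem card_Icc_product_filter_lt_add_eq_zero (ℓ : ℕ) :
    #{p ∈ Icc (-ℓ : ℤ) ℓ ×ˢ Icc (-ℓ : ℤ) ℓ | p.2 < p.1 ∧ p.1 + p.2 = 0} = ℓ := by
  refine (card_nbij' (t := Icc (1 : ℤ) ℓ) Prod.fst (fun u => (u, -u)) ?_ ?_ ?_ ?_).trans
    (by simp)
  · rintro ⟨a, b⟩ hp
    simp only [coe_filter, mem_product, mem_Icc, Set.mem_ofPred_eq, coe_Icc, Set.mem_Icc] at hp ⊢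
    omega
  · intro u hu
    simp only [coe_filter, mem_product, mem_Icc, Set.mem_ofPred_eq, coe_Icc, Set.mem_Icc] at hu ⊢
    omega
  · rintro ⟨a, b⟩ hp
    simp only [coe_filter, Set.mem_ofPred_eq, Prod.mk.injEq, true_and] at hp ⊢
    omega
  · exact fun _ _ => rfl

theorem card_Icc_product_filter_dvd_add_eq_two_mul_rootPairs (ℓ q : ℕ) :
    #{p ∈ Icc (-ℓ : ℤ) ℓ ×ˢ Icc (-ℓ : ℤ) ℓ | (q : ℤ) ∣ p.1 + p.2} =
      2 * #{p ∈ rootPairs ℓ | (q : ℤ) ∣ p.1 + p.2} + 2 * ℓ +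
        #{u ∈ Icc (-ℓ : ℤ) ℓ | (q : ℤ) ∣ 2 * u} := by
  set S := {p ∈ Icc (-ℓ : ℤ) ℓ ×ˢ Icc (-ℓ : ℤ) ℓ | (q : ℤ) ∣ p.1 + p.2}
  have hswap : #{p ∈ S | p.1 < p.2} = #{p ∈ S | p.2 < p.1} :=
    card_filter_lt_eq_card_filter_gt fun p hp => by
      simp only [S, mem_filter, mem_product, Prod.fst_swap, Prod.snd_swap] at hp ⊢
      exact ⟨hp.1.symm, add_comm p.1 p.2 ▸ hp.2⟩
  have hlt : #{p ∈ S | p.2 < p.1} = #{p ∈ rootPairs ℓ | (q : ℤ) ∣ p.1 + p.2} +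
      #{p ∈ Icc (-ℓ : ℤ) ℓ ×ˢ Icc (-ℓ : ℤ) ℓ | p.2 < p.1 ∧ p.1 + p.2 = 0} := by
    simp only [S, rootPairs, filter_filter, card_filter, ← sum_add_distrib]
    refine sum_congr rfl fun p _ => ?_
    by_cases hd : (q : ℤ) ∣ p.1 + p.2
    · simp only [hd, true_and, and_true]
      split_ifs <;> omega
    · have : p.1 + p.2 ≠ 0 := fun h => hd (h ▸ dvd_zero _)
      simp only [hd, false_and, and_false, ↓reduceIte]
      split_ifs <;> omega
  rw [card_eq_card_filter_gt_add_card_filter_lt_add_card_filter_eq S, hswap, hlt,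
    card_Icc_product_filter_dvd_add_filter_eq, card_Icc_product_filter_lt_add_eq_zero]
  ring

theorem statement3_general (ℓ q : ℕ)
    (m₀ s₀ K c : ℤ)
    (hdecomp : (2 * ℓ + 1 : ℤ) = (q : ℤ) * m₀ + s₀) (hs0 : 0 ≤ s₀) (hs1 : s₀ ≤ (q : ℤ) - 1)
    (hK : K = m₀ ^ 2 * ((q : ℤ) - s₀) + (m₀ + 1) ^ 2 * s₀)
    (hc : (Odd q ∧ Odd m₀ ∧ c = m₀) ∨ (Odd q ∧ Even m₀ ∧ c = m₀ + 1) ∨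
          (Even q ∧ c = 2 * m₀ + 1))
    (ht : (Fin ℓ → ℚ) →ₗ[ℚ] ℚ) (hht : ∀ i : Fin ℓ, ht (simpleB ℓ i) = 1) :
    ({α | α ∈ rootsB ℓ ∧ ∃ k : ℤ, ht α = (q : ℚ) * k}.ncard : ℚ) =
      ((K : ℚ) - (c : ℚ)) / 2 - (ℓ : ℚ) := by
  rw [setOf_dvd_ht_eq_image ht hht,
    (injOn_weight_add_weight.mono (coe_subset.2 (filter_subset _ _))).ncard_image,
    Set.ncard_coe_finset]
  have hpairs := card_Icc_product_filter_dvd_add_eq_two_mul_rootPairs ℓ q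
  have hK' := card_Icc_product_filter_dvd_add hdecomp hs0 (by omega)
  have hc' := card_Icc_filter_dvd_two_mul hdecomp hs0 hs1 hc
  have hroots : 2 * (#{p ∈ rootPairs ℓ | (q : ℤ) ∣ p.1 + p.2} : ℤ) = K - c - 2 * ℓ := by
    rw [hK, ← hK']
    omega
  have : (2 * #{p ∈ rootPairs ℓ | (q : ℤ) ∣ p.1 + p.2} : ℚ) = K - c - 2 * ℓ := by
    exact_mod_cast hroots
  linarith

/-- Let `ℓ ≥ 2` and `q ≥ 1` be integers, set `n = 2ℓ+1`, and write `n = q·m₀ + s₀`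
with `m₀, s₀` integers, `0 ≤ s₀ ≤ q−1`.  Set `K = m₀²(q−s₀) + (m₀+1)²·s₀` and set `c = m₀` if
`q` and `m₀` are both odd, `c = m₀+1` if `q` is odd and `m₀` is even, and `c = 2m₀+1` if `q` is
even.  Then the number of roots `α ∈ Δ(Bₗ)` with `q` dividing `ht(α)` equals `(K − c)/2 − ℓ`.
The height is computed against any linear functional taking the value `1` on each simple root
of `Bₗ`. -/
theorem statement3 (ℓ q : ℕ) (hℓ : 2 ≤ ℓ) (hq : 1 ≤ q)
    (m₀ s₀ K c : ℤ)
    (hdecomp : (2 * ℓ + 1 : ℤ) = (q : ℤ) * m₀ + s₀) (hs0 : 0 ≤ s₀) (hs1 : s₀ ≤ (q : ℤ) - 1)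
    (hK : K = m₀ ^ 2 * ((q : ℤ) - s₀) + (m₀ + 1) ^ 2 * s₀)
    (hc : (Odd q ∧ Odd m₀ ∧ c = m₀) ∨ (Odd q ∧ Even m₀ ∧ c = m₀ + 1) ∨
          (Even q ∧ c = 2 * m₀ + 1))
    (ht : (Fin ℓ → ℚ) →ₗ[ℚ] ℚ) (hht : ∀ i : Fin ℓ, ht (simpleB ℓ i) = 1) :
    ({α | α ∈ rootsB ℓ ∧ ∃ k : ℤ, ht α = (q : ℚ) * k}.ncard : ℚ) =
      ((K : ℚ) - (c : ℚ)) / 2 - (ℓ : ℚ) :=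
  statement3_general ℓ q m₀ s₀ K c hdecomp hs0 hs1 hK hc ht hht
end
end

section
/- Let ℓ ≥ 2 and q ≥ 1 be integers, set n = 2ℓ, and write n = q·m₀ + s₀ with m₀, s₀ integers, 1 ≤ s₀ ≤ q. Set K = m₀²(q−s₀) + (m₀+1)²·s₀ and set c = m₀ if q is odd and m₀ is even, c = m₀+1 if q and m₀ are both odd, c = 2m₀ if q and m₀ are both even, and c = 2(m₀+1) if q is even and m₀ is odd. Then the number of roots α ∈ Δ(D_ℓ) with q dividing ht(α) equals (K − c)/2 − ℓ. -/
noncomputable section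

/-- The simple roots of the root system of type `Dₗ` (`ℓ ≥ 2`):
`αᵢ = eᵢ − eᵢ₊₁` for `1 ≤ i ≤ ℓ−1` and `α_ℓ = e_{ℓ−1} + e_ℓ`. -/
def simpleD (ℓ : ℕ) (i : Fin ℓ) : Fin ℓ → ℚ :=
  if h : (i : ℕ) + 1 < ℓ then stdVec ℓ i - stdVec ℓ ⟨(i : ℕ) + 1, h⟩
  else if h2 : 2 ≤ ℓ then
    stdVec ℓ ⟨ℓ - 2, by omega⟩ + stdVec ℓ ⟨ℓ - 1, by omega⟩
  else stdVec ℓ i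

/-- The root system of type `Dₗ`: `{±eᵢ ± eⱼ : i < j}` in `ℚ^ℓ`. -/
def rootsD (ℓ : ℕ) : Set (Fin ℓ → ℚ) :=
  {v | ∃ i j : Fin ℓ, i < j ∧ (v = stdVec ℓ i + stdVec ℓ j ∨ v = stdVec ℓ i - stdVec ℓ j ∨
        v = -stdVec ℓ i + stdVec ℓ j ∨ v = -stdVec ℓ i - stdVec ℓ j)}

lemma div_eq_m (q ℓ : ℕ) (hq : 1 ≤ q) (hℓ : 1 ≤ ℓ) (m s : ℤ)
    (hd : (2 * ℓ : ℤ) = q * m + s) (h1 : 1 ≤ s) (h2 : s ≤ q) :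
    (((2 * (ℓ - 1) + 1) / q : ℕ) : ℤ) = m := by
  have hm0 : 0 ≤ m := by
    by_contra h
    push_neg at h
    have hm1 : m ≤ -1 := by omega
    have : (q : ℤ) * m ≤ (q : ℤ) * (-1) :=
      mul_le_mul_of_nonneg_left hm1 (by positivity)
    have hq1 : (1 : ℤ) ≤ q := by exact_mod_cast hq
    have hl1 : (1 : ℤ) ≤ (ℓ : ℤ) := by exact_mod_cast hℓ
    nlinarith
  set mn := m.toNat with hmn
  have hmnc : (mn : ℤ) = m := Int.toNat_of_nonneg hm0
  have hL : (2 * (ℓ - 1) + 1 : ℕ) = 2 * ℓ - 1 := by omega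
  rw [hL]
  have hcast : ((2 * ℓ - 1 : ℕ) : ℤ) = 2 * ℓ - 1 := by
    have h12 : (1:ℕ) ≤ 2 * ℓ := by omega
    push_cast [Nat.cast_sub h12]
    ring
  have key : (2 * ℓ - 1) / q = mn := by
    apply Nat.div_eq_of_lt_le
    · zify
      have hq1 : (1 : ℤ) ≤ q := by exact_mod_cast hq
      rw [hcast]
      nlinarith [hmnc]
    · zify
      have hq1 : (1 : ℤ) ≤ q := by exact_mod_cast hq
      rw [hcast]
      nlinarith [hmnc]
  rw [key, hmnc]


def cval (q m : ℤ) : ℤ :=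
  if q % 2 = 0 then (if m % 2 = 0 then 2 * m else 2 * m + 2)
  else (if m % 2 = 0 then m else m + 1)

lemma cval_oe (q m : ℤ) (hq : q % 2 = 1) (hm : m % 2 = 0) : cval q m = m := by
  unfold cval; rw [if_neg (by omega), if_pos hm]
lemma cval_oo (q m : ℤ) (hq : q % 2 = 1) (hm : m % 2 = 1) : cval q m = m + 1 := by
  unfold cval; rw [if_neg (by omega), if_neg (by omega)]
lemma cval_ee (q m : ℤ) (hq : q % 2 = 0) (hm : m % 2 = 0) : cval q m = 2 * m := by
  unfold cval; rw [if_pos hq, if_pos hm]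
lemma cval_eo (q m : ℤ) (hq : q % 2 = 0) (hm : m % 2 = 1) : cval q m = 2 * m + 2 := by
  unfold cval; rw [if_pos hq, if_neg (by omega)]

def Ssum (q L : ℕ) : ℕ := ∑ k ∈ Finset.range L, (2 * k + 1) / q

lemma core (q : ℕ) (hq : 1 ≤ q) : ∀ ℓ : ℕ, 1 ≤ ℓ → ∀ m s : ℤ,
    (2 * ℓ : ℤ) = q * m + s → 1 ≤ s → s ≤ q →
    4 * (Ssum q (ℓ - 1) : ℤ) =
      q * m ^ 2 + (2 * m + 1) * s - cval q m - 2 * ℓ - 2 * m + 2 * (m % 2) := by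
  intro ℓ hℓ
  induction ℓ, hℓ using Nat.le_induction with
  | base =>
    intro m s hd h1 h2
    simp only [Ssum, Finset.range_zero, Finset.sum_empty, Nat.cast_zero, mul_zero] at *
    push_cast at hd
    have hq1 : (1 : ℤ) ≤ q := by exact_mod_cast hq
    rcases eq_or_lt_of_le hq1 with hq2 | hq2
    · have hs1 : s = 1 := by omega
      have hm1 : m = 1 := by rw [← hq2] at hd; omega
      subst hs1 hm1
      rw [cval_oo _ _ (by omega) (by norm_num), ← hq2]
      norm_num
    · have hm0 : m = 0 := by
        rcases lt_trichotomy m 0 with h | h | h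
        · exfalso
          have hm1 : m ≤ -1 := by omega
          have := mul_le_mul_of_nonneg_left hm1 (show (0:ℤ) ≤ q by positivity)
          nlinarith
        · exact h
        · exfalso
          have hm1 : 1 ≤ m := by omega
          have := mul_le_mul_of_nonneg_left hm1 (show (0:ℤ) ≤ q by positivity)
          nlinarith
      subst hm0
      have hs2 : s = 2 := by omega
      subst hs2
      rcases Int.emod_two_eq (q:ℤ) with hq2' | hq2'
      · rw [cval_ee _ _ hq2' (by norm_num)]; ring
      · rw [cval_oe _ _ hq2' (by norm_num)]; ring
  | succ ℓ hℓ IH =>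
    intro m' s' hd' h1' h2'
    push_cast at hd'
    have hq1 : (1 : ℤ) ≤ q := by exact_mod_cast hq
    have hsplit : Ssum q (ℓ + 1 - 1) = Ssum q (ℓ - 1) + (2 * (ℓ - 1) + 1) / q := by
      have hs : ℓ - 1 + 1 = ℓ := by omega
      show Ssum q ℓ = _
      rw [← hs]
      exact Finset.sum_range_succ _ _
    rw [hsplit]
    push_cast
    rcases lt_trichotomy s' 2 with hs' | hs' | hs'
    · -- s' = 1, hence q*m' odd, q odd, m' odd
      have hs'1 : s' = 1 := by omega
      subst hs'1
      have hqm : (q : ℤ) * m' = 2 * ℓ + 1 := by linarith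
      have hodd : Odd ((q:ℤ) * m') := ⟨(ℓ:ℤ), by linarith⟩
      obtain ⟨hoq, hom⟩ := Int.odd_mul.mp hodd
      have hq2 : (q:ℤ) % 2 = 1 := Int.odd_iff.mp hoq
      have hm2 : m' % 2 = 1 := Int.odd_iff.mp hom
      rcases eq_or_lt_of_le hq1 with hqe | hqe
      · -- q = 1
        have hd2 : (2 * ℓ : ℤ) = q * (m' - 2) + 1 := by rw [← hqe] at hqm ⊢; linarith
        have E := IH (m' - 2) 1 hd2 le_rfl (by omega)
        have hdiv := div_eq_m q ℓ hq hℓ (m' - 2) 1 hd2 le_rfl (by omega)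
        push_cast at hdiv; rw [hdiv]
        rw [cval_oo _ _ hq2 (by omega), (by omega : (m' - 2) % 2 = 1)] at E
        rw [cval_oo _ _ hq2 hm2, hm2, ← hqe] at *
        linear_combination E
      · -- q ≥ 2
        have hd2 : (2 * ℓ : ℤ) = q * (m' - 1) + (q - 1) := by linarith
        have E := IH (m' - 1) ((q:ℤ) - 1) hd2 (by omega) (by omega)
        have hdiv := div_eq_m q ℓ hq hℓ (m' - 1) ((q:ℤ) - 1) hd2 (by omega) (by omega)
        push_cast at hdiv; rw [hdiv]
        rw [cval_oe _ _ hq2 (by omega), (by omega : (m' - 1) % 2 = 0)] at E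
        rw [cval_oo _ _ hq2 hm2, hm2]
        linear_combination E
    · -- s' = 2
      subst hs'
      have hqm : (q : ℤ) * m' = 2 * ℓ := by linarith
      have hd2 : (2 * ℓ : ℤ) = q * (m' - 1) + q := by linarith
      have E := IH (m' - 1) (q:ℤ) hd2 (by omega) le_rfl
      have hdiv := div_eq_m q ℓ hq hℓ (m' - 1) (q:ℤ) hd2 (by omega) le_rfl
      push_cast at hdiv; rw [hdiv]
      rcases Int.emod_two_eq (q:ℤ) with hq2 | hq2 <;> rcases Int.emod_two_eq m' with hm2 | hm2
      · rw [cval_eo _ _ hq2 (by omega), (by omega : (m' - 1) % 2 = 1)] at E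
        rw [cval_ee _ _ hq2 hm2, hm2]
        linear_combination E
      · rw [cval_ee _ _ hq2 (by omega), (by omega : (m' - 1) % 2 = 0)] at E
        rw [cval_eo _ _ hq2 hm2, hm2]
        linear_combination E
      · rw [cval_oo _ _ hq2 (by omega), (by omega : (m' - 1) % 2 = 1)] at E
        rw [cval_oe _ _ hq2 hm2, hm2]
        linear_combination E
      · -- q odd, m' odd : contradiction since q*m' = 2ℓ even
        exfalso
        obtain ⟨t, ht⟩ := Int.odd_mul.mpr ⟨Int.odd_iff.mpr hq2, Int.odd_iff.mpr hm2⟩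
        omega
    · -- s' ≥ 3
      have hd2 : (2 * ℓ : ℤ) = q * m' + (s' - 2) := by linarith
      have E := IH m' (s' - 2) hd2 (by omega) (by omega)
      have hdiv := div_eq_m q ℓ hq hℓ m' (s' - 2) hd2 (by omega) (by omega)
      push_cast at hdiv; rw [hdiv]
      linear_combination E




def rootF (ℓ : ℕ) (x : Fin ℓ × Fin ℓ × Bool × Bool) : Fin ℓ → ℚ :=
  (if x.2.2.1 then stdVec ℓ x.1 else -stdVec ℓ x.1) +
    (if x.2.2.2 then stdVec ℓ x.2.1 else -stdVec ℓ x.2.1)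

lemma rootF_apply (ℓ : ℕ) (i j : Fin ℓ) (a b : Bool) (k : Fin ℓ) :
    rootF ℓ (i, j, a, b) k =
      (if k = i then (if a then (1:ℚ) else -1) else 0) +
        (if k = j then (if b then (1:ℚ) else -1) else 0) := by
  unfold rootF stdVec
  cases a <;> cases b <;>
    simp [Pi.single_apply] <;> split_ifs <;> norm_num

lemma rootF_mem (ℓ : ℕ) (i j i' j' : Fin ℓ) (a b a' b' : Bool) (hij : i ≠ j)
    (h : rootF ℓ (i, j, a, b) = rootF ℓ (i', j', a', b')) (k : Fin ℓ)
    (hk : k = i ∨ k = j) : k = i' ∨ k = j' := by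
  by_contra hc
  push_neg at hc
  have := congrFun h k
  rw [rootF_apply, rootF_apply, if_neg hc.1, if_neg hc.2] at this
  rcases hk with rfl | rfl
  · rw [if_pos rfl, if_neg hij] at this
    cases a <;> norm_num at this
  · rw [if_neg (Ne.symm hij), if_pos rfl] at this
    cases b <;> norm_num at this

lemma rootF_injOn (ℓ : ℕ) : Set.InjOn (rootF ℓ) {x | x.1 < x.2.1} := by
  rintro ⟨i, j, a, b⟩ hx ⟨i', j', a', b'⟩ hy h
  simp only [Set.mem_setOf_eq] at hx hy
  have hij : i ≠ j := Fin.ne_of_lt hx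
  have hij' : i' ≠ j' := Fin.ne_of_lt hy
  have h1 : i = i' ∨ i = j' := rootF_mem ℓ i j i' j' a b a' b' hij h i (Or.inl rfl)
  have h2 : j = i' ∨ j = j' := rootF_mem ℓ i j i' j' a b a' b' hij h j (Or.inr rfl)
  have hiv : (i:ℕ) = i' ∨ (i:ℕ) = j' := h1.imp (congrArg Fin.val) (congrArg Fin.val)
  have hjv : (j:ℕ) = i' ∨ (j:ℕ) = j' := h2.imp (congrArg Fin.val) (congrArg Fin.val)
  have hxv : (i:ℕ) < j := hx
  have hyv : (i':ℕ) < j' := hy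
  have hii : i = i' ∧ j = j' := by
    constructor <;> apply Fin.ext <;> omega
  obtain ⟨rfl, rfl⟩ := hii
  have ea := congrFun h i
  rw [rootF_apply, rootF_apply, if_pos rfl, if_pos rfl, if_neg hij, if_neg hij] at ea
  have eb := congrFun h j
  rw [rootF_apply, rootF_apply, if_neg (Ne.symm hij), if_neg (Ne.symm hij),
    if_pos rfl, if_pos rfl] at eb
  have hab : a = a' := by revert ea; cases a <;> cases a' <;> norm_num
  have hbb : b = b' := by revert eb; cases b <;> cases b' <;> norm_num
  rw [hab, hbb]

lemma Ioc_filter_dvd_card (q a b : ℕ) :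
    ((Finset.Ioc a b).filter (fun x => q ∣ x)).card = b / q - a / q := by
  rcases le_or_gt a b with hab | hab
  · have hunion : Finset.Ioc 0 a ∪ Finset.Ioc a b = Finset.Ioc 0 b :=
      Finset.Ioc_union_Ioc_eq_Ioc (Nat.zero_le a) hab
    have hdisj : Disjoint (Finset.Ioc 0 a) (Finset.Ioc a b) := by
      rw [Finset.disjoint_left]
      intro x hx hy
      simp only [Finset.mem_Ioc] at hx hy
      omega
    have hcard : ((Finset.Ioc 0 a).filter (fun x => q ∣ x)).card +
        ((Finset.Ioc a b).filter (fun x => q ∣ x)).card =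
        ((Finset.Ioc 0 b).filter (fun x => q ∣ x)).card := by
      rw [← Finset.card_union_of_disjoint (Finset.disjoint_filter_filter hdisj),
        ← Finset.filter_union, hunion]
    rw [Nat.Ioc_filter_dvd_card_eq_div, Nat.Ioc_filter_dvd_card_eq_div] at hcard
    omega
  · rw [Finset.Ioc_eq_empty (by omega), Finset.filter_empty, Finset.card_empty]
    have := Nat.div_le_div_right (c := q) (le_of_lt hab)
    omega

lemma count_diff (ℓ q : ℕ) (i : Fin ℓ) :
    (Finset.univ.filter (fun j : Fin ℓ => i < j ∧ (q:ℤ) ∣ ((j:ℤ) - (i:ℤ)))).card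
      = (ℓ - 1 - (i:ℕ)) / q := by
  rw [← Nat.Ioc_filter_dvd_card_eq_div]
  refine Finset.card_bij (fun (j : Fin ℓ) (_ : j ∈ Finset.univ.filter (fun j : Fin ℓ => i < j ∧ (q:ℤ) ∣ ((j:ℤ) - (i:ℤ)))) => (j:ℕ) - (i:ℕ)) ?_ ?_ ?_
  · intro j hj
    simp only [Finset.mem_filter, Finset.mem_univ, true_and] at hj
    obtain ⟨h1, h2⟩ := hj
    have h1' : (i:ℕ) < (j:ℕ) := h1
    have hjl : (j:ℕ) < ℓ := j.isLt
    simp only [Finset.mem_filter, Finset.mem_Ioc]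
    refine ⟨⟨by omega, by omega⟩, ?_⟩
    have : (((j:ℕ) - (i:ℕ) : ℕ) : ℤ) = (j:ℤ) - (i:ℤ) := by push_cast; omega
    exact_mod_cast this ▸ h2
  · intro j1 h1 j2 h2 he
    simp only [Finset.mem_filter, Finset.mem_univ, true_and] at h1 h2
    have e1 : (i:ℕ) < (j1:ℕ) := h1.1
    have e2 : (i:ℕ) < (j2:ℕ) := h2.1
    apply Fin.ext
    omega
  · intro d hd
    simp only [Finset.mem_filter, Finset.mem_Ioc] at hd
    obtain ⟨⟨hd1, hd2⟩, hd3⟩ := hd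
    have hil : (i:ℕ) < ℓ := i.isLt
    refine ⟨⟨(i:ℕ) + d, by omega⟩, ?_, by dsimp only; omega⟩
    simp only [Finset.mem_filter, Finset.mem_univ, true_and]
    constructor
    · show (i:ℕ) < (i:ℕ) + d
      omega
    · have : (((⟨(i:ℕ) + d, by omega⟩ : Fin ℓ) : ℤ)) - (i:ℤ) = (d:ℤ) := by
        have : ((⟨(i:ℕ) + d, by omega⟩ : Fin ℓ) : ℕ) = (i:ℕ) + d := rfl
        rw [this]; push_cast; ring
      rw [this]
      exact_mod_cast hd3

lemma count_sum (ℓ q : ℕ) (hℓ : 1 ≤ ℓ) (i : Fin ℓ) :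
    (Finset.univ.filter (fun j : Fin ℓ =>
        i < j ∧ (q:ℤ) ∣ (2*(ℓ:ℤ) - 2 - (i:ℤ) - (j:ℤ)))).card
      = (2 * (ℓ - 1 - (i:ℕ)) - 1) / q - ((ℓ - 1 - (i:ℕ)) - 1) / q := by
  rw [← Ioc_filter_dvd_card]
  refine Finset.card_bij (fun (j : Fin ℓ) (_ : j ∈ Finset.univ.filter (fun j : Fin ℓ => i < j ∧ (q:ℤ) ∣ (2*(ℓ:ℤ) - 2 - (i:ℤ) - (j:ℤ)))) => 2 * ℓ - 2 - (i:ℕ) - (j:ℕ)) ?_ ?_ ?_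
  · intro j hj
    simp only [Finset.mem_filter, Finset.mem_univ, true_and] at hj
    obtain ⟨h1, h2⟩ := hj
    have h1' : (i:ℕ) < (j:ℕ) := h1
    have hjl : (j:ℕ) < ℓ := j.isLt
    simp only [Finset.mem_filter, Finset.mem_Ioc]
    refine ⟨⟨by omega, by omega⟩, ?_⟩
    have : ((2 * ℓ - 2 - (i:ℕ) - (j:ℕ) : ℕ) : ℤ) = 2*(ℓ:ℤ) - 2 - (i:ℤ) - (j:ℤ) := by
      push_cast; omega
    exact_mod_cast this ▸ h2
  · intro j1 h1 j2 h2 he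
    simp only [Finset.mem_filter, Finset.mem_univ, true_and] at h1 h2
    have e1 : (i:ℕ) < (j1:ℕ) := h1.1
    have e2 : (i:ℕ) < (j2:ℕ) := h2.1
    have f1 : (j1:ℕ) < ℓ := j1.isLt
    have f2 : (j2:ℕ) < ℓ := j2.isLt
    apply Fin.ext
    omega
  · intro d hd
    simp only [Finset.mem_filter, Finset.mem_Ioc] at hd
    obtain ⟨⟨hd1, hd2⟩, hd3⟩ := hd
    have hil : (i:ℕ) < ℓ := i.isLt
    refine ⟨⟨2 * ℓ - 2 - (i:ℕ) - d, by omega⟩, ?_, by dsimp only; omega⟩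
    simp only [Finset.mem_filter, Finset.mem_univ, true_and]
    constructor
    · show (i:ℕ) < 2 * ℓ - 2 - (i:ℕ) - d
      omega
    · have : 2*(ℓ:ℤ) - 2 - (i:ℤ) - (((⟨2 * ℓ - 2 - (i:ℕ) - d, by omega⟩ : Fin ℓ) : ℕ) : ℤ)
          = (d:ℤ) := by
        simp only []
        push_cast
        omega
      rw [this]
      exact_mod_cast hd3

lemma ht_std (ℓ : ℕ) (hℓ : 2 ≤ ℓ) (ht : (Fin ℓ → ℚ) →ₗ[ℚ] ℚ)
    (hht : ∀ i : Fin ℓ, ht (simpleD ℓ i) = 1) (i : Fin ℓ) :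
    ht (stdVec ℓ i) = ((ℓ - 1 - (i:ℕ) : ℕ) : ℚ) := by
  have step : ∀ i : Fin ℓ, ∀ h : (i:ℕ) + 1 < ℓ,
      ht (stdVec ℓ i) = ht (stdVec ℓ ⟨(i:ℕ) + 1, h⟩) + 1 := by
    intro i h
    have h1 := hht i
    rw [simpleD, dif_pos h, map_sub] at h1
    linarith
  have top : ht (stdVec ℓ ⟨ℓ - 1, by omega⟩) = 0 := by
    have h1 := hht ⟨ℓ - 1, by omega⟩
    rw [simpleD, dif_neg (by simp; omega), dif_pos hℓ, map_add] at h1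
    have h2 := step ⟨ℓ - 2, by omega⟩ (by simp; omega)
    have h3 : (⟨((⟨ℓ - 2, by omega⟩ : Fin ℓ):ℕ) + 1, by simp; omega⟩ : Fin ℓ)
        = ⟨ℓ - 1, by omega⟩ := by
      apply Fin.ext; simp; omega
    rw [h3] at h2
    linarith
  have key : ∀ k : ℕ, k ≤ ℓ - 1 → ht (stdVec ℓ ⟨ℓ - 1 - k, by omega⟩) = (k : ℚ) := by
    intro k
    induction k with
    | zero => intro _; simpa using top
    | succ n ih =>
      intro hn
      have h := step ⟨ℓ - 1 - (n + 1), by omega⟩ (by simp; omega)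
      have h3 : (⟨((⟨ℓ - 1 - (n+1), by omega⟩ : Fin ℓ):ℕ) + 1, by simp; omega⟩ : Fin ℓ)
          = ⟨ℓ - 1 - n, by omega⟩ := by
        apply Fin.ext; simp; omega
      rw [h3] at h
      rw [h, ih (by omega)]
      push_cast; ring
  have hi : i = ⟨ℓ - 1 - (ℓ - 1 - (i:ℕ)), by omega⟩ := by
    apply Fin.ext
    have := i.isLt
    simp; omega
  rw [hi]
  have := key (ℓ - 1 - (i:ℕ)) (by omega)
  rw [this]
  norm_num

def vInt (ℓ : ℕ) (x : Fin ℓ × Fin ℓ × Bool × Bool) : ℤ :=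
  (if x.2.2.1 then ((ℓ:ℤ) - 1 - (x.1:ℕ)) else -((ℓ:ℤ) - 1 - (x.1:ℕ))) +
    (if x.2.2.2 then ((ℓ:ℤ) - 1 - (x.2.1:ℕ)) else -((ℓ:ℤ) - 1 - (x.2.1:ℕ)))

lemma ht_rootF (ℓ : ℕ) (hℓ : 2 ≤ ℓ) (ht : (Fin ℓ → ℚ) →ₗ[ℚ] ℚ)
    (hht : ∀ i : Fin ℓ, ht (simpleD ℓ i) = 1) (x : Fin ℓ × Fin ℓ × Bool × Bool) :
    ht (rootF ℓ x) = ((vInt ℓ x : ℤ) : ℚ) := by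
  obtain ⟨i, j, a, b⟩ := x
  have hcast : ∀ i : Fin ℓ, ((ℓ - 1 - (i:ℕ) : ℕ) : ℚ) = (((ℓ:ℤ) - 1 - (i:ℕ) : ℤ) : ℚ) := by
    intro i
    have := i.isLt
    push_cast [Nat.cast_sub (by omega : (i:ℕ) ≤ ℓ - 1), Nat.cast_sub (by omega : 1 ≤ ℓ)]
    push_cast
    ring
  unfold rootF vInt
  cases a <;> cases b <;>
    simp only [if_true, if_false, Bool.false_eq_true, map_add, map_neg,
      ht_std ℓ hℓ ht hht, hcast] <;> push_cast <;> ring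

lemma set_eq (ℓ q : ℕ) (hℓ : 2 ≤ ℓ) (ht : (Fin ℓ → ℚ) →ₗ[ℚ] ℚ)
    (hht : ∀ i : Fin ℓ, ht (simpleD ℓ i) = 1) :
    {α | α ∈ rootsD ℓ ∧ ∃ k : ℤ, ht α = (q : ℚ) * k} =
      rootF ℓ '' {x | x.1 < x.2.1 ∧ (q:ℤ) ∣ vInt ℓ x} := by
  ext α
  constructor
  · rintro ⟨⟨i, j, hij, hc⟩, k, hk⟩
    have main : ∀ a b : Bool, rootF ℓ (i, j, a, b) = α →
        α ∈ rootF ℓ '' {x : Fin ℓ × Fin ℓ × Bool × Bool | x.1 < x.2.1 ∧ (q:ℤ) ∣ vInt ℓ x} := by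
      intro a b hf
      have hv : ((vInt ℓ (i, j, a, b) : ℤ) : ℚ) = (((q:ℤ) * k : ℤ) : ℚ) := by
        rw [← ht_rootF ℓ hℓ ht hht, hf, hk]; push_cast; ring
      exact ⟨(i, j, a, b), ⟨hij, k, by exact_mod_cast hv⟩, hf⟩
    rcases hc with rfl | rfl | rfl | rfl
    · exact main true true (by simp [rootF])
    · exact main true false (by simp [rootF, sub_eq_add_neg])
    · exact main false true (by simp [rootF])
    · exact main false false (by simp [rootF, sub_eq_add_neg])
  · rintro ⟨⟨i, j, a, b⟩, ⟨hij, d, hd⟩, rfl⟩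
    refine ⟨⟨i, j, hij, ?_⟩, d, ?_⟩
    · cases a <;> cases b
      · exact Or.inr (Or.inr (Or.inr (by simp [rootF, sub_eq_add_neg])))
      · exact Or.inr (Or.inr (Or.inl (by simp [rootF])))
      · exact Or.inr (Or.inl (by simp [rootF, sub_eq_add_neg]))
      · exact Or.inl (by simp [rootF])
    · rw [ht_rootF ℓ hℓ ht hht, hd]
      push_cast; ring

def Tfin (ℓ q : ℕ) : Finset (Fin ℓ × Fin ℓ × Bool × Bool) :=
  Finset.univ.filter (fun x => x.1 < x.2.1 ∧ (q:ℤ) ∣ vInt ℓ x)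

lemma card_eq (ℓ q : ℕ) (hℓ : 2 ≤ ℓ) (hq : 1 ≤ q) :
    ((Tfin ℓ q).card : ℤ) = 2 * (((ℓ-1)/q : ℕ) : ℤ) + 2 * (Ssum q (ℓ-1) : ℤ) := by
  have hstep1 : (Tfin ℓ q).card = ∑ i : Fin ℓ, ∑ j : Fin ℓ, ∑ a : Bool, ∑ b : Bool,
      (if (i < j ∧ (q:ℤ) ∣ vInt ℓ (i, j, a, b)) then 1 else 0) := by
    rw [Tfin, Finset.card_filter]
    simp only [Fintype.sum_prod_type]
  have hG1 : ∀ (i j : Fin ℓ) (a b : Bool), vInt ℓ (i,j,a,b) =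
      (if a then ((ℓ:ℤ) - 1 - (i:ℕ)) else -((ℓ:ℤ) - 1 - (i:ℕ))) +
      (if b then ((ℓ:ℤ) - 1 - (j:ℕ)) else -((ℓ:ℤ) - 1 - (j:ℕ))) := fun _ _ _ _ => rfl
  have hinner : ∀ i : Fin ℓ, (∑ j : Fin ℓ, ∑ a : Bool, ∑ b : Bool,
      (if (i < j ∧ (q:ℤ) ∣ vInt ℓ (i, j, a, b)) then 1 else 0)) =
      2 * ((ℓ - 1 - (i:ℕ)) / q) +
      2 * ((2 * (ℓ - 1 - (i:ℕ)) - 1) / q - ((ℓ - 1 - (i:ℕ)) - 1) / q) := by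
    intro i
    have hj : ∀ j : Fin ℓ, (∑ a : Bool, ∑ b : Bool,
        (if (i < j ∧ (q:ℤ) ∣ vInt ℓ (i, j, a, b)) then 1 else 0)) =
        2 * (if (i < j ∧ (q:ℤ) ∣ ((j:ℤ) - (i:ℤ))) then 1 else 0) +
        2 * (if (i < j ∧ (q:ℤ) ∣ (2*(ℓ:ℤ) - 2 - (i:ℤ) - (j:ℤ))) then 1 else 0) := by
      intro j
      rw [Fintype.sum_bool, Fintype.sum_bool, Fintype.sum_bool]
      have ett : (i < j ∧ (q:ℤ) ∣ vInt ℓ (i,j,true,true)) ↔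
          (i < j ∧ (q:ℤ) ∣ (2*(ℓ:ℤ) - 2 - (i:ℤ) - (j:ℤ))) := by
        apply and_congr_right'
        rw [hG1]
        simp only [if_true]
        constructor
        · intro h; have := i.isLt; have := j.isLt
          have e : 2*(ℓ:ℤ) - 2 - (i:ℤ) - (j:ℤ) = ((ℓ:ℤ) - 1 - (i:ℕ)) + ((ℓ:ℤ) - 1 - (j:ℕ)) := by
            push_cast; ring
          rw [e]; exact h
        · intro h
          have e : ((ℓ:ℤ) - 1 - ((i:ℕ):ℤ)) + ((ℓ:ℤ) - 1 - ((j:ℕ):ℤ)) = 2*(ℓ:ℤ) - 2 - (i:ℤ) - (j:ℤ) := by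
            push_cast; ring
          rw [e]; exact h
      have eff : (i < j ∧ (q:ℤ) ∣ vInt ℓ (i,j,false,false)) ↔
          (i < j ∧ (q:ℤ) ∣ (2*(ℓ:ℤ) - 2 - (i:ℤ) - (j:ℤ))) := by
        apply and_congr_right'
        rw [hG1]
        have e : (if false then ((ℓ:ℤ) - 1 - (i:ℕ)) else -((ℓ:ℤ) - 1 - (i:ℕ))) +
            (if false then ((ℓ:ℤ) - 1 - (j:ℕ)) else -((ℓ:ℤ) - 1 - (j:ℕ)))
            = -(2*(ℓ:ℤ) - 2 - (i:ℤ) - (j:ℤ)) := by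
          simp only [if_false, Bool.false_eq_true]
          push_cast; ring
        rw [e, dvd_neg]
      have etf : (i < j ∧ (q:ℤ) ∣ vInt ℓ (i,j,true,false)) ↔
          (i < j ∧ (q:ℤ) ∣ ((j:ℤ) - (i:ℤ))) := by
        apply and_congr_right'
        rw [hG1]
        have e : (if true then ((ℓ:ℤ) - 1 - (i:ℕ)) else -((ℓ:ℤ) - 1 - (i:ℕ))) +
            (if false then ((ℓ:ℤ) - 1 - (j:ℕ)) else -((ℓ:ℤ) - 1 - (j:ℕ)))
            = (j:ℤ) - (i:ℤ) := by
          simp only [if_true, if_false, Bool.false_eq_true]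
          push_cast; ring
        rw [e]
      have eft : (i < j ∧ (q:ℤ) ∣ vInt ℓ (i,j,false,true)) ↔
          (i < j ∧ (q:ℤ) ∣ ((j:ℤ) - (i:ℤ))) := by
        apply and_congr_right'
        rw [hG1]
        have e : (if false then ((ℓ:ℤ) - 1 - (i:ℕ)) else -((ℓ:ℤ) - 1 - (i:ℕ))) +
            (if true then ((ℓ:ℤ) - 1 - (j:ℕ)) else -((ℓ:ℤ) - 1 - (j:ℕ)))
            = -((j:ℤ) - (i:ℤ)) := by
          simp only [if_true, if_false, Bool.false_eq_true]
          push_cast; ring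
        rw [e, dvd_neg]
      rw [if_congr ett rfl rfl, if_congr eff rfl rfl, if_congr etf rfl rfl, if_congr eft rfl rfl]
      ring
    rw [Finset.sum_congr rfl (fun j _ => hj j)]
    rw [Finset.sum_add_distrib, ← Finset.mul_sum, ← Finset.mul_sum]
    rw [← Finset.card_filter, ← Finset.card_filter]
    rw [count_diff ℓ q i, count_sum ℓ q (by omega) i]
  rw [hstep1, Finset.sum_congr rfl (fun i _ => hinner i)]
  rw [Finset.sum_add_distrib, ← Finset.mul_sum, ← Finset.mul_sum]
  have hA : ∑ i : Fin ℓ, ((ℓ - 1 - (i:ℕ)) / q) = ∑ t ∈ Finset.range ℓ, t / q := by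
    rw [Fin.sum_univ_eq_sum_range (fun i => (ℓ - 1 - i) / q) ℓ]
    exact Finset.sum_range_reflect (fun t => t / q) ℓ
  have hB : ∑ i : Fin ℓ, ((2 * (ℓ - 1 - (i:ℕ)) - 1) / q - ((ℓ - 1 - (i:ℕ)) - 1) / q)
      = ∑ t ∈ Finset.range ℓ, ((2 * t - 1) / q - (t - 1) / q) := by
    rw [Fin.sum_univ_eq_sum_range (fun t => (2 * (ℓ - 1 - t) - 1) / q - ((ℓ - 1 - t) - 1) / q) ℓ]
    exact Finset.sum_range_reflect (fun t => (2 * t - 1) / q - (t - 1) / q) ℓ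
  rw [hA, hB]
  have hA2 : ∑ t ∈ Finset.range ℓ, t / q
      = (∑ t ∈ Finset.range (ℓ-1), t / q) + (ℓ-1) / q := by
    have : ℓ = (ℓ - 1) + 1 := by omega
    rw [this, Finset.sum_range_succ]
    congr 1 <;> omega
  have hB2 : ∑ t ∈ Finset.range ℓ, ((2 * t - 1) / q - (t - 1) / q)
      = ∑ t ∈ Finset.range (ℓ-1), ((2 * t + 1) / q - t / q) := by
    have h0 : ℓ = (ℓ - 1) + 1 := by omega
    rw [h0, Finset.sum_range_succ']
    simp only [Nat.mul_zero, Nat.zero_sub, Nat.zero_div]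
    have : ∀ t, (2 * (t + 1) - 1) / q - ((t + 1) - 1) / q = (2 * t + 1) / q - t / q := by
      intro t
      congr 2 <;> omega
    rw [Finset.sum_congr rfl (fun t _ => this t)]
    simp
  rw [hA2, hB2]
  push_cast
  have hBcast : ((∑ t ∈ Finset.range (ℓ-1), ((2 * t + 1) / q - t / q) : ℕ) : ℤ)
      = (Ssum q (ℓ-1) : ℤ) - ((∑ t ∈ Finset.range (ℓ-1), t / q : ℕ) : ℤ) := by
    rw [Ssum]
    push_cast
    rw [← Finset.sum_sub_distrib]
    apply Finset.sum_congr rfl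
    intro t _
    rw [Nat.cast_sub (Nat.div_le_div_right (by omega))]
    push_cast
    ring
  push_cast at hBcast
  rw [hBcast]
  ring

lemma two_u (q ℓ : ℕ) (hq : 1 ≤ q) (hℓ : 2 ≤ ℓ) (m s : ℤ)
    (hd : (2 * ℓ : ℤ) = q * m + s) (h1 : 1 ≤ s) (h2 : s ≤ (q:ℤ)) :
    2 * (((ℓ - 1) / q : ℕ) : ℤ) = m - m % 2 := by
  have hmod : q * ((ℓ-1)/q) + (ℓ-1) % q = ℓ - 1 := Nat.div_add_mod _ _
  have hr : (ℓ-1) % q < q := Nat.mod_lt _ (by omega)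
  set t := (ℓ-1)/q with htdef
  set r := (ℓ-1) % q with hrdef
  have hmz : ((q * t + r : ℕ) : ℤ) = ((ℓ - 1 : ℕ) : ℤ) := by exact_mod_cast hmod
  push_cast [Nat.cast_sub (show 1 ≤ ℓ by omega)] at hmz
  have key : (q:ℤ) * (m - 2 * (t:ℤ)) = 2 * (r:ℤ) + 2 - s := by
    linear_combination -hd - 2 * hmz
  have hq1 : (1:ℤ) ≤ q := by exact_mod_cast hq
  have hrz : (r:ℤ) < q := by exact_mod_cast hr
  have hb1 : 0 ≤ m - 2 * (t:ℤ) := by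
    by_contra hcon
    push_neg at hcon
    have : m - 2 * (t:ℤ) ≤ -1 := by omega
    have := mul_le_mul_of_nonneg_left this (show (0:ℤ) ≤ q by positivity)
    have hr0 : (0:ℤ) ≤ r := by positivity
    nlinarith
  have hb2 : m - 2 * (t:ℤ) ≤ 1 := by
    by_contra hcon
    push_neg at hcon
    have h2' : (2:ℤ) ≤ m - 2 * (t:ℤ) := by omega
    have := mul_le_mul_of_nonneg_left h2' (show (0:ℤ) ≤ q by positivity)
    nlinarith
  omega

/-- Let `ℓ ≥ 2` and `q ≥ 1` be integers, set `n = 2ℓ`, and write `n = q·m₀ + s₀`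
with `m₀, s₀` integers, `1 ≤ s₀ ≤ q`.  Set `K = m₀²(q−s₀) + (m₀+1)²·s₀` and set `c = m₀` if `q`
is odd and `m₀` is even, `c = m₀+1` if `q` and `m₀` are both odd, `c = 2m₀` if `q` and `m₀` are
both even, and `c = 2(m₀+1)` if `q` is even and `m₀` is odd.  Then the number of roots
`α ∈ Δ(Dₗ)` with `q` dividing `ht(α)` equals `(K − c)/2 − ℓ`.  The height is computed against
any linear functional taking the value `1` on each simple root of `Dₗ`. -/
theorem statement4 (ℓ q : ℕ) (hℓ : 2 ≤ ℓ) (hq : 1 ≤ q)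
    (m₀ s₀ K c : ℤ)
    (hdecomp : (2 * ℓ : ℤ) = (q : ℤ) * m₀ + s₀) (hs0 : 1 ≤ s₀) (hs1 : s₀ ≤ (q : ℤ))
    (hK : K = m₀ ^ 2 * ((q : ℤ) - s₀) + (m₀ + 1) ^ 2 * s₀)
    (hc : (Odd q ∧ Even m₀ ∧ c = m₀) ∨ (Odd q ∧ Odd m₀ ∧ c = m₀ + 1) ∨
          (Even q ∧ Even m₀ ∧ c = 2 * m₀) ∨ (Even q ∧ Odd m₀ ∧ c = 2 * (m₀ + 1)))
    (ht : (Fin ℓ → ℚ) →ₗ[ℚ] ℚ) (hht : ∀ i : Fin ℓ, ht (simpleD ℓ i) = 1) :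
    ({α | α ∈ rootsD ℓ ∧ ∃ k : ℤ, ht α = (q : ℚ) * k}.ncard : ℚ) =
      ((K : ℚ) - (c : ℚ)) / 2 - (ℓ : ℚ) := by
  classical
  have hset := set_eq ℓ q hℓ ht hht
  have hST : {x : Fin ℓ × Fin ℓ × Bool × Bool | x.1 < x.2.1 ∧ (q:ℤ) ∣ vInt ℓ x}
      = ↑(Tfin ℓ q) := by
    ext x; simp [Tfin]
  have hcard1 : ({α | α ∈ rootsD ℓ ∧ ∃ k : ℤ, ht α = (q : ℚ) * k}).ncard = (Tfin ℓ q).card := by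
    rw [hset, Set.ncard_image_of_injOn ((rootF_injOn ℓ).mono (fun x hx => hx.1)), hST,
      Set.ncard_coe_finset]
  rw [hcard1]
  have hN := card_eq ℓ q hℓ hq
  have hu := two_u q ℓ hq hℓ m₀ s₀ hdecomp hs0 hs1
  have hcore := core q hq ℓ (by omega) m₀ s₀ hdecomp hs0 hs1
  have hK' : K = (q:ℤ) * m₀ ^ 2 + (2 * m₀ + 1) * s₀ := by linear_combination hK
  have hcv : c = cval q m₀ := by
    rcases hc with ⟨hoq, hem, hceq⟩ | ⟨hoq, hom, hceq⟩ | ⟨heq, hem, hceq⟩ | ⟨heq, hom, hceq⟩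
    · rw [hceq, cval_oe _ _ (Int.odd_iff.mp ((Int.odd_coe_nat q).mpr hoq)) (Int.even_iff.mp hem)]
    · rw [hceq, cval_oo _ _ (Int.odd_iff.mp ((Int.odd_coe_nat q).mpr hoq)) (Int.odd_iff.mp hom)]
    · rw [hceq, cval_ee _ _ (Int.even_iff.mp ((Int.even_coe_nat q).mpr heq)) (Int.even_iff.mp hem)]
    · rw [hceq, cval_eo _ _ (Int.even_iff.mp ((Int.even_coe_nat q).mpr heq)) (Int.odd_iff.mp hom)]
      ring
  have h2N : 2 * ((Tfin ℓ q).card : ℤ) = K - c - 2 * ℓ := by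
    linear_combination 2 * hN + hcore + 2 * hu - hK' + hcv
  have hfin := congrArg (fun z : ℤ => (z : ℚ)) h2N
  push_cast at hfin
  linarith
end
end

section
/- Let n ≥ 1 and q ≥ 1 be integers. For every x ∈ sl_n(ℂ), one has (ad x)^{2q} = 0 if and only if x^q = 0. -/
/-!
Write `ad a = L_a - R_a` with the commuting left and right multiplications by `a`. If `a ^ q = 0`,
the binomial expansion gives `(ad a) ^ (2q - 1) = 0`. If `a ^ (p + 1) = 0`, only the middle
term of `(L_a - R_a) ^ (2p)` survives: `(ad a) ^ (2p) y = ± C(2p, p) a^p y a^p`. For a matrix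
over a field of characteristic zero, `(ad a) ^ (2p) = 0` therefore forces `a ^ p = 0`, and
descending from any nilpotency exponent turns `(ad a) ^ (2q) = 0` into `a ^ q = 0`.

A traceless `x` with `ad x` nilpotent is itself nilpotent: if `v`, `w` are right and left
eigenvectors of `x` for `λ`, `μ`, then `v wᵀ` is an eigenvector of `ad x` for `λ - μ`, so all
eigenvalues of `x` coincide, and `tr x = 0` makes them vanish. Finally, `ad x` on `sl_n` and on
`gl_n = sl_n ⊕ ℂ·1` have the same nilpotency exponents, as `ad x` kills scalars.
-/

open LieAlgebra LieAlgebra.SpecialLinear Matrix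

attribute [local instance 100] LieRing.ofAssociativeRing

theorem Commute.add_pow_two_mul_of_pow_succ_eq_zero {R : Type*} [Semiring R] {x y : R}
    (h : Commute x y) {p : ℕ} (hx : x ^ (p + 1) = 0) (hy : y ^ (p + 1) = 0) :
    (x + y) ^ (2 * p) = (2 * p).choose p • (x ^ p * y ^ p) := by
  rw [h.add_pow']
  refine Finset.sum_eq_single_of_mem (p, p) (by simp [two_mul]) fun ⟨i, j⟩ hij hne => ?_
  have hij : i + j = 2 * p := Finset.HasAntidiagonal.mem_antidiagonal.mp hij
  rcases le_or_gt (p + 1) i with hi | hi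
  · rw [pow_eq_zero_of_le hi hx, zero_mul, smul_zero]
  · have hip : i ≠ p := fun hip => hne (by simp only [Prod.mk.injEq]; omega)
    rw [pow_eq_zero_of_le (by omega : p + 1 ≤ j) hy, mul_zero, smul_zero]

section Associative

variable {R A : Type*} [CommRing R] [Ring A] [Algebra R A]

theorem LieAlgebra.ad_pow_eq_zero_of_pow_eq_zero {a : A} {m : ℕ} (ha : a ^ m = 0) :
    ad R A a ^ (2 * m - 1) = 0 := by
  have hL : LinearMap.mulLeft R a ^ m = 0 := by
    rw [LinearMap.pow_mulLeft, ha, LinearMap.mulLeft_zero_eq_zero]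
  have hR : (-LinearMap.mulRight R a) ^ m = 0 := by
    rw [neg_pow (LinearMap.mulRight R a : Module.End R A), LinearMap.pow_mulRight, ha,
      LinearMap.mulRight_zero_eq_zero, mul_zero]
  rw [ad_eq_lmul_left_sub_lmul_right, Pi.sub_apply, sub_eq_add_neg]
  exact (LinearMap.commute_mulLeft_right (R := R) a a).neg_right
    |>.add_pow_eq_zero_of_add_le_succ_of_pow_eq_zero hL hR (by omega)

theorem LieAlgebra.ad_pow_two_mul_apply_of_pow_succ_eq_zero {a : A} {p : ℕ}
    (ha : a ^ (p + 1) = 0) (y : A) :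
    (ad R A a ^ (2 * p)) y = (-1 : R) ^ p • (2 * p).choose p • (a ^ p * y * a ^ p) := by
  have hL : LinearMap.mulLeft R a ^ (p + 1) = 0 := by
    rw [LinearMap.pow_mulLeft, ha, LinearMap.mulLeft_zero_eq_zero]
  have hR : (-LinearMap.mulRight R a) ^ (p + 1) = 0 := by
    rw [neg_pow (LinearMap.mulRight R a : Module.End R A), LinearMap.pow_mulRight, ha,
      LinearMap.mulRight_zero_eq_zero, mul_zero]
  rw [ad_eq_lmul_left_sub_lmul_right, Pi.sub_apply, sub_eq_add_neg,
    (LinearMap.commute_mulLeft_right (R := R) a a).neg_right.add_pow_two_mul_of_pow_succ_eq_zero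
      hL hR,
    ← neg_one_smul R (LinearMap.mulRight R a), smul_pow, LinearMap.pow_mulLeft,
    LinearMap.pow_mulRight]
  simp [smul_comm ((2 * p).choose p), mul_assoc]

end Associative

theorem Matrix.eq_zero_of_forall_mul_mul_eq_zero {n α : Type*} [Fintype n] [DecidableEq n]
    [Semiring α] [NoZeroDivisors α] {B : Matrix n n α} (h : ∀ Y, B * Y * B = 0) : B = 0 := by
  ext i j
  simpa [mul_apply, single, ite_and, Finset.sum_mul, Finset.mul_sum] using
    congr_fun₂ (h (single j i 1)) i j

theorem Matrix.pow_eq_zero_of_isNilpotent_of_ad_pow_eq_zero {ι K : Type*} [Fintype ι]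
    [DecidableEq ι] [Field K] [CharZero K] {A : Matrix ι ι K} (hA : IsNilpotent A) {q : ℕ}
    (h : ad K (Matrix ι ι K) A ^ (2 * q) = 0) : A ^ q = 0 := by
  obtain ⟨m, hm⟩ := hA
  suffices ∀ j, A ^ (q + j) = 0 → A ^ q = 0 from this m (pow_eq_zero_of_le (by omega) hm)
  intro j
  induction j with
  | zero => exact id
  | succ j ih =>
    intro hj
    refine ih (eq_zero_of_forall_mul_mul_eq_zero fun Y => ?_)
    have had : ad K (Matrix ι ι K) A ^ (2 * (q + j)) = 0 := pow_eq_zero_of_le (by omega) h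
    have hmiddle := ad_pow_two_mul_apply_of_pow_succ_eq_zero (R := K) (p := q + j) hj Y
    rw [had, LinearMap.zero_apply, ← Nat.cast_smul_eq_nsmul K, eq_comm, smul_eq_zero,
      smul_eq_zero, Nat.cast_eq_zero] at hmiddle
    exact (hmiddle.resolve_left (pow_ne_zero _ (neg_ne_zero.mpr one_ne_zero))).resolve_left
      (Nat.choose_pos (by omega)).ne'

section Eigenvalues

variable {ι K : Type*} [Fintype ι] [DecidableEq ι] [Field K]

theorem Matrix.exists_mulVec_eq_smul_of_isRoot_charpoly {A : Matrix ι ι K} {μ : K}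
    (h : A.charpoly.IsRoot μ) : ∃ v ≠ 0, A *ᵥ v = μ • v := by
  rw [Polynomial.IsRoot.def, eval_charpoly] at h
  obtain ⟨v, hv0, hv⟩ := exists_mulVec_eq_zero_iff.mpr h
  refine ⟨v, hv0, ?_⟩
  rw [sub_mulVec, sub_eq_zero, scalar_apply, ← smul_one_eq_diagonal, smul_mulVec,
    one_mulVec] at hv
  exact hv.symm

theorem Matrix.ad_vecMulVec_eq_smul {R : Type*} [CommRing R] {A : Matrix ι ι R} {v w : ι → R}
    {μ ν : R} (hv : A *ᵥ v = μ • v) (hw : w ᵥ* A = ν • w) :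
    ad R (Matrix ι ι R) A (vecMulVec v w) = (μ - ν) • vecMulVec v w := by
  rw [ad_apply, Ring.lie_def, mul_vecMulVec, vecMulVec_mul, hv, hw, sub_smul, smul_vecMulVec,
    vecMulVec_smul]

theorem Matrix.eq_of_isRoot_charpoly_of_isNilpotent_ad {A : Matrix ι ι K}
    (h : IsNilpotent (ad K (Matrix ι ι K) A)) {μ ν : K} (hμ : A.charpoly.IsRoot μ)
    (hν : A.charpoly.IsRoot ν) : μ = ν := by
  obtain ⟨v, hv0, hv⟩ := exists_mulVec_eq_smul_of_isRoot_charpoly hμ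
  obtain ⟨w, hw0, hw⟩ := exists_mulVec_eq_smul_of_isRoot_charpoly (A := Aᵀ)
    (by rwa [charpoly_transpose])
  rw [mulVec_transpose] at hw
  have hvec : Module.End.HasEigenvector (ad K _ A) (μ - ν) (vecMulVec v w) :=
    ⟨Module.End.mem_eigenspace_iff.mpr (ad_vecMulVec_eq_smul hv hw), vecMulVec_ne_zero hv0 hw0⟩
  exact sub_eq_zero.mp
    ((Module.End.hasEigenvalue_of_hasEigenvector hvec).isNilpotent_of_isNilpotent h).eq_zero

theorem Matrix.isNilpotent_of_isNilpotent_ad_of_trace_eq_zero [IsAlgClosed K] [CharZero K]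
    {A : Matrix ι ι K} (htr : A.trace = 0) (h : IsNilpotent (ad K (Matrix ι ι K) A)) :
    IsNilpotent A := by
  have hroots : ∀ r ∈ A.charpoly.roots, r = 0 := by
    intro r hr
    have hrep : A.charpoly.roots = Multiset.replicate (Multiset.card A.charpoly.roots) r :=
      Multiset.eq_replicate_of_mem fun s hs => eq_of_isRoot_charpoly_of_isNilpotent_ad h
        (Polynomial.isRoot_of_mem_roots hs) (Polynomial.isRoot_of_mem_roots hr)
    have hsum : Multiset.card A.charpoly.roots • r = 0 := by
      rw [← Multiset.sum_replicate, ← hrep, ← trace_eq_sum_roots_charpoly, htr]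
    exact (smul_eq_zero.mp hsum).resolve_left (Multiset.card_pos_iff_exists_mem.mpr ⟨r, hr⟩).ne'
  have hsplits := IsAlgClosed.splits A.charpoly
  have hchar : A.charpoly = Polynomial.X ^ Fintype.card ι := by
    rw [hsplits.eq_prod_roots_of_monic (charpoly_monic A), Multiset.eq_replicate_of_mem hroots]
    simp [← hsplits.natDegree_eq_card_roots, charpoly_natDegree_eq_dim]
  exact ⟨_, by simpa [hchar] using aeval_self_charpoly A⟩

end Eigenvalues

theorem LieAlgebra.SpecialLinear.ad_coe_pow_eq_zero_iff {ι K : Type*} [Fintype ι]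
    [DecidableEq ι] [Field K] [CharZero K] (x : sl ι K) {N : ℕ} (hN : N ≠ 0) :
    ad K (Matrix ι ι K) x ^ N = 0 ↔ ad K (sl ι K) x ^ N = 0 := by
  refine ⟨fun h => LinearMap.ext fun y => Subtype.ext ?_, fun h => LinearMap.ext fun z => ?_⟩
  · rw [LieSubalgebra.coe_ad_pow, h]
    rfl
  -- for empty `ι`, `c = 0` (division by zero) and `z` is traceless anyway
  set c := z.trace / Fintype.card ι
  have hz : z - c • 1 ∈ sl ι K := by
    show trace _ = 0
    rw [trace_sub, trace_smul, trace_one, smul_eq_mul, div_mul_cancel_of_imp, sub_self]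
    intro hcard
    have : IsEmpty ι := Fintype.card_eq_zero_iff.mp (Nat.cast_eq_zero.mp hcard)
    exact Fintype.sum_empty _
  have h1 : (ad K (Matrix ι ι K) x ^ N) 1 = 0 := by
    obtain ⟨k, rfl⟩ := Nat.exists_eq_succ_of_ne_zero hN
    rw [pow_succ, Module.End.mul_apply, ad_apply, Ring.lie_def, mul_one, one_mul, sub_self,
      map_zero]
  calc (ad K (Matrix ι ι K) x ^ N) z
      = (ad K (Matrix ι ι K) x ^ N) (z - c • 1) + c • (ad K (Matrix ι ι K) x ^ N) 1 := by
        rw [← map_smul, ← map_add, sub_add_cancel]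
    _ = 0 := by
        rw [h1, smul_zero, add_zero, ← LieSubalgebra.coe_ad_pow K _ (sl ι K) x ⟨_, hz⟩, h]
        rfl

theorem statement9_general (n q : ℕ) (hq : 1 ≤ q)
    (x : sl (Fin n) ℂ) :
    (LieAlgebra.ad ℂ (sl (Fin n) ℂ) x) ^ (2 * q) = 0 ↔
      (x : Matrix (Fin n) (Fin n) ℂ) ^ q = 0 := by
  rw [← ad_coe_pow_eq_zero_iff x (by omega)]
  refine ⟨fun h => ?_, fun h => pow_eq_zero_of_le (by omega) (ad_pow_eq_zero_of_pow_eq_zero h)⟩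
  exact pow_eq_zero_of_isNilpotent_of_ad_pow_eq_zero
    (isNilpotent_of_isNilpotent_ad_of_trace_eq_zero (A := (x : Matrix (Fin n) (Fin n) ℂ))
      (LinearMap.mem_ker.mp x.2) ⟨2 * q, h⟩) h

/-- Let `n ≥ 1` and `q ≥ 1` be integers.  For every `x ∈ sl_n(ℂ)`, one has
`(ad x)^{2q} = 0` if and only if `x^q = 0`. -/
theorem statement9 (n q : ℕ) (hn : 1 ≤ n) (hq : 1 ≤ q)
    (x : sl (Fin n) ℂ) :
    (LieAlgebra.ad ℂ (sl (Fin n) ℂ) x) ^ (2 * q) = 0 ↔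
      (x : Matrix (Fin n) (Fin n) ℂ) ^ q = 0 :=
  statement9_general n q hq x
end

section
/- Let q ≥ 1, m ≥ 1 and 0 ≤ s ≤ q−1 be integers and set n = q·m + s, n ≥ 2. Let f ∈ sl_n(ℂ) be the block-diagonal matrix whose diagonal blocks are m copies of the q×q nilpotent Jordan block J_q and, if s > 0, one copy of the s×s nilpotent Jordan block J_s. Then the number of pairs (i,j) with 1 ≤ i,j ≤ n, i ≠ j and q dividing i−j equals dim_ℂ ker(ad f : sl_n(ℂ) → sl_n(ℂ)) − (n−1). -/
open LieAlgebra.SpecialLinear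

/-- The block-diagonal nilpotent `n × n` matrix whose diagonal blocks are `m` copies of the
`q × q` nilpotent Jordan block `J_q` followed (if `s = n − q·m > 0`) by one copy of the
`s × s` nilpotent Jordan block `J_s`: the `(i,j)` entry is `1` exactly when `j = i + 1` and
`i, j` lie in a common block (i.e. `j` is not one of the block boundaries `q, 2q, …, qm`),
and `0` otherwise. -/
def jordanMatrix (q m n : ℕ) : Matrix (Fin n) (Fin n) ℂ :=
  Matrix.of fun i j =>
    if (j : ℕ) = (i : ℕ) + 1 ∧ ¬((j : ℕ) % q = 0 ∧ (j : ℕ) ≤ q * m) then 1 else 0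

lemma jordanMatrix_mem_sl (q m n : ℕ) :
    jordanMatrix q m n ∈ sl (Fin n) ℂ := by
  show jordanMatrix q m n ∈ LinearMap.ker (Matrix.traceLinearMap (Fin n) ℂ ℂ)
  rw [LinearMap.mem_ker]
  show Matrix.trace (jordanMatrix q m n) = 0
  unfold Matrix.trace
  refine Finset.sum_eq_zero fun i _ => ?_
  show jordanMatrix q m n i i = 0
  unfold jordanMatrix
  rw [Matrix.of_apply, if_neg]
  rintro ⟨h1, -⟩
  omega

set_option maxHeartbeats 1000000
set_option synthInstance.maxHeartbeats 400000

namespace St11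

def sz (q m s k : ℕ) : ℕ := if k < q*m then q else s

def Free (q m s i j : ℕ) : Prop :=
  i % q ≤ j % q ∧ sz q m s j + i % q ≤ sz q m s i + j % q

instance (q m s i j : ℕ) : Decidable (Free q m s i j) := by
  unfold Free; infer_instance

section Arith
variable {q m s n : ℕ} (hq : 1 ≤ q) (hm : 1 ≤ m) (hs : s < q) (hn : n = q * m + s)

lemma mod_add_of_lt {u : ℕ} (a : ℕ) (hu : u < q) : (q*a+u) % q = u := by
  rw [Nat.mul_add_mod]; exact Nat.mod_eq_of_lt hu

lemma div_add_of_lt {u : ℕ} (a : ℕ) (hu : u < q) : (q*a+u) / q = a := by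
  rw [Nat.mul_add_div (by omega), Nat.div_eq_of_lt hu, Nat.add_zero]

include hq in
lemma lt_mul_iff {i : ℕ} : i < q*m ↔ i / q < m := by
  rw [Nat.div_lt_iff_lt_mul (by omega), Nat.mul_comm]

include hq in
lemma decomp (i : ℕ) : q * (i/q) + i % q = i ∧ i % q < q :=
  ⟨Nat.div_add_mod i q, Nat.mod_lt _ (by omega)⟩

include hq hs hn in
lemma mod_zero_le {j : ℕ} (hj : j < n) (h0 : j % q = 0) : j ≤ q*m := by
  obtain ⟨hd, hd2⟩ := decomp hq j
  rcases Nat.lt_or_ge (j/q) (m+1) with h | h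
  · have : q*(j/q) ≤ q*m := Nat.mul_le_mul_left q (by omega)
    omega
  · have h1 : q*(m+1) ≤ q*(j/q) := Nat.mul_le_mul_left q h
    have h2 : q*(m+1) = q*m + q := by ring
    omega

include hq in
lemma mod_succ (i : ℕ) : (i+1) % q = if i % q + 1 = q then 0 else i % q + 1 := by
  obtain ⟨hd, hd2⟩ := decomp hq i
  split_ifs with h
  · have : i + 1 = q*(i/q+1) + 0 := by rw [Nat.mul_add]; omega
    rw [this, mod_add_of_lt _ (by omega)]
  · have : i + 1 = q*(i/q) + (i%q+1) := by omega
    rw [this, mod_add_of_lt _ (by omega)]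

include hq in
lemma mod_sub {j t : ℕ} (ht : t ≤ j % q) : (j - t) % q = j % q - t := by
  obtain ⟨hd, hd2⟩ := decomp hq j
  have : j - t = q*(j/q) + (j%q - t) := by omega
  rw [this, mod_add_of_lt _ (by omega)]

omit hq hm hs hn in
lemma sz_succ {i : ℕ} (h : (i+1) % q ≠ 0) : sz q m s (i+1) = sz q m s i := by
  have h1 : (q*m) % q = 0 := Nat.mul_mod_right q m
  have h2 : i + 1 ≠ q*m := fun hc => h (by rw [hc]; exact h1)
  unfold sz
  by_cases h3 : i < q*m
  · rw [if_pos h3, if_pos (by omega)]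
  · rw [if_neg h3, if_neg (by omega)]

omit hq hm hs hn in
lemma sz_pred {j : ℕ} (h : j % q ≠ 0) : sz q m s (j-1) = sz q m s j := by
  have h1 : (q*m) % q = 0 := Nat.mul_mod_right q m
  have h2 : j ≠ q*m := fun hc => h (by rw [hc]; exact h1)
  have h3 : j ≠ 0 := fun hc => h (by simp [hc])
  unfold sz
  by_cases h4 : j < q*m
  · rw [if_pos h4, if_pos (by omega)]
  · rw [if_neg h4, if_neg (by omega)]

include hq in
lemma mod_succ_of_ne {i : ℕ} (h : (i+1) % q ≠ 0) : (i+1) % q = i % q + 1 := by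
  rw [mod_succ hq] at h ⊢
  split_ifs at h ⊢ with h1
  · exact absurd rfl h
  · rfl

omit hm in
include hq hs hn in
lemma sz_le {j : ℕ} : sz q m s j ≤ q := by
  unfold sz; split_ifs <;> omega

include hq hm hs hn in
lemma W1 {i j : ℕ} (hi : i < n) (hj : j < n) (hj0 : j % q ≠ 0)
    (hf : Free q m s i (j-1)) :
    i+1 < n ∧ (i+1) % q ≠ 0 ∧ Free q m s (i+1) j := by
  obtain ⟨h1, h2⟩ := hf
  have hjne : 1 ≤ j := by
    rcases Nat.eq_zero_or_pos j with h | h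
    · exact absurd (by rw [h]; exact Nat.zero_mod q) hj0
    · exact h
  have hjm : (j-1) % q = j % q - 1 := by
    have := mod_succ_of_ne hq (i := j-1) (by rw [show j-1+1 = j by omega]; exact hj0)
    rw [show j-1+1 = j by omega] at this; omega
  have hjs : sz q m s (j-1) = sz q m s j := sz_pred hj0
  rw [hjm] at h1
  rw [hjm, hjs] at h2
  obtain ⟨-, hvq⟩ := decomp hq j
  have hjq0 : 1 ≤ j % q := by omega
  have hmodsucc : (i+1) % q = i % q + 1 := by
    rw [mod_succ hq, if_neg (by omega)]
  have hi0 : (i+1) % q ≠ 0 := by omega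
  have hin : i + 1 < n := by
    by_contra hc
    have hie : i = n - 1 := by omega
    rcases Nat.eq_zero_or_pos s with hs0 | hs1
    · -- i+1 = q*m, so (i+1)%q = 0, contradiction
      have : (i+1) % q = 0 := by
        rw [show i+1 = q*m by omega]; exact Nat.mul_mod_right q m
      omega
    · have hiq : i = q*m + (s-1) := by omega
      have hu : i % q = s - 1 := by rw [hiq, mod_add_of_lt _ (by omega)]
      have hszi : sz q m s i = s := by unfold sz; rw [if_neg (by omega)]
      rw [hszi, hu] at h2
      by_cases hjlt : j < q*m
      · have : sz q m s j = q := by unfold sz; rw [if_pos hjlt]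
        omega
      · have hsj : sz q m s j = s := by unfold sz; rw [if_neg hjlt]
        have hjv : j % q = j - q*m := by
          conv_lhs => rw [show j = q*m + (j - q*m) by omega]
          rw [mod_add_of_lt _ (by omega)]
        omega
  refine ⟨hin, hi0, ?_, ?_⟩
  · omega
  · rw [hmodsucc, sz_succ hi0]; omega

include hq hm hs hn in
lemma W2 {i j : ℕ} (hj : j < n) (hi1 : i+1 < n) (hi0 : (i+1) % q ≠ 0)
    (hf : Free q m s (i+1) j) :
    j % q ≠ 0 ∧ Free q m s i (j-1) := by
  obtain ⟨h1, h2⟩ := hf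
  have hmodsucc : (i+1) % q = i % q + 1 := mod_succ_of_ne hq hi0
  rw [hmodsucc] at h1 h2
  have hj0 : j % q ≠ 0 := by omega
  have hjne : 1 ≤ j := by
    rcases Nat.eq_zero_or_pos j with h | h
    · exact absurd (by rw [h]; exact Nat.zero_mod q) hj0
    · exact h
  have hjm : (j-1) % q = j % q - 1 := by
    have := mod_succ_of_ne hq (i := j-1) (by rw [show j-1+1 = j by omega]; exact hj0)
    rw [show j-1+1 = j by omega] at this; omega
  have hjs : sz q m s (j-1) = sz q m s j := sz_pred hj0
  have hsi : sz q m s (i+1) = sz q m s i := sz_succ hi0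
  rw [hsi] at h2
  exact ⟨hj0, by omega, by rw [hjm, hjs]; omega⟩

include hq in
lemma anchor_free {i j : ℕ} (hf : Free q m s i j) :
    (i - i%q) % q = 0 ∧ Free q m s (i - i%q) (j - i%q) := by
  obtain ⟨hd1, hd2⟩ := decomp hq i
  obtain ⟨hd3, hd4⟩ := decomp hq j
  obtain ⟨h1, h2⟩ := hf
  have e1 : i - i%q = q*(i/q) + 0 := by omega
  have e2 : j - i%q = q*(j/q) + (j%q - i%q) := by omega
  have m1 : (i - i%q) % q = 0 := by rw [e1, mod_add_of_lt _ (by omega)]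
  have m2 : (j - i%q) % q = j%q - i%q := by rw [e2, mod_add_of_lt _ (by omega)]
  have s1 : sz q m s (i - i%q) = sz q m s i := by
    have hiff : i - i%q < q*m ↔ i < q*m := by
      rw [lt_mul_iff hq, lt_mul_iff hq, e1, div_add_of_lt _ (by omega)]
    unfold sz
    by_cases hc : i < q*m
    · rw [if_pos hc, if_pos (hiff.2 hc)]
    · rw [if_neg hc, if_neg (fun h => hc (hiff.1 h))]
  have s2 : sz q m s (j - i%q) = sz q m s j := by
    have hiff : j - i%q < q*m ↔ j < q*m := by
      rw [lt_mul_iff hq, lt_mul_iff hq, e2, div_add_of_lt _ (by omega)]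
    unfold sz
    by_cases hc : j < q*m
    · rw [if_pos hc, if_pos (hiff.2 hc)]
    · rw [if_neg hc, if_neg (fun h => hc (hiff.1 h))]
  refine ⟨m1, ?_, ?_⟩
  · rw [m1]; omega
  · rw [m1, m2, s1, s2]; omega

end Arith

section MatrixPart
variable {q m s n : ℕ} (hq : 1 ≤ q) (hm : 1 ≤ m) (hs : s < q) (hn : n = q * m + s)

include hq hs hn in
lemma jordan_apply (k j : Fin n) :
    jordanMatrix q m n k j = if (j:ℕ) = (k:ℕ)+1 ∧ (j:ℕ) % q ≠ 0 then 1 else 0 := by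
  show (if (j:ℕ) = (k:ℕ) + 1 ∧ ¬((j:ℕ) % q = 0 ∧ (j:ℕ) ≤ q * m) then (1:ℂ) else 0) = _
  by_cases h : (j:ℕ) = (k:ℕ)+1 ∧ (j:ℕ) % q ≠ 0
  · rw [if_pos h, if_pos ⟨h.1, fun hc => h.2 hc.1⟩]
  · rw [if_neg h, if_neg ?_]
    rintro ⟨ha, hb⟩
    by_cases h0 : (j:ℕ) % q = 0
    · exact hb ⟨h0, mod_zero_le hq hs hn j.isLt h0⟩
    · exact h ⟨ha, h0⟩

include hq hs hn in
lemma mul_jordan (x : Matrix (Fin n) (Fin n) ℂ) (i j : Fin n) :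
    (x * jordanMatrix q m n) i j =
      if (j:ℕ) % q ≠ 0 then
        x i ⟨(j:ℕ)-1, lt_of_le_of_lt (Nat.sub_le _ _) j.isLt⟩ else 0 := by
  rw [Matrix.mul_apply]
  by_cases h : (j:ℕ) % q ≠ 0
  · have hj1 : 1 ≤ (j:ℕ) := by
      rcases Nat.eq_zero_or_pos (j:ℕ) with h0 | h0
      · exact absurd (by rw [h0]; exact Nat.zero_mod q) h
      · exact h0
    rw [if_pos h]
    rw [Finset.sum_eq_single (⟨(j:ℕ)-1, lt_of_le_of_lt (Nat.sub_le _ _) j.isLt⟩ : Fin n)]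
    · rw [jordan_apply hq hs hn, if_pos ⟨by simp; omega, h⟩, mul_one]
    · intro k _ hk
      rw [jordan_apply hq hs hn, if_neg, mul_zero]
      rintro ⟨ha, -⟩
      exact hk (Fin.ext (by simp; omega))
    · intro hmem; exact absurd (Finset.mem_univ _) hmem
  · rw [if_neg h]; push_neg at h
    apply Finset.sum_eq_zero; intro k _
    rw [jordan_apply hq hs hn, if_neg (fun hc => hc.2 h), mul_zero]

include hq hs hn in
lemma jordan_mul (x : Matrix (Fin n) (Fin n) ℂ) (i j : Fin n) :
    (jordanMatrix q m n * x) i j =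
      if h : (i:ℕ)+1 < n ∧ ((i:ℕ)+1) % q ≠ 0 then x ⟨(i:ℕ)+1, h.1⟩ j else 0 := by
  rw [Matrix.mul_apply]
  by_cases h : (i:ℕ)+1 < n ∧ ((i:ℕ)+1) % q ≠ 0
  · rw [dif_pos h, Finset.sum_eq_single (⟨(i:ℕ)+1, h.1⟩ : Fin n)]
    · rw [jordan_apply hq hs hn, if_pos ⟨by simp, h.2⟩, one_mul]
    · intro k _ hk
      rw [jordan_apply hq hs hn, if_neg, zero_mul]
      rintro ⟨ha, -⟩
      exact hk (Fin.ext (by simp; omega))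
    · intro hmem; exact absurd (Finset.mem_univ _) hmem
  · rw [dif_neg h]
    apply Finset.sum_eq_zero; intro k _
    rw [jordan_apply hq hs hn, if_neg, zero_mul]
    rintro ⟨ha, hb⟩
    exact h ⟨ha ▸ k.isLt, ha ▸ hb⟩

/-- the commutation property -/
def Comm (q m s n : ℕ) (x : Matrix (Fin n) (Fin n) ℂ) : Prop :=
  jordanMatrix q m n * x = x * jordanMatrix q m n

include hq hs hn in
lemma comm_elim {x : Matrix (Fin n) (Fin n) ℂ} (hx : Comm q m s n x) (i j : Fin n) :
    (if h : (i:ℕ)+1 < n ∧ ((i:ℕ)+1) % q ≠ 0 then x ⟨(i:ℕ)+1, h.1⟩ j else 0)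
      = if (j:ℕ) % q ≠ 0 then
          x i ⟨(j:ℕ)-1, lt_of_le_of_lt (Nat.sub_le _ _) j.isLt⟩ else 0 := by
  have h := congrFun (congrFun (congrArg (fun M => M) hx) i) j
  calc _ = (jordanMatrix q m n * x) i j := (jordan_mul hq hs hn x i j).symm
  _ = (x * jordanMatrix q m n) i j := by rw [hx]
  _ = _ := mul_jordan hq hs hn x i j

include hq hs hn in
lemma K1 {x : Matrix (Fin n) (Fin n) ℂ} (hx : Comm q m s n x) (i j : ℕ)
    (hi : i < n) (hi' : i+1 < n) (hj : j < n) (hj' : j-1 < n)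
    (hj0 : j % q ≠ 0) (hi0 : (i+1) % q ≠ 0) :
    x ⟨i, hi⟩ ⟨j-1, hj'⟩ = x ⟨i+1, hi'⟩ ⟨j, hj⟩ := by
  have h := comm_elim hq hs hn hx ⟨i, hi⟩ ⟨j, hj⟩
  rw [dif_pos ⟨hi', hi0⟩, if_pos hj0] at h
  exact h.symm

include hq hs hn in
lemma K2 {x : Matrix (Fin n) (Fin n) ℂ} (hx : Comm q m s n x) (i j : ℕ)
    (hi : i < n) (hj : j < n) (hi0 : i % q ≠ 0) (hj0 : j % q = 0) :
    x ⟨i, hi⟩ ⟨j, hj⟩ = 0 := by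
  have hi1 : 1 ≤ i := by
    rcases Nat.eq_zero_or_pos i with h0 | h0
    · exact absurd (by rw [h0]; exact Nat.zero_mod q) hi0
    · exact h0
  have h := comm_elim hq hs hn hx ⟨i-1, by omega⟩ ⟨j, hj⟩
  rw [if_neg (by simpa using hj0)] at h
  rw [dif_pos ⟨by simpa using (show i - 1 + 1 < n by omega),
      by simp only [show i-1+1 = i by omega]; exact hi0⟩] at h
  have e : (⟨i-1+1, by omega⟩ : Fin n) = ⟨i, hi⟩ := Fin.ext (by simp; omega)
  rw [e] at h
  exact h

include hq hs hn in
lemma K3 {x : Matrix (Fin n) (Fin n) ℂ} (hx : Comm q m s n x) (i j : ℕ)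
    (hi : i < n) (hj : j < n) (hj1 : j+1 < n)
    (hend : i+1 = n ∨ (i+1) % q = 0) (hj0 : (j+1) % q ≠ 0) :
    x ⟨i, hi⟩ ⟨j, hj⟩ = 0 := by
  have h := comm_elim hq hs hn hx ⟨i, hi⟩ ⟨j+1, hj1⟩
  rw [if_pos hj0, dif_neg (by rintro ⟨h1, h2⟩; simp only [Fin.val_mk] at h1 h2; rcases hend with h3 | h3 <;> omega)] at h
  have e : (⟨j+1-1, lt_of_le_of_lt (Nat.sub_le _ _) hj1⟩ : Fin n) = ⟨j, hj⟩ :=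
    Fin.ext (by simp)
  rw [e] at h
  exact h.symm

/-- the projection onto the "centralizer shape" -/
def Tfun (q m s n : ℕ) (x : Matrix (Fin n) (Fin n) ℂ) : Matrix (Fin n) (Fin n) ℂ :=
  Matrix.of fun i j =>
    if Free q m s (i:ℕ) (j:ℕ) then
      x ⟨(i:ℕ) - (i:ℕ)%q, lt_of_le_of_lt (Nat.sub_le _ _) i.isLt⟩
        ⟨(j:ℕ) - (i:ℕ)%q, lt_of_le_of_lt (Nat.sub_le _ _) j.isLt⟩
    else 0

lemma Tfun_apply (x : Matrix (Fin n) (Fin n) ℂ) (i j : Fin n) :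
    Tfun q m s n x i j =
      if Free q m s (i:ℕ) (j:ℕ) then
        x ⟨(i:ℕ) - (i:ℕ)%q, lt_of_le_of_lt (Nat.sub_le _ _) i.isLt⟩
          ⟨(j:ℕ) - (i:ℕ)%q, lt_of_le_of_lt (Nat.sub_le _ _) j.isLt⟩
      else 0 := rfl

lemma fin_congr (x : Matrix (Fin n) (Fin n) ℂ) {a b a' b' : ℕ}
    (ha : a < n) (hb : b < n) (ha' : a' < n) (hb' : b' < n)
    (e1 : a = a') (e2 : b = b') : x ⟨a, ha⟩ ⟨b, hb⟩ = x ⟨a', ha'⟩ ⟨b', hb'⟩ := by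
  subst e1; subst e2; rfl

include hq hm hs hn in
lemma T_comm (x : Matrix (Fin n) (Fin n) ℂ) : Comm q m s n (Tfun q m s n x) := by
  unfold Comm
  ext i j
  rw [mul_jordan hq hs hn, jordan_mul hq hs hn]
  by_cases h1 : (j:ℕ) % q ≠ 0 <;>
    by_cases h2 : (i:ℕ)+1 < n ∧ ((i:ℕ)+1) % q ≠ 0
  · rw [dif_pos h2, if_pos h1, Tfun_apply, Tfun_apply]
    by_cases hf : Free q m s ((i:ℕ)+1) (j:ℕ)
    · obtain ⟨hj0', hf'⟩ := W2 hq hm hs hn j.isLt h2.1 h2.2 hf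
      rw [if_pos hf, if_pos hf']
      have hms : ((i:ℕ)+1) % q = (i:ℕ) % q + 1 := mod_succ_of_ne hq h2.2
      apply fin_congr <;> simp only [Fin.val_mk] <;> omega
    · rw [if_neg hf, if_neg (fun hc => hf (W1 hq hm hs hn i.isLt j.isLt h1 hc).2.2)]
  · rw [dif_neg h2, if_pos h1, Tfun_apply]
    rw [if_neg (fun hc => h2 ⟨(W1 hq hm hs hn i.isLt j.isLt h1 hc).1,
      (W1 hq hm hs hn i.isLt j.isLt h1 hc).2.1⟩)]
  · rw [dif_pos h2, if_neg h1, Tfun_apply]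
    rw [if_neg (fun hc => h1 (W2 hq hm hs hn j.isLt h2.1 h2.2 hc).1)]
  · rw [dif_neg h2, if_neg h1]

include hq hm hs hn in
lemma T_fix {x : Matrix (Fin n) (Fin n) ℂ} (hx : Comm q m s n x) (i j : Fin n) :
    x i j = Tfun q m s n x i j := by
  rcases i with ⟨I, hI⟩
  rcases j with ⟨J, hJ⟩
  rw [Tfun_apply]
  simp only [Fin.val_mk]
  have hmodI := (decomp hq I).2
  have hmodJ := (decomp hq J).2
  have hIdec := (decomp hq I).1
  have hJdec := (decomp hq J).1
  have up : ∀ t, t ≤ I % q → t ≤ J % q →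
      x ⟨I - t, by omega⟩ ⟨J - t, by omega⟩ = x ⟨I, hI⟩ ⟨J, hJ⟩ := by
    intro t
    induction t with
    | zero =>
      intro _ _
      exact fin_congr x (by omega) (by omega) hI hJ (by omega) (by omega)
    | succ t ih =>
      intro ht1 ht2
      have h1 : (J - t) % q = J % q - t := mod_sub hq (by omega)
      have h2 : (I - t) % q = I % q - t := mod_sub hq (by omega)
      have key := K1 hq hs hn hx (I - (t+1)) (J - t) (by omega) (by omega)
        (by omega) (by omega) (by rw [h1]; omega)
        (by rw [show I - (t+1) + 1 = I - t by omega, h2]; omega)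
      have step1 : x ⟨I-(t+1), by omega⟩ ⟨J-(t+1), by omega⟩
          = x ⟨I-(t+1), by omega⟩ ⟨J-t-1, by omega⟩ :=
        fin_congr x (by omega) (by omega) (by omega) (by omega) rfl (by omega)
      have step3 : x ⟨I-(t+1)+1, by omega⟩ ⟨J-t, by omega⟩
          = x ⟨I-t, by omega⟩ ⟨J-t, by omega⟩ :=
        fin_congr x (by omega) (by omega) (by omega) (by omega) (by omega) rfl
      exact step1.trans (key.trans (step3.trans (ih (by omega) (by omega))))
  by_cases hf : Free q m s I J
  · rw [if_pos hf]
    exact (up (I % q) le_rfl hf.1).symm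
  · rw [if_neg hf]
    rcases Nat.lt_or_ge (J % q) (I % q) with hlt | hge
    · have h0 := up (J % q) (le_of_lt hlt) le_rfl
      rw [← h0]
      exact K2 hq hs hn hx (I - J % q) (J - J % q) (by omega) (by omega)
        (by rw [mod_sub hq (by omega)]; omega)
        (by rw [mod_sub hq le_rfl]; omega)
    · have hB : sz q m s J + I % q > sz q m s I + J % q := by
        by_contra hc
        push_neg at hc
        exact hf ⟨hge, by omega⟩
      have hszJle : sz q m s J ≤ q := by unfold sz; split_ifs <;> omega
      have hIq : ¬ I < q*m := by
        intro hc
        have h1 : sz q m s I = q := by unfold sz; rw [if_pos hc]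
        omega
      have hs1 : 1 ≤ s := by omega
      have hszI : sz q m s I = s := by unfold sz; rw [if_neg hIq]
      have hu : I % q = I - q*m := by
        conv_lhs => rw [show I = q*m + (I - q*m) by omega]
        rw [mod_add_of_lt _ (by omega)]
      have hJq : J < q*m := by
        by_contra hc
        have h1 : sz q m s J = s := by unfold sz; rw [if_neg hc]
        have hv : J % q = J - q*m := by
          conv_lhs => rw [show J = q*m + (J - q*m) by omega]
          rw [mod_add_of_lt _ (by omega)]
        omega
      have hszJ : sz q m s J = q := by unfold sz; rw [if_pos hJq]
      have hJdiv : J / q < m := (lt_mul_iff hq).1 hJq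
      have hqm1 : q*(J/q) + q ≤ q*m := by
        have h1 : q*(J/q + 1) ≤ q*m := Nat.mul_le_mul_left q (by omega)
        have h2 : q*(J/q+1) = q*(J/q) + q := by ring
        omega
      have down : ∀ t, ∀ _ht : t ≤ s - 1 - I % q,
          x ⟨I + t, by omega⟩ ⟨J + t, by omega⟩ = x ⟨I, hI⟩ ⟨J, hJ⟩ := by
        intro t
        induction t with
        | zero =>
          intro _
          exact fin_congr x (by omega) (by omega) hI hJ (by omega) (by omega)
        | succ t ih =>
          intro ht
          have hm1 : (J + t + 1) % q = J % q + t + 1 := by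
            conv_lhs => rw [show J + t + 1 = q*(J/q) + (J%q + t + 1) by omega]
            rw [mod_add_of_lt _ (by omega)]
          have hm2 : (I + t + 1) % q = I % q + t + 1 := by
            conv_lhs => rw [show I + t + 1 = q*m + (I%q + t + 1) by omega]
            rw [mod_add_of_lt _ (by omega)]
          have key := K1 hq hs hn hx (I + t) (J + t + 1) (by omega) (by omega)
            (by omega) (by omega) (by rw [hm1]; omega) (by rw [hm2]; omega)
          have step1 : x ⟨I+(t+1), by omega⟩ ⟨J+(t+1), by omega⟩
              = x ⟨I+t+1, by omega⟩ ⟨J+t+1, by omega⟩ :=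
            fin_congr x (by omega) (by omega) (by omega) (by omega) (by omega) (by omega)
          have step2 : x ⟨I+t, by omega⟩ ⟨J+t+1-1, by omega⟩
              = x ⟨I+t, by omega⟩ ⟨J+t, by omega⟩ :=
            fin_congr x (by omega) (by omega) (by omega) (by omega) rfl (by omega)
          exact step1.trans (key.symm.trans (step2.trans (ih (by omega))))
      have hlast := down (s - 1 - I % q) le_rfl
      rw [← hlast]
      have hm3 : (J + (s - 1 - I % q) + 1) % q = J % q + (s - 1 - I % q) + 1 := by
        conv_lhs => rw [show J + (s - 1 - I%q) + 1 = q*(J/q) + (J%q + (s - 1 - I%q) + 1) by omega]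
        rw [mod_add_of_lt _ (by omega)]
      exact K3 hq hs hn hx (I + (s - 1 - I % q)) (J + (s - 1 - I % q))
        (by omega) (by omega) (by omega) (Or.inl (by omega)) (by rw [hm3]; omega)


/-- anchor set -/
def Sset (q m s n : ℕ) : Finset (Fin n × Fin n) :=
  Finset.univ.filter (fun p => (p.1:ℕ) % q = 0 ∧ Free q m s (p.1:ℕ) (p.2:ℕ))

lemma mem_Sset {p : Fin n × Fin n} :
    p ∈ Sset q m s n ↔ (p.1:ℕ) % q = 0 ∧ Free q m s (p.1:ℕ) (p.2:ℕ) := by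
  unfold Sset; simp

include hq in
lemma anchor_mem {i j : Fin n} (h : Free q m s (i:ℕ) (j:ℕ)) :
    ((⟨(i:ℕ) - (i:ℕ)%q, lt_of_le_of_lt (Nat.sub_le _ _) i.isLt⟩ : Fin n),
     (⟨(j:ℕ) - (i:ℕ)%q, lt_of_le_of_lt (Nat.sub_le _ _) j.isLt⟩ : Fin n)) ∈ Sset q m s n := by
  rw [mem_Sset]
  simp only [Fin.val_mk]
  exact anchor_free hq h

/-- parametrization of the centralizer -/
noncomputable def Psi (hq : 1 ≤ q) : (↥(Sset q m s n) → ℂ) →ₗ[ℂ] Matrix (Fin n) (Fin n) ℂ where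
  toFun c := Matrix.of fun i j =>
    if h : Free q m s (i:ℕ) (j:ℕ) then c ⟨_, anchor_mem hq h⟩ else 0
  map_add' c d := by
    ext i j
    simp only [Matrix.of_apply, Matrix.add_apply, Matrix.smul_apply, RingHom.id_apply, Pi.add_apply, Pi.smul_apply]
    split_ifs <;> simp
  map_smul' a c := by
    ext i j
    simp only [Matrix.of_apply, Matrix.add_apply, Matrix.smul_apply, RingHom.id_apply, Pi.add_apply, Pi.smul_apply]
    split_ifs <;> simp

lemma Psi_apply (hq : 1 ≤ q) (c : ↥(Sset q m s n) → ℂ) (i j : Fin n) :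
    Psi hq c i j = if h : Free q m s (i:ℕ) (j:ℕ) then c ⟨_, anchor_mem hq h⟩ else 0 := rfl

lemma Psi_R (c : ↥(Sset q m s n) → ℂ) (p : ↥(Sset q m s n)) :
    Psi hq c p.1.1 p.1.2 = c p := by
  obtain ⟨⟨pi, pj⟩, hp⟩ := p
  rw [mem_Sset] at hp
  obtain ⟨hp1, hp2⟩ := hp
  rw [Psi_apply, dif_pos hp2]
  congr 1
  apply Subtype.ext
  apply Prod.ext
  · apply Fin.ext; simp only [Fin.val_mk]; rw [hp1]; omega
  · apply Fin.ext; simp only [Fin.val_mk]; rw [hp1]; omega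

lemma Psi_T (x : Matrix (Fin n) (Fin n) ℂ) :
    Psi hq (fun p : ↥(Sset q m s n) => x p.1.1 p.1.2) = Tfun q m s n x := by
  ext i j
  rw [Psi_apply, Tfun_apply]
  by_cases h : Free q m s (i:ℕ) (j:ℕ)
  · rw [dif_pos h, if_pos h]
  · rw [dif_neg h, if_neg h]

include hq in
lemma Psi_inj : Function.Injective (Psi (q := q) (m := m) (s := s) (n := n) hq) := by
  intro c d h
  funext p
  rw [← Psi_R hq c p, ← Psi_R hq d p, h]

/-- centralizer of the Jordan matrix -/
noncomputable def Cent (q m s n : ℕ) : Submodule ℂ (Matrix (Fin n) (Fin n) ℂ) :=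
  LinearMap.ker (LinearMap.mulLeft ℂ (jordanMatrix q m n)
    - LinearMap.mulRight ℂ (jordanMatrix q m n))

lemma mem_Cent {x : Matrix (Fin n) (Fin n) ℂ} :
    x ∈ Cent q m s n ↔ Comm q m s n x := by
  unfold Cent Comm
  rw [LinearMap.mem_ker, LinearMap.sub_apply, LinearMap.mulLeft_apply,
    LinearMap.mulRight_apply, sub_eq_zero]

include hq hm hs hn in
lemma range_Psi : LinearMap.range (Psi (q := q) (m := m) (s := s) (n := n) hq)
    = Cent q m s n := by
  apply le_antisymm
  · rintro y ⟨c, rfl⟩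
    rw [mem_Cent]
    have h1 : Psi hq c = Tfun q m s n (Psi hq c) := by
      rw [← Psi_T hq (Psi hq c)]
      congr 1
      funext p
      rw [Psi_R hq c p]
    rw [h1]
    exact T_comm hq hm hs hn _
  · intro x hx
    rw [mem_Cent] at hx
    refine ⟨fun p => x p.1.1 p.1.2, ?_⟩
    rw [Psi_T hq x]
    exact (Matrix.ext fun i j => (T_fix hq hm hs hn hx i j)).symm

include hq hm hs hn in
lemma finrank_Cent : Module.finrank ℂ (Cent q m s n) = (Sset q m s n).card := by
  rw [← range_Psi hq hm hs hn, LinearMap.finrank_range_of_inj (Psi_inj hq),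
    Module.finrank_fintype_fun_eq_card, Fintype.card_coe]

lemma one_mem_Cent : (1 : Matrix (Fin n) (Fin n) ℂ) ∈ Cent q m s n := by
  rw [mem_Cent]; unfold Comm; rw [mul_one, one_mul]

/-- trace as a functional on the centralizer -/
noncomputable def trC (q m s n : ℕ) : ↥(Cent q m s n) →ₗ[ℂ] ℂ :=
  (Matrix.traceLinearMap (Fin n) ℂ ℂ).comp (Cent q m s n).subtype

include hq hm hs hn in
lemma finrank_ker_trC (hn2 : 2 ≤ n) :
    Module.finrank ℂ (LinearMap.ker (trC q m s n)) + 1 = (Sset q m s n).card := by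
  have hsur : LinearMap.range (trC q m s n) = ⊤ := by
    rw [Submodule.eq_top_iff']
    intro c
    refine ⟨(c / n) • ⟨1, one_mem_Cent⟩, ?_⟩
    show Matrix.trace (((c / n) • (⟨1, one_mem_Cent⟩ : ↥(Cent q m s n))) : ↥(Cent q m s n)).1 = c
    rw [Submodule.coe_smul, Matrix.trace_smul, Matrix.trace_one, Fintype.card_fin, smul_eq_mul]
    have hne : (n : ℂ) ≠ 0 := by
      simp only [ne_eq, Nat.cast_eq_zero]; omega
    field_simp
  have := LinearMap.finrank_range_add_finrank_ker (trC q m s n)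
  rw [hsur, finrank_top, Module.finrank_self, finrank_Cent hq hm hs hn] at this
  omega


omit hq hm hs hn in
lemma mem_sl_iff (x : Matrix (Fin n) (Fin n) ℂ) :
    x ∈ sl (Fin n) ℂ ↔ Matrix.trace x = 0 := by
  show x ∈ LinearMap.ker (Matrix.traceLinearMap (Fin n) ℂ ℂ) ↔ _
  rw [LinearMap.mem_ker]
  rfl

omit hq hm hs hn in
lemma ad_ker_iff (y : ↥(sl (Fin n) ℂ)) :
    y ∈ LinearMap.ker (LieAlgebra.ad ℂ (sl (Fin n) ℂ)
        (⟨jordanMatrix q m n, jordanMatrix_mem_sl q m n⟩ : ↥(sl (Fin n) ℂ)))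
      ↔ Comm q m s n (y : Matrix (Fin n) (Fin n) ℂ) := by
  rw [LinearMap.mem_ker, LieAlgebra.ad_apply]
  constructor
  · intro h
    have h2 := congrArg (fun z : ↥(sl (Fin n) ℂ) => (z : Matrix (Fin n) (Fin n) ℂ)) h
    simp only [LieSubalgebra.coe_bracket, ZeroMemClass.coe_zero] at h2
    rw [Ring.lie_def, sub_eq_zero] at h2
    exact h2
  · intro h
    apply Subtype.ext
    simp only [LieSubalgebra.coe_bracket, ZeroMemClass.coe_zero]
    rw [Ring.lie_def, sub_eq_zero]
    exact h

/-- the equivalence between the kernel of `ad f` on `sl` and the trace–zero part of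
the centralizer -/
noncomputable def kerEquiv (q m s n : ℕ) :
    ↥(LinearMap.ker (LieAlgebra.ad ℂ (sl (Fin n) ℂ)
        (⟨jordanMatrix q m n, jordanMatrix_mem_sl q m n⟩ : ↥(sl (Fin n) ℂ))))
      ≃ₗ[ℂ] ↥(LinearMap.ker (trC q m s n)) where
  toFun y := ⟨⟨(y.1 : Matrix (Fin n) (Fin n) ℂ), mem_Cent.2 ((ad_ker_iff y.1).1 y.2)⟩,
    by
      have h := (mem_sl_iff (y.1 : Matrix (Fin n) (Fin n) ℂ)).1 y.1.2
      show Matrix.trace ((y.1 : Matrix (Fin n) (Fin n) ℂ)) = 0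
      exact h⟩
  map_add' y z := rfl
  map_smul' a y := rfl
  invFun w := ⟨⟨(w.1 : Matrix (Fin n) (Fin n) ℂ),
      (mem_sl_iff _).2 (LinearMap.mem_ker.1 w.2)⟩,
    (ad_ker_iff _).2 (mem_Cent.1 w.1.2)⟩
  left_inv y := rfl
  right_inv w := rfl

include hq hm hs hn in
lemma finrank_ad_ker (hn2 : 2 ≤ n) :
    Module.finrank ℂ (LinearMap.ker (LieAlgebra.ad ℂ (sl (Fin n) ℂ)
        (⟨jordanMatrix q m n, jordanMatrix_mem_sl q m n⟩ : ↥(sl (Fin n) ℂ)))) + 1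
      = (Sset q m s n).card := by
  have e : Module.finrank ℂ ↥(LinearMap.ker (LieAlgebra.ad ℂ (sl (Fin n) ℂ)
        (⟨jordanMatrix q m n, jordanMatrix_mem_sl q m n⟩ : ↥(sl (Fin n) ℂ))))
      = Module.finrank ℂ ↥(LinearMap.ker (trC q m s n)) :=
    LinearEquiv.finrank_eq (kerEquiv q m s n)
  rw [e]
  exact finrank_ker_trC hq hm hs hn hn2


omit hm hs hn in
include hq in
lemma count_multiples (M : ℕ) :
    ((Finset.range (q*M)).filter (fun i => i % q = 0)).card = M := by
  have h : ((Finset.range (q*M)).filter (fun i => i % q = 0)).card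
      = (Finset.range M).card := by
    apply Finset.card_nbij' (i := fun i => i / q) (j := fun a => q * a)
    · intro a ha
      simp only [Finset.mem_coe, Finset.mem_filter, Finset.mem_range] at ha ⊢
      exact (lt_mul_iff hq).1 ha.1
    · intro a ha
      simp only [Finset.mem_coe, Finset.mem_filter, Finset.mem_range] at ha ⊢
      constructor
      · have h1 : q*(a+1) ≤ q*M := Nat.mul_le_mul_left q (by omega)
        have h2 : q*(a+1) = q*a + q := by ring
        omega
      · exact Nat.mul_mod_right q a
    · intro a ha
      simp only [Finset.mem_coe, Finset.mem_filter, Finset.mem_range] at ha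
      have := (decomp hq a).1
      beta_reduce
      omega
    · intro a _
      exact Nat.mul_div_cancel_left a (by omega)
  rw [h, Finset.card_range]

omit hm hn in
include hq hs in
lemma count_highres (M : ℕ) :
    ((Finset.range (q*M)).filter (fun j => q - s ≤ j % q)).card = M * s := by
  have hcard : ((Finset.range M) ×ˢ (Finset.Ico (q-s) q)).card = M * s := by
    rw [Finset.card_product, Finset.card_range, Nat.card_Ico]
    congr 1
    omega
  rw [← hcard]
  apply Finset.card_nbij' (i := fun j => (j / q, j % q)) (j := fun p => q * p.1 + p.2)
  · intro a ha
    simp only [Finset.mem_coe, Finset.mem_filter, Finset.mem_range, Finset.mem_product,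
      Finset.mem_Ico] at ha ⊢
    exact ⟨(lt_mul_iff hq).1 ha.1, ha.2, (decomp hq a).2⟩
  · intro p hp
    simp only [Finset.mem_coe, Finset.mem_filter, Finset.mem_range, Finset.mem_product,
      Finset.mem_Ico] at hp ⊢
    obtain ⟨h1, h2, h3⟩ := hp
    constructor
    · have ha : q*(p.1+1) ≤ q*M := Nat.mul_le_mul_left q (by omega)
      have hb : q*(p.1+1) = q*p.1 + q := by ring
      omega
    · rw [mod_add_of_lt _ (by omega)]; omega
  · intro a _
    exact (decomp hq a).1
  · intro p hp
    simp only [Finset.mem_coe, Finset.mem_filter, Finset.mem_range, Finset.mem_product,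
      Finset.mem_Ico] at hp
    have h1 : (q * p.1 + p.2) / q = p.1 := div_add_of_lt _ (by omega)
    have h2 : (q * p.1 + p.2) % q = p.2 := mod_add_of_lt _ (by omega)
    beta_reduce
    rw [h1, h2]

include hq hm hs hn in
lemma count_inner :
    (∑ j ∈ Finset.range n, if (sz q m s j ≤ s + j % q) then 1 else 0) = m*s + s := by
  rw [Finset.range_eq_Ico,
    ← Finset.sum_Ico_consecutive _ (Nat.zero_le (q*m)) (by omega : q*m ≤ n)]
  have h1 : (∑ j ∈ Finset.Ico 0 (q*m), if (sz q m s j ≤ s + j % q) then 1 else 0) = m*s := by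
    have he : ∀ j ∈ Finset.Ico 0 (q*m),
        (if (sz q m s j ≤ s + j % q) then 1 else 0) = if q - s ≤ j % q then 1 else 0 := by
      intro j hj
      simp only [Finset.mem_Ico] at hj
      have hsz : sz q m s j = q := by unfold sz; rw [if_pos (by omega)]
      rw [hsz]
      by_cases hc : q - s ≤ j % q
      · rw [if_pos (by omega), if_pos hc]
      · rw [if_neg (by omega), if_neg hc]
    rw [Finset.sum_congr rfl he, ← Finset.range_eq_Ico, ← Finset.card_filter]
    exact count_highres hq hs m
  have h2 : (∑ j ∈ Finset.Ico (q*m) n, if (sz q m s j ≤ s + j % q) then 1 else 0) = s := by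
    have he : ∀ j ∈ Finset.Ico (q*m) n,
        (if (sz q m s j ≤ s + j % q) then 1 else 0) = 1 := by
      intro j hj
      simp only [Finset.mem_Ico] at hj
      have hsz : sz q m s j = s := by unfold sz; rw [if_neg (by omega)]
      rw [hsz, if_pos (by omega)]
    rw [Finset.sum_congr rfl he, Finset.sum_const, Nat.card_Ico, smul_eq_mul, mul_one]
    omega
  rw [h1, h2]

include hq hm hs hn in
lemma card_Sset : (Sset q m s n).card = q*m*m + 2*m*s + s := by
  unfold Sset
  rw [Finset.card_filter, Fintype.sum_prod_type]
  have inner : ∀ i : Fin n,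
      (∑ j : Fin n, if ((i:ℕ) % q = 0 ∧ Free q m s (i:ℕ) (j:ℕ)) then 1 else 0)
        = if (i:ℕ) % q = 0 then (if (i:ℕ) < q*m then n else m*s+s) else 0 := by
    intro i
    by_cases hi0 : (i:ℕ) % q = 0
    · rw [if_pos hi0]
      by_cases hilt : (i:ℕ) < q*m
      · rw [if_pos hilt]
        have hall : ∀ j : Fin n,
            (if ((i:ℕ) % q = 0 ∧ Free q m s (i:ℕ) (j:ℕ)) then 1 else 0) = 1 := by
          intro j
          have hszj : sz q m s (j:ℕ) ≤ q := by unfold sz; split_ifs <;> omega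
          have hszi : sz q m s (i:ℕ) = q := by unfold sz; rw [if_pos hilt]
          rw [if_pos ⟨hi0, by omega, by omega⟩]
        rw [Finset.sum_congr rfl (fun j _ => hall j), Finset.sum_const,
          Finset.card_univ, Fintype.card_fin, smul_eq_mul, mul_one]
      · rw [if_neg hilt]
        have hszi : sz q m s (i:ℕ) = s := by unfold sz; rw [if_neg hilt]
        have hcond : ∀ j : Fin n,
            ((i:ℕ) % q = 0 ∧ Free q m s (i:ℕ) (j:ℕ)) ↔ (sz q m s (j:ℕ) ≤ s + (j:ℕ) % q) := by
          intro j
          unfold Free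
          rw [hszi, hi0]
          constructor
          · rintro ⟨-, -, h2⟩; omega
          · intro h; exact ⟨rfl, by omega, by omega⟩
        rw [Finset.sum_congr rfl (fun j _ => if_congr (hcond j) rfl rfl)]
        rw [Fin.sum_univ_eq_sum_range (fun j => if (sz q m s j ≤ s + j % q) then 1 else 0) n]
        exact count_inner hq hm hs hn
    · rw [if_neg hi0]
      exact Finset.sum_eq_zero (fun j _ => if_neg (fun hc => hi0 hc.1))
  rw [Finset.sum_congr rfl (fun i _ => inner i)]
  rw [Fin.sum_univ_eq_sum_range
    (fun i => if i % q = 0 then (if i < q*m then n else m*s+s) else 0) n]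
  rw [Finset.range_eq_Ico,
    ← Finset.sum_Ico_consecutive _ (Nat.zero_le (q*m)) (by omega : q*m ≤ n)]
  have h1 : (∑ i ∈ Finset.Ico 0 (q*m),
      if i % q = 0 then (if i < q*m then n else m*s+s) else 0) = m * n := by
    have he : ∀ i ∈ Finset.Ico 0 (q*m),
        (if i % q = 0 then (if i < q*m then n else m*s+s) else 0)
          = if i % q = 0 then n else 0 := by
      intro i hi
      simp only [Finset.mem_Ico] at hi
      by_cases hc : i % q = 0
      · rw [if_pos hc, if_pos hc, if_pos (by omega)]
      · rw [if_neg hc, if_neg hc]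
    rw [Finset.sum_congr rfl he, ← Finset.range_eq_Ico, ← Finset.sum_filter,
      Finset.sum_const, count_multiples hq m, smul_eq_mul]
  have h2 : (∑ i ∈ Finset.Ico (q*m) n,
      if i % q = 0 then (if i < q*m then n else m*s+s) else 0)
        = if 1 ≤ s then m*s+s else 0 := by
    by_cases hs1 : 1 ≤ s
    · rw [if_pos hs1]
      rw [Finset.sum_eq_single_of_mem (q*m)
        (by simp only [Finset.mem_Ico]; omega)]
      · rw [if_pos (Nat.mul_mod_right q m), if_neg (by omega)]
      · intro i hi hine
        simp only [Finset.mem_Ico] at hi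
        have : i % q = i - q*m := by
          conv_lhs => rw [show i = q*m + (i - q*m) by omega]
          rw [mod_add_of_lt _ (by omega)]
        rw [if_neg (by omega)]
    · rw [if_neg hs1]
      rw [show q*m = n by omega, Finset.Ico_self, Finset.sum_empty]
  rw [h1, h2]
  have hmn : m*n = q*m*m + m*s := by rw [hn]; ring
  have h2ms : 2*m*s = m*s + m*s := by ring
  rcases Nat.lt_or_ge s 1 with hs1 | hs1
  · rw [if_neg (by omega)]
    have hs0 : s = 0 := by omega
    subst hs0
    simp only [Nat.mul_zero, Nat.add_zero] at hmn h2ms ⊢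
    omega
  · rw [if_pos hs1]; omega


include hq hm hs hn in
lemma card_pairs :
    (((Finset.Icc 1 n) ×ˢ (Finset.Icc 1 n)).filter
        (fun p => p.1 ≠ p.2 ∧ (q:ℤ) ∣ ((p.1:ℤ) - (p.2:ℤ)))).card + q*m
      = q*m*m + 2*m*s := by
  classical
  set D := ((Finset.Icc 1 m) ×ˢ (Finset.range n)).filter
    (fun p : ℕ × ℕ => p.2 + q*p.1 < n) with hD
  have hDcard : D.card = ∑ d ∈ Finset.Icc 1 m, (n - q*d) := by
    rw [hD, Finset.card_filter, Finset.sum_product]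
    refine Finset.sum_congr rfl (fun d hd => ?_)
    rw [← Finset.card_filter]
    have he : (Finset.range n).filter (fun i => i + q*d < n) = Finset.range (n - q*d) := by
      ext k
      simp only [Finset.mem_filter, Finset.mem_range]
      omega
    rw [he, Finset.card_range]
  have hsum2 : (∑ d ∈ Finset.Icc 1 m, (n - q*d))
      = ∑ e ∈ Finset.range m, (q*e + s) := by
    apply Finset.sum_nbij' (i := fun d => m - d) (j := fun e => m - e)
    · intro d hd
      simp only [Finset.mem_Icc, Finset.mem_range] at hd ⊢
      omega
    · intro e he
      simp only [Finset.mem_Icc, Finset.mem_range] at he ⊢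
      omega
    · intro d hd
      simp only [Finset.mem_Icc] at hd
      omega
    · intro e he
      simp only [Finset.mem_range] at he
      omega
    · intro d hd
      simp only [Finset.mem_Icc] at hd
      have e1 : q*(m-d+d) = q*(m-d) + q*d := Nat.mul_add q _ _
      rw [show m - d + d = m by omega] at e1
      omega
  have hsum3 : (∑ e ∈ Finset.range m, (q*e + s))
      = q * (∑ e ∈ Finset.range m, e) + m*s := by
    rw [Finset.sum_add_distrib, ← Finset.mul_sum, Finset.sum_const,
      Finset.card_range, smul_eq_mul]
  -- the bijection with D ×ˢ Bool
  have hbij : (((Finset.Icc 1 n) ×ˢ (Finset.Icc 1 n)).filter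
      (fun p => p.1 ≠ p.2 ∧ (q:ℤ) ∣ ((p.1:ℤ) - (p.2:ℤ)))).card
      = (D ×ˢ (Finset.univ : Finset Bool)).card := by
    have natdvd : ∀ a b : ℕ, b < a → a ≤ n → 1 ≤ b → (q:ℤ) ∣ ((a:ℤ) - (b:ℤ)) →
        ∃ d : ℕ, a - b = q * d ∧ 1 ≤ d ∧ d ≤ m ∧ (a - b)/q = d := by
      intro a b hba han hb1 hdvd
      have hcast : ((a - b : ℕ) : ℤ) = (a:ℤ) - (b:ℤ) := by
        rw [Nat.cast_sub (le_of_lt hba)]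
      rw [← hcast] at hdvd
      obtain ⟨d, hd⟩ := Int.natCast_dvd_natCast.mp hdvd
      refine ⟨d, hd, ?_, ?_, by rw [hd]; exact Nat.mul_div_cancel_left d (by omega)⟩
      · rcases Nat.eq_zero_or_pos d with h0 | h0
        · rw [h0, Nat.mul_zero] at hd; omega
        · exact h0
      · by_contra hc
        have h1 : q*(m+1) ≤ q*d := Nat.mul_le_mul_left q (by omega)
        have h2 : q*(m+1) = q*m + q := by ring
        omega
    apply Finset.card_nbij'
      (i := fun p => (if p.2 < p.1 then (((p.1 - p.2)/q, p.2 - 1), false)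
                      else (((p.2 - p.1)/q, p.1 - 1), true)))
      (j := fun w => if w.2 then (w.1.2 + 1, w.1.2 + 1 + q*w.1.1)
                     else (w.1.2 + 1 + q*w.1.1, w.1.2 + 1))
    · intro p hp
      simp only [Finset.mem_coe, Finset.mem_filter, Finset.mem_product, Finset.mem_Icc] at hp
      obtain ⟨⟨⟨h11, h12⟩, h21, h22⟩, hne, hdvd⟩ := hp
      beta_reduce
      rcases Nat.lt_or_ge p.2 p.1 with hlt | hge
      · rw [if_pos hlt]
        obtain ⟨d, hd, hd1, hdm, hdq⟩ := natdvd p.1 p.2 hlt h12 h21 hdvd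
        simp only [hD, Finset.mem_coe, Finset.mem_product, Finset.mem_filter, Finset.mem_Icc,
          Finset.mem_range, Finset.mem_univ, and_true]
        rw [hdq]
        refine ⟨⟨⟨hd1, hdm⟩, by omega⟩, by omega⟩
      · have hlt2 : p.1 < p.2 := by omega
        rw [if_neg (by omega)]
        have hdvd2 : (q:ℤ) ∣ ((p.2:ℤ) - (p.1:ℤ)) := by
          have : (p.2:ℤ) - (p.1:ℤ) = -((p.1:ℤ) - (p.2:ℤ)) := by ring
          rw [this]
          exact dvd_neg.mpr hdvd
        obtain ⟨d, hd, hd1, hdm, hdq⟩ := natdvd p.2 p.1 hlt2 h22 h11 hdvd2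
        simp only [hD, Finset.mem_coe, Finset.mem_product, Finset.mem_filter, Finset.mem_Icc,
          Finset.mem_range, Finset.mem_univ, and_true]
        rw [hdq]
        refine ⟨⟨⟨hd1, hdm⟩, by omega⟩, by omega⟩
    · intro w hw
      rcases w with ⟨⟨d, i0⟩, b⟩
      simp only [hD, Finset.mem_coe, Finset.mem_product, Finset.mem_filter, Finset.mem_Icc,
        Finset.mem_range, Finset.mem_univ, and_true] at hw
      obtain ⟨⟨⟨hd1, hdm⟩, hi0⟩, hsum⟩ := hw
      have hqd1 : 1 ≤ q * d := by
        have h1 : q*1 ≤ q*d := Nat.mul_le_mul_left q hd1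
        rw [Nat.mul_one] at h1
        omega
      beta_reduce
      cases b
      · simp only [Bool.false_eq_true, if_false]
        simp only [Finset.mem_coe, Finset.mem_filter, Finset.mem_product, Finset.mem_Icc]
        exact ⟨⟨⟨by omega, by omega⟩, by omega, by omega⟩, by omega,
          ⟨d, by push_cast; ring⟩⟩
      · rw [if_pos rfl]
        simp only [Finset.mem_coe, Finset.mem_filter, Finset.mem_product, Finset.mem_Icc]
        exact ⟨⟨⟨by omega, by omega⟩, by omega, by omega⟩, by omega,
          ⟨-(d:ℤ), by push_cast; ring⟩⟩
    · intro p hp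
      rcases p with ⟨p1, p2⟩
      simp only [Finset.mem_coe, Finset.mem_filter, Finset.mem_product, Finset.mem_Icc] at hp
      obtain ⟨⟨⟨h11, h12⟩, h21, h22⟩, hne, hdvd⟩ := hp
      rcases Nat.lt_or_ge p2 p1 with hlt | hge
      · obtain ⟨d, hd, hd1, hdm, hdq⟩ := natdvd p1 p2 hlt h12 h21 hdvd
        beta_reduce
        rw [if_pos hlt]
        simp only [Bool.false_eq_true, if_false]
        simp only [hdq, Prod.mk.injEq]
        constructor <;> omega
      · have hlt2 : p1 < p2 := by omega
        obtain ⟨d, hd, hd1, hdm, hdq⟩ := natdvd p2 p1 hlt2 h22 h11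
          (by have he : (p2:ℤ) - (p1:ℤ) = -((p1:ℤ) - (p2:ℤ)) := by ring
              rw [he]; exact dvd_neg.mpr hdvd)
        beta_reduce
        rw [if_neg (show ¬(p2 < p1) by omega)]
        simp only [if_true]
        simp only [hdq, Prod.mk.injEq]
        constructor <;> omega
    · intro w hw
      rcases w with ⟨⟨d, i0⟩, b⟩
      simp only [hD, Finset.mem_coe, Finset.mem_product, Finset.mem_filter, Finset.mem_Icc,
        Finset.mem_range, Finset.mem_univ, and_true] at hw
      obtain ⟨⟨⟨hd1, hdm⟩, hi0⟩, hsum⟩ := hw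
      have hqd1 : 1 ≤ q * d := by
        have h1 : q*1 ≤ q*d := Nat.mul_le_mul_left q hd1
        rw [Nat.mul_one] at h1
        omega
      beta_reduce
      cases b
      · simp only [Bool.false_eq_true, if_false]
        rw [if_pos (by omega)]
        have he : i0 + 1 + q*d - (i0+1) = q*d := by omega
        rw [he, Nat.mul_div_cancel_left d (by omega : 0 < q)]
        simp
      · rw [if_pos rfl]
        rw [if_neg (by omega)]
        have he : i0 + 1 + q*d - (i0+1) = q*d := by omega
        rw [he, Nat.mul_div_cancel_left d (by omega : 0 < q)]
        simp
  rw [hbij, Finset.card_product, Finset.card_univ, Fintype.card_bool,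
    hDcard, hsum2, hsum3]
  have hG := Finset.sum_range_id_mul_two m
  set S := ∑ e ∈ Finset.range m, e with hS
  have e4 : (q*S + m*s)*2 = q*(S*2) + 2*m*s := by ring
  rw [e4, hG]
  have e5 : m*(m-1) + m = m*m := by
    rcases m with _ | m'
    · omega
    · rw [Nat.succ_sub_one, Nat.mul_succ]
  have e6 : q*(m*(m-1)) + q*m = q*(m*(m-1)+m) := by ring
  rw [e5] at e6
  have e7 : q*(m*m) = q*m*m := by ring
  omega

end MatrixPart
end St11


/-- Let `q ≥ 1`, `m ≥ 1` and `0 ≤ s ≤ q−1` be integers and set `n = q·m + s`,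
`n ≥ 2`.  Let `f ∈ sl_n(ℂ)` be the block-diagonal matrix whose diagonal blocks are `m` copies
of the `q × q` nilpotent Jordan block `J_q` and, if `s > 0`, one copy of the `s × s` nilpotent
Jordan block `J_s`.  Then the number of pairs `(i,j)` with `1 ≤ i,j ≤ n`, `i ≠ j` and `q`
dividing `i−j` equals `dim_ℂ ker(ad f : sl_n(ℂ) → sl_n(ℂ)) − (n−1)`. -/
theorem statement11 (q m s n : ℕ) (hq : 1 ≤ q) (hm : 1 ≤ m) (hs : s ≤ q - 1)
    (hn : n = q * m + s) (hn2 : 2 ≤ n) :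
    ((((Finset.Icc 1 n) ×ˢ (Finset.Icc 1 n)).filter
        (fun p => p.1 ≠ p.2 ∧ (q : ℤ) ∣ ((p.1 : ℤ) - (p.2 : ℤ)))).card : ℤ) =
      (Module.finrank ℂ
          (LinearMap.ker
            (LieAlgebra.ad ℂ (sl (Fin n) ℂ)
              ⟨jordanMatrix q m n, jordanMatrix_mem_sl q m n⟩)) : ℤ) - ((n : ℤ) - 1) := by

  have hs' : s < q := by omega
  have h1 := St11.card_pairs hq hm hs' hn
  have h2 := St11.finrank_ad_ker hq hm hs' hn hn2
  have h3 := St11.card_Sset hq hm hs' hn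
  rw [h3] at h2
  omega
end
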